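/- arXiv:0710.3908 — 11 statements merged into one kernel-verified Lean document; each statement's English description precedes it below -/
import Mathlib

section
/- If θ is a nontrivial action of a finite-dimensional Lie algebra 𝔤 on K[t], then Rank(θ) ≤ 3, i.e. the image of θ is a K-subspace of Der(K[t]) of K-dimension at most 3. -/
open Polynomial

private lemma natDeriv_eq {K : Type*} [Field K] [CharZero K] {p : Polynomial K}
    (hp : p.natDegree ≠ 0) :
    (derivative p).natDegree = p.natDegree - 1 ∧
      (derivative p).leadingCoeff = p.leadingCoeff * p.natDegree := by
  have h1 : 1 ≤ p.natDegree := Nat.one_le_iff_ne_zero.mpr hp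
  have hc : (derivative p).coeff (p.natDegree - 1) = p.leadingCoeff * p.natDegree := by
    rw [coeff_derivative]
    rw [Nat.sub_add_cancel h1]
    push_cast [Nat.cast_sub h1]
    ring_nf
    rw [leadingCoeff]
    ring
  have hne : (derivative p).coeff (p.natDegree - 1) ≠ 0 := by
    rw [hc]
    apply mul_ne_zero
    · exact leadingCoeff_ne_zero.mpr (fun h => hp (by simp [h]))
    · exact_mod_cast hp
  have hle : (derivative p).natDegree ≤ p.natDegree - 1 := natDegree_derivative_le p
  have hge : p.natDegree - 1 ≤ (derivative p).natDegree := le_natDegree_of_ne_zero hne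
  have heq : (derivative p).natDegree = p.natDegree - 1 := le_antisymm hle hge
  exact ⟨heq, by rw [leadingCoeff, heq, hc]⟩

/-- If `θ` is a nontrivial action of a finite-dimensional Lie algebra `𝔤`
on `K[t]` (where `Der K[t]` is identified with `K[t]` via `f ↦ f·d/dt`, so that the Lie
bracket of derivations reads `[f,g] = f·g′ − f′·g`), then `Rank(θ) ≤ 3`, i.e. the image of
`θ` has `K`-dimension at most `3`. -/
theorem rank_le_three_of_action {K : Type*} [RCLike K]
    {g : Type*} [LieRing g] [LieAlgebra K g] [FiniteDimensional K g]
    (θ : g →ₗ[K] Polynomial K)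
    (hact : ∀ X Y : g, θ ⁅X, Y⁆ = θ X * derivative (θ Y) - derivative (θ X) * θ Y)
    (hnt : θ ≠ 0) :
    Module.finrank K (LinearMap.range θ) ≤ 3 := by
  classical
  set V := LinearMap.range θ with hV
  -- V is closed under the bracket
  have hcl : ∀ u ∈ V, ∀ v ∈ V, u * derivative v - derivative u * v ∈ V := by
    rintro _ ⟨X, rfl⟩ _ ⟨Y, rfl⟩
    exact ⟨⁅X, Y⁆, hact X Y⟩
  -- degrees in V are bounded
  have hfin : Module.Finite K V := Module.Finite.range θ
  obtain ⟨s, hs⟩ : V.FG := Module.Finite.iff_fg.mp hfin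
  set N := s.sup natDegree with hN
  have hbd : ∀ f ∈ V, f.natDegree ≤ N := by
    intro f hf
    have hsub : V ≤ Polynomial.degreeLE K (N : WithBot ℕ) := by
      rw [← hs, Submodule.span_le]
      intro p hp
      rw [SetLike.mem_coe, Polynomial.mem_degreeLE]
      exact (degree_le_natDegree).trans (by exact_mod_cast Finset.le_sup hp)
    exact natDegree_le_iff_degree_le.mpr (Polynomial.mem_degreeLE.mp (hsub hf))
  -- the maximal degree n, attained by some g ∈ V
  set S : Set ℕ := natDegree '' (V : Set (Polynomial K)) with hS
  have hSne : S.Nonempty := ⟨0, 0, V.zero_mem, natDegree_zero⟩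
  have hSbdd : BddAbove S := ⟨N, by rintro _ ⟨f, hf, rfl⟩; exact hbd f hf⟩
  set n := sSup S with hn
  obtain ⟨G, hGV, hGn⟩ : ∃ G ∈ V, natDegree G = n := by
    obtain ⟨G, hGV, hGn⟩ := Nat.sSup_mem hSne hSbdd
    exact ⟨G, hGV, hGn⟩
  have hmax : ∀ f ∈ V, f.natDegree ≤ n := fun f hf => le_csSup hSbdd ⟨f, hf, rfl⟩
  -- key lemma: nonzero element of V has natDegree 0, 1 or n
  have key : ∀ f ∈ V, f ≠ 0 → f.natDegree = 0 ∨ f.natDegree = 1 ∨ f.natDegree = n := by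
    intro f hfV hf0
    by_contra h
    push_neg at h
    obtain ⟨h0, h1, hn'⟩ := h
    set d := f.natDegree with hd
    have hd2 : 2 ≤ d := by omega
    have hdn : d < n := lt_of_le_of_ne (hmax f hfV) hn'
    have hn1 : 1 ≤ n := by omega
    have hG0 : G ≠ 0 := fun h => by simp [h] at hGn; omega
    -- compute the bracket
    set B := f * derivative G - derivative f * G with hB
    have hBV : B ∈ V := hcl f hfV G hGV
    obtain ⟨hdG, hlG⟩ := natDeriv_eq (p := G) (by omega)
    obtain ⟨hdf, hlf⟩ := natDeriv_eq (p := f) (by omega)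
    have hcoeff : B.coeff (d + n - 1) ≠ 0 := by
      have e1 : (f * derivative G).coeff (d + n - 1) =
          f.leadingCoeff * (derivative G).leadingCoeff := by
        have : d + n - 1 = f.natDegree + (derivative G).natDegree := by
          rw [hdG, hGn, ← hd]; omega
        rw [this, coeff_mul_degree_add_degree]
      have e2 : (derivative f * G).coeff (d + n - 1) =
          (derivative f).leadingCoeff * G.leadingCoeff := by
        have : d + n - 1 = (derivative f).natDegree + G.natDegree := by
          rw [hdf, hGn, ← hd]; omega
        rw [this, coeff_mul_degree_add_degree]
      have hfl : f.leadingCoeff ≠ 0 := leadingCoeff_ne_zero.mpr hf0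
      have hGl : G.leadingCoeff ≠ 0 := leadingCoeff_ne_zero.mpr hG0
      rw [hB, coeff_sub, e1, e2, hlG, hlf, hGn, ← hd]
      have : f.leadingCoeff * (G.leadingCoeff * (n : K)) -
          f.leadingCoeff * (d : K) * G.leadingCoeff =
          f.leadingCoeff * G.leadingCoeff * ((n : K) - (d : K)) := by ring
      rw [this]
      exact mul_ne_zero (mul_ne_zero hfl hGl)
        (sub_ne_zero.mpr (by exact_mod_cast (by omega : n ≠ d)))
    have hBle : B.natDegree ≤ n := hmax B hBV
    have : d + n - 1 ≤ B.natDegree := le_natDegree_of_ne_zero hcoeff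
    omega
  -- injective linear map V → (Fin 3 → K)
  let φ : V →ₗ[K] (Fin 3 → K) :=
    LinearMap.pi (fun i => (lcoeff K (![0, 1, n] i)) ∘ₗ V.subtype)
  have hφ : Function.Injective φ := by
    rw [← LinearMap.ker_eq_bot, LinearMap.ker_eq_bot']
    intro ⟨f, hf⟩ hφf
    have h0 : f.coeff 0 = 0 := congrFun hφf 0
    have h1 : f.coeff 1 = 0 := congrFun hφf 1
    have h2 : f.coeff n = 0 := congrFun hφf 2
    refine Subtype.ext ?_
    show f = 0
    by_contra hf0
    rcases key f hf hf0 with h | h | h <;>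
      exact leadingCoeff_ne_zero.mpr hf0 (by rw [leadingCoeff, h]; assumption)
  calc Module.finrank K V ≤ Module.finrank K (Fin 3 → K) :=
        LinearMap.finrank_le_finrank_of_injective hφ
    _ = 3 := by simp
end

section
/- Let θ be a nontrivial action of a finite-dimensional Lie algebra 𝔤 on K[t], let E = K[t]⊗𝔤 be the associated crossed product, and let L = ker θ̄ (a K[t]-submodule and Lie ideal of E). Then there exists x ∈ E such that: E = K[t]·x ⊕ L as K[t]-modules; the pair ([x,·]|_L , θ̄(x)) is a derivation of the K[t]-Lie algebra L; and the map (a,l) ↦ a·x + l is an isomorphism of Lie Rinehart algebras from the extended crossed product K[t] ⋉_{([x,·], θ̄(x))} L onto E (a K[t]-linear Lie algebra isomorphism intertwining the anchors). In particular, every nontrivial K[t]-crossed product is an extended crossed product. -/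
open Polynomial TensorProduct

section AuxCrossed

variable {K : Type*} [RCLike K] {g : Type*} [LieRing g] [LieAlgebra K g]
variable (θ : g →ₗ[K] Polynomial K)
    (θbar : Polynomial K ⊗[K] g →ₗ[Polynomial K] Polynomial K)
    (br : Polynomial K ⊗[K] g →ₗ[K] Polynomial K ⊗[K] g →ₗ[K] Polynomial K ⊗[K] g)

lemma aux_morph
    (hact : ∀ X Y : g, θ ⁅X, Y⁆ = θ X * derivative (θ Y) - derivative (θ X) * θ Y)
    (hθbar : ∀ (a : Polynomial K) (X : g), θbar (a ⊗ₜ X) = a * θ X)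
    (hbr : ∀ (a b : Polynomial K) (X Y : g),
      br (a ⊗ₜ X) (b ⊗ₜ Y) =
        (a * b) ⊗ₜ ⁅X, Y⁆ + (a * (θ X * derivative b)) ⊗ₜ Y - (b * (θ Y * derivative a)) ⊗ₜ X) :
    ∀ u v, θbar (br u v) = θbar u * derivative (θbar v) - derivative (θbar u) * θbar v := by
  intro u v
  induction u using TensorProduct.induction_on with
  | zero => simp
  | add u₁ u₂ h₁ h₂ => simp only [map_add, LinearMap.add_apply, h₁, h₂]; ring
  | tmul a X =>
    induction v using TensorProduct.induction_on with
    | zero => simp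
    | add v₁ v₂ h₁ h₂ => simp only [map_add, h₁, h₂]; ring
    | tmul b Y => simp only [hbr, map_add, map_sub, hθbar, hact, derivative_mul]; ring

lemma aux_antisym
    (hbr : ∀ (a b : Polynomial K) (X Y : g),
      br (a ⊗ₜ X) (b ⊗ₜ Y) =
        (a * b) ⊗ₜ ⁅X, Y⁆ + (a * (θ X * derivative b)) ⊗ₜ Y - (b * (θ Y * derivative a)) ⊗ₜ X) :
    ∀ u v, br u v = - br v u := by
  intro u v
  induction u using TensorProduct.induction_on with
  | zero => simp
  | add u₁ u₂ h₁ h₂ => simp only [map_add, LinearMap.add_apply, h₁, h₂]; abel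
  | tmul a X =>
    induction v using TensorProduct.induction_on with
    | zero => simp
    | add v₁ v₂ h₁ h₂ => simp only [map_add, LinearMap.add_apply, h₁, h₂]; abel
    | tmul b Y =>
      rw [hbr, hbr, show ⁅Y,X⁆ = -⁅X,Y⁆ from (lie_skew Y X).symm]
      simp only [tmul_neg, mul_comm b a]
      abel

lemma aux_smul_right
    (hθbar : ∀ (a : Polynomial K) (X : g), θbar (a ⊗ₜ X) = a * θ X)
    (hbr : ∀ (a b : Polynomial K) (X Y : g),
      br (a ⊗ₜ X) (b ⊗ₜ Y) =
        (a * b) ⊗ₜ ⁅X, Y⁆ + (a * (θ X * derivative b)) ⊗ₜ Y - (b * (θ Y * derivative a)) ⊗ₜ X) :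
    ∀ u v (a : Polynomial K), br u (a • v) = (θbar u * derivative a) • v + a • br u v := by
  intro u v a
  induction u using TensorProduct.induction_on with
  | zero => simp
  | add u₁ u₂ h₁ h₂ =>
    simp only [map_add, LinearMap.add_apply, h₁, h₂, add_mul, add_smul, smul_add]; abel
  | tmul c X =>
    induction v using TensorProduct.induction_on with
    | zero => simp
    | add v₁ v₂ h₁ h₂ =>
      simp only [smul_add, map_add, h₁, h₂]; abel
    | tmul b Y =>
      rw [smul_tmul', smul_eq_mul, hbr, hbr, hθbar]
      simp only [smul_add, smul_sub, smul_tmul', smul_eq_mul, derivative_mul]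
      simp only [mul_add, add_mul, mul_sub, sub_mul, add_tmul, tmul_add]
      ring_nf
      abel

lemma aux_jacobi
    (hact : ∀ X Y : g, θ ⁅X, Y⁆ = θ X * derivative (θ Y) - derivative (θ X) * θ Y)
    (hbr : ∀ (a b : Polynomial K) (X Y : g),
      br (a ⊗ₜ X) (b ⊗ₜ Y) =
        (a * b) ⊗ₜ ⁅X, Y⁆ + (a * (θ X * derivative b)) ⊗ₜ Y - (b * (θ Y * derivative a)) ⊗ₜ X) :
    ∀ u v w, br u (br v w) = br (br u v) w + br v (br u w) := by
  intro u v w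
  induction u using TensorProduct.induction_on with
  | zero => simp
  | add u₁ u₂ h₁ h₂ => simp only [map_add, LinearMap.add_apply, h₁, h₂]; abel
  | tmul a X =>
    induction v using TensorProduct.induction_on with
    | zero => simp
    | add v₁ v₂ h₁ h₂ => simp only [map_add, LinearMap.add_apply, h₁, h₂]; abel
    | tmul b Y =>
      induction w using TensorProduct.induction_on with
      | zero => simp
      | add w₁ w₂ h₁ h₂ => simp only [map_add, LinearMap.add_apply, h₁, h₂]; abel
      | tmul c Z =>
        simp only [hbr, map_add, map_sub, LinearMap.add_apply, LinearMap.sub_apply, hact,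
          derivative_mul, derivative_sub]
        simp only [lie_lie, show ⁅Y,X⁆ = -⁅X,Y⁆ from (lie_skew Y X).symm,
          tmul_neg, tmul_sub, tmul_add, sub_tmul, add_tmul, neg_tmul,
          mul_add, add_mul, mul_sub, sub_mul]
        ring_nf
        abel

end AuxCrossed

set_option maxHeartbeats 1600000 in
/-- Let `θ` be a nontrivial action of a finite-dimensional Lie algebra `𝔤`
on `K[t]`, let `E = K[t] ⊗ 𝔤` be the associated crossed product (with bracket `br` and
anchor `θbar`), and let `L = ker θbar`.  Then there exists `x ∈ E` such that
`E = K[t]·x ⊕ L` as `K[t]`-modules, the pair `([x,·]|_L, θbar x)` is a derivation of the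
`K[t]`-Lie algebra `L`, and the map `(a, l) ↦ a·x + l` is an isomorphism of Lie Rinehart
algebras from the extended crossed product `K[t] ⋉_{([x,·], θbar x)} L` onto `E`.
In particular every nontrivial `K[t]`-crossed product is an extended crossed product. -/
theorem crossedProduct_isomorphic_extended {K : Type*} [RCLike K]
    {g : Type*} [LieRing g] [LieAlgebra K g] [FiniteDimensional K g]
    (θ : g →ₗ[K] Polynomial K)
    (hact : ∀ X Y : g, θ ⁅X, Y⁆ = θ X * derivative (θ Y) - derivative (θ X) * θ Y)
    (hnt : θ ≠ 0)
    (θbar : Polynomial K ⊗[K] g →ₗ[Polynomial K] Polynomial K)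
    (hθbar : ∀ (a : Polynomial K) (X : g), θbar (a ⊗ₜ X) = a * θ X)
    (br : Polynomial K ⊗[K] g →ₗ[K] Polynomial K ⊗[K] g →ₗ[K] Polynomial K ⊗[K] g)
    (hbr : ∀ (a b : Polynomial K) (X Y : g),
      br (a ⊗ₜ X) (b ⊗ₜ Y) =
        (a * b) ⊗ₜ ⁅X, Y⁆ + (a * (θ X * derivative b)) ⊗ₜ Y - (b * (θ Y * derivative a)) ⊗ₜ X) :
    ∃ x : Polynomial K ⊗[K] g,
      -- `E = K[t]·x ⊕ L` as `K[t]`-modules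
      IsCompl (Submodule.span (Polynomial K) {x}) (LinearMap.ker θbar) ∧
      -- `[x,·]` preserves `L = ker θbar` ...
      (∀ l ∈ LinearMap.ker θbar, br x l ∈ LinearMap.ker θbar) ∧
      -- ... and `([x,·]|_L, θbar x)` is a derivation of the `K[t]`-Lie algebra `L`
      (∀ l₁ ∈ LinearMap.ker θbar, ∀ l₂ ∈ LinearMap.ker θbar,
          br x (br l₁ l₂) = br (br x l₁) l₂ + br l₁ (br x l₂)) ∧
      (∀ (a : Polynomial K), ∀ l ∈ LinearMap.ker θbar,
          br x (a • l) = (θbar x * derivative a) • l + a • br x l) ∧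
      -- `(a, l) ↦ a·x + l` is bijective (with `K[t]`-linearity built into the expression) ...
      (∀ e : Polynomial K ⊗[K] g, ∃! p : Polynomial K × (LinearMap.ker θbar),
          e = p.1 • x + (p.2 : Polynomial K ⊗[K] g)) ∧
      -- ... and it intertwines the bracket of `K[t] ⋉_{([x,·], θbar x)} L` with `br` ...
      (∀ (a₁ a₂ : Polynomial K), ∀ l₁ ∈ LinearMap.ker θbar, ∀ l₂ ∈ LinearMap.ker θbar,
          br (a₁ • x + l₁) (a₂ • x + l₂) =
            (a₁ * (θbar x * derivative a₂) - a₂ * (θbar x * derivative a₁)) • x +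
              (br l₁ l₂ + a₁ • br x l₂ - a₂ • br x l₁)) ∧
      -- ... and the anchors
      (∀ (a : Polynomial K), ∀ l ∈ LinearMap.ker θbar, θbar (a • x + l) = a * θbar x) := by
  classical
  obtain ⟨X₀, hX₀⟩ : ∃ X, θ X ≠ 0 := by
    by_contra h
    push_neg at h
    exact hnt (LinearMap.ext fun X => h X)
  set f : Polynomial K := Submodule.IsPrincipal.generator (LinearMap.range θbar) with hfdef
  have hfspan : Submodule.span (Polynomial K) {f} = LinearMap.range θbar :=
    Submodule.IsPrincipal.span_singleton_generator _
  obtain ⟨x, hx⟩ : ∃ x, θbar x = f :=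
    Submodule.IsPrincipal.generator_mem (LinearMap.range θbar)
  have hf0 : f ≠ 0 := by
    intro h
    apply hX₀
    have hmem : θbar (1 ⊗ₜ X₀) ∈ LinearMap.range θbar := LinearMap.mem_range_self _ _
    rw [← hfspan] at hmem
    obtain ⟨c, hc⟩ := Submodule.mem_span_singleton.mp hmem
    rw [hθbar, one_mul] at hc
    rw [← hc, h, smul_zero]
  have hdecomp : ∀ e : Polynomial K ⊗[K] g, ∃ a : Polynomial K, θbar (e - a • x) = 0 := by
    intro e
    have hmem : θbar e ∈ LinearMap.range θbar := LinearMap.mem_range_self _ _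
    rw [← hfspan] at hmem
    obtain ⟨a, ha⟩ := Submodule.mem_span_singleton.mp hmem
    exact ⟨a, by rw [map_sub, map_smul, hx, ← ha, sub_self]⟩
  have hsr := aux_smul_right θ θbar br hθbar hbr
  have has := aux_antisym θ br hbr
  have hmo := aux_morph θ θbar br hact hθbar hbr
  have hxx : br x x = 0 := by
    have h := has x x
    have h2 : (2 : K) • br x x = 0 := by
      rw [two_smul]
      nth_rewrite 2 [h]
      exact add_neg_cancel _
    rcases smul_eq_zero.mp h2 with h' | h'
    · exact absurd h' two_ne_zero
    · exact h'
  refine ⟨x, ?_, ?_, ?_, ?_, ?_, ?_, ?_⟩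
  · constructor
    · rw [Submodule.disjoint_def]
      intro v hv1 hv2
      obtain ⟨a, rfl⟩ := Submodule.mem_span_singleton.mp hv1
      have : a * f = 0 := by
        have := LinearMap.mem_ker.mp hv2
        rwa [map_smul, hx, smul_eq_mul] at this
      rcases mul_eq_zero.mp this with h' | h'
      · rw [h', zero_smul]
      · exact absurd h' hf0
    · rw [codisjoint_iff, eq_top_iff]
      intro e _
      obtain ⟨a, ha⟩ := hdecomp e
      have he : e = a • x + (e - a • x) := by abel
      rw [he]
      exact Submodule.add_mem_sup
        (Submodule.smul_mem _ _ (Submodule.mem_span_singleton_self x))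
        (LinearMap.mem_ker.mpr ha)
  · intro l hl
    have hl' : θbar l = 0 := hl
    rw [LinearMap.mem_ker, hmo, hl', map_zero, mul_zero, mul_zero, sub_self]
  · intro l₁ _ l₂ _
    exact aux_jacobi θ br hact hbr x l₁ l₂
  · intro a l _
    exact hsr x l a
  · intro e
    obtain ⟨a, ha⟩ := hdecomp e
    refine ⟨(a, ⟨e - a • x, LinearMap.mem_ker.mpr ha⟩), by simp, ?_⟩
    rintro ⟨b, m⟩ hbm
    simp only at hbm
    have hm : θbar (m : Polynomial K ⊗[K] g) = 0 := m.2
    have hbf : θbar e = b * f := by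
      rw [hbm, map_add, map_smul, hx, hm, add_zero, smul_eq_mul]
    have haf : θbar e = a * f := by
      have := ha
      rw [map_sub, map_smul, hx, smul_eq_mul, sub_eq_zero] at this
      exact this
    have hab : b = a := mul_right_cancel₀ hf0 (hbf.symm.trans haf)
    subst hab
    have : (m : Polynomial K ⊗[K] g) = e - b • x := by
      rw [hbm]; abel
    exact Prod.ext rfl (Subtype.ext this)
  · intro a₁ a₂ l₁ hl₁ l₂ hl₂
    have hl₁' : θbar l₁ = 0 := hl₁
    have hl₂' : θbar l₂ = 0 := hl₂
    have expand : br (a₁ • x + l₁) (a₂ • x + l₂) =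
        br (a₁ • x) (a₂ • x) + br (a₁ • x) l₂ + br l₁ (a₂ • x) + br l₁ l₂ := by
      simp only [map_add, LinearMap.add_apply]
      abel
    have e0 : br (a₁ • x) x = -((θbar x * derivative a₁) • x) := by
      rw [has (a₁ • x) x, hsr x x a₁, hxx, smul_zero, add_zero]
    have p1 : br (a₁ • x) (a₂ • x) =
        ((a₁ * θbar x) * derivative a₂) • x - (a₂ • ((θbar x * derivative a₁) • x)) := by
      rw [hsr (a₁ • x) x a₂, e0, map_smul, smul_eq_mul, smul_neg, sub_eq_add_neg]
    have p2 : br (a₁ • x) l₂ = a₁ • br x l₂ := by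
      rw [has (a₁ • x) l₂, hsr l₂ x a₁, hl₂', zero_mul, zero_smul, zero_add,
        has l₂ x, smul_neg, neg_neg]
    have p3 : br l₁ (a₂ • x) = -(a₂ • br x l₁) := by
      rw [hsr l₁ x a₂, hl₁', zero_mul, zero_smul, zero_add, has l₁ x, smul_neg]
    rw [expand, p1, p2, p3, smul_smul]
    module
  · intro a l hl
    have hl' : θbar l = 0 := hl
    rw [map_add, map_smul, hl', add_zero, smul_eq_mul]
end

section
/- Let θ be an action of a finite-dimensional Lie algebra 𝔤 on K[t] with Rank(θ) = 3, and let X₀, X₁, X₂ ∈ 𝔤 satisfy θ(X₀) = d/dt, θ(X₁) = t·d/dt, θ(X₂) = t²·d/dt. Then the kernel L of the anchor θ̄ : K[t]⊗𝔤 → Der(K[t]) of the crossed product equals the K[t]-submodule of K[t]⊗𝔤 generated by the set {1⊗Z : Z ∈ 𝔤, θ(Z) = 0} together with the two elements 1⊗X₂ − t⊗X₁ and 1⊗X₁ − t⊗X₀. -/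
open Polynomial TensorProduct

set_option maxHeartbeats 1000000

/-- Let `θ` be an action of a finite-dimensional Lie algebra `𝔤` on `K[t]`
with `Rank(θ) = 3`, and `X₀, X₁, X₂ ∈ 𝔤` with `θ(X₀) = d/dt`, `θ(X₁) = t·d/dt`,
`θ(X₂) = t²·d/dt`.  Then the kernel of the anchor `θbar : K[t]⊗𝔤 → Der K[t] ≅ K[t]` of the
crossed product is the `K[t]`-submodule generated by `{1⊗Z : θ(Z) = 0}` together with
`1⊗X₂ − t⊗X₁` and `1⊗X₁ − t⊗X₀`. -/
theorem ker_anchor_of_rank_three {K : Type*} [RCLike K]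
    {g : Type*} [LieRing g] [LieAlgebra K g] [FiniteDimensional K g]
    (θ : g →ₗ[K] Polynomial K)
    (hact : ∀ X Y : g, θ ⁅X, Y⁆ = θ X * derivative (θ Y) - derivative (θ X) * θ Y)
    (hrank : Module.finrank K (LinearMap.range θ) = 3)
    (X₀ X₁ X₂ : g) (h₀ : θ X₀ = 1) (h₁ : θ X₁ = Polynomial.X) (h₂ : θ X₂ = Polynomial.X ^ 2)
    (θbar : Polynomial K ⊗[K] g →ₗ[Polynomial K] Polynomial K)
    (hθbar : ∀ (a : Polynomial K) (X : g), θbar (a ⊗ₜ X) = a * θ X) :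
    LinearMap.ker θbar =
      Submodule.span (Polynomial K)
        ({p : Polynomial K ⊗[K] g | ∃ Z : g, θ Z = 0 ∧ p = (1 : Polynomial K) ⊗ₜ Z} ∪
          {(1 : Polynomial K) ⊗ₜ X₂ - (Polynomial.X : Polynomial K) ⊗ₜ X₁,
           (1 : Polynomial K) ⊗ₜ X₁ - (Polynomial.X : Polynomial K) ⊗ₜ X₀}) := by
  classical
  set S : Set (Polynomial K ⊗[K] g) :=
    ({p : Polynomial K ⊗[K] g | ∃ Z : g, θ Z = 0 ∧ p = (1 : Polynomial K) ⊗ₜ Z} ∪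
          {(1 : Polynomial K) ⊗ₜ X₂ - (Polynomial.X : Polynomial K) ⊗ₜ X₁,
           (1 : Polynomial K) ⊗ₜ X₁ - (Polynomial.X : Polynomial K) ⊗ₜ X₀}) with hS
  -- the span is contained in the kernel
  have hle : Submodule.span (Polynomial K) S ≤ LinearMap.ker θbar := by
    rw [Submodule.span_le]
    rintro p hp
    rcases hp with ⟨Z, hZ, rfl⟩ | hp
    · rw [SetLike.mem_coe, LinearMap.mem_ker, hθbar, hZ, mul_zero]
    · simp only [Set.mem_insert_iff, Set.mem_singleton_iff] at hp
      rcases hp with rfl | rfl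
      · rw [SetLike.mem_coe, LinearMap.mem_ker, map_sub, hθbar, hθbar, h₁, h₂]
        ring
      · rw [SetLike.mem_coe, LinearMap.mem_ker, map_sub, hθbar, hθbar, h₀, h₁]
        ring
  -- the range of θ is spanned by 1, X, X^2
  have hind : LinearIndependent K (fun i : Fin 3 => (Polynomial.X : Polynomial K) ^ (i : ℕ)) := by
    have h := (Polynomial.basisMonomials K).linearIndependent
    have h2 := h.comp (fun i : Fin 3 => (i : ℕ)) Fin.val_injective
    convert h2 using 2 with i
    simp [Polynomial.X_pow_eq_monomial]
  have hWrange :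
      Submodule.span K (Set.range fun i : Fin 3 => (Polynomial.X : Polynomial K) ^ (i : ℕ)) =
        LinearMap.range θ := by
    apply Submodule.eq_of_le_of_finrank_eq
    · rw [Submodule.span_le]
      rintro _ ⟨i, rfl⟩
      fin_cases i
      · exact ⟨X₀, by simp [h₀]⟩
      · exact ⟨X₁, by simp [h₁]⟩
      · exact ⟨X₂, by simp [h₂]⟩
    · rw [finrank_span_eq_card hind, hrank]
      simp
  -- decomposition of any Y
  have hdecomp : ∀ Y : g, ∃ (Z : g) (c : Fin 3 → K),
      θ Z = 0 ∧ Y = Z + c 0 • X₀ + c 1 • X₁ + c 2 • X₂ := by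
    intro Y
    have hmem : θ Y ∈ Submodule.span K
        (Set.range fun i : Fin 3 => (Polynomial.X : Polynomial K) ^ (i : ℕ)) := by
      rw [hWrange]; exact ⟨Y, rfl⟩
    rw [Submodule.mem_span_range_iff_exists_fun K] at hmem
    obtain ⟨c, hc⟩ := hmem
    refine ⟨Y - (c 0 • X₀ + c 1 • X₁ + c 2 • X₂), c, ?_, by abel⟩
    rw [map_sub, map_add, map_add, map_smul, map_smul, map_smul, h₀, h₁, h₂, sub_eq_zero, ← hc,
      Fin.sum_univ_three, show ((0 : Fin 3) : ℕ) = 0 from rfl, show ((1 : Fin 3) : ℕ) = 1 from rfl,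
      show ((2 : Fin 3) : ℕ) = 2 from rfl, pow_zero, pow_one]
  have rep : ∀ (q : Polynomial K) (Y : g),
      q ⊗ₜ[K] Y = q • ((1 : Polynomial K) ⊗ₜ[K] Y) := by
    intro q Y
    rw [smul_tmul']
    simp
  -- every element is a member of the span plus a combination of X₀, X₁, X₂
  have key : ∀ w : Polynomial K ⊗[K] g, ∃ m ∈ Submodule.span (Polynomial K) S,
      ∃ a : Fin 3 → Polynomial K,
        w = m + a 0 ⊗ₜ[K] X₀ + a 1 ⊗ₜ[K] X₁ + a 2 ⊗ₜ[K] X₂ := by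
    intro w
    induction w using TensorProduct.induction_on with
    | zero => exact ⟨0, Submodule.zero_mem _, 0, by simp⟩
    | tmul a Y =>
      obtain ⟨Z, c, hZ, hY⟩ := hdecomp Y
      refine ⟨a ⊗ₜ Z, ?_, fun i => c i • a, ?_⟩
      · rw [rep]
        exact Submodule.smul_mem _ _ (Submodule.subset_span (Or.inl ⟨Z, hZ, rfl⟩))
      · rw [hY]
        simp only [tmul_add, tmul_smul, smul_tmul']
    | add x y hx hy =>
      obtain ⟨m, hm, a, rfl⟩ := hx
      obtain ⟨n, hn, b, rfl⟩ := hy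
      refine ⟨m + n, Submodule.add_mem _ hm hn, a + b, ?_⟩
      simp only [Pi.add_apply, add_tmul]
      abel
  refine le_antisymm ?_ hle
  intro w hw
  obtain ⟨m, hm, a, rfl⟩ := key w
  have hm0 : θbar m = 0 := hle hm
  rw [LinearMap.mem_ker, map_add, map_add, map_add, hm0, hθbar, hθbar, hθbar, h₀, h₁, h₂,
    zero_add, mul_one] at hw
  -- hw : a 0 + a 1 * X + a 2 * X^2 = 0
  have ha0 : a 0 = -(a 1 * Polynomial.X + a 2 * Polynomial.X ^ 2) := by linear_combination hw
  have heq : m + a 0 ⊗ₜ[K] X₀ + a 1 ⊗ₜ[K] X₁ + a 2 ⊗ₜ[K] X₂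
      = m + a 2 • ((1 : Polynomial K) ⊗ₜ[K] X₂ - (Polynomial.X : Polynomial K) ⊗ₜ[K] X₁)
          + (a 1 + a 2 * Polynomial.X) •
            ((1 : Polynomial K) ⊗ₜ[K] X₁ - (Polynomial.X : Polynomial K) ⊗ₜ[K] X₀) := by
    rw [ha0, rep (-(a 1 * Polynomial.X + a 2 * Polynomial.X ^ 2)) X₀, rep (a 1) X₁,
      rep (a 2) X₂, rep Polynomial.X X₁, rep Polynomial.X X₀]
    module
  rw [heq]
  refine Submodule.add_mem _ (Submodule.add_mem _ hm ?_) ?_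
  · exact Submodule.smul_mem _ _ (Submodule.subset_span (Or.inr (Set.mem_insert _ _)))
  · exact Submodule.smul_mem _ _
      (Submodule.subset_span (Or.inr (Set.mem_insert_iff.mpr (Or.inr rfl))))
end

section
/- Let θ₁ and θ₂ be two nontrivial actions of sl(2,K) on K[t], and let E¹ and E² denote the crossed products K[t]⊗sl(2,K) built from θ₁ and θ₂ respectively. Then E¹ and E² are isomorphic as Lie Rinehart algebras: there exists a K[t]-linear Lie algebra isomorphism Φ : E¹ → E² such that θ̄₂ ∘ Φ = θ̄₁, where θ̄ᵢ is the anchor of Eⁱ. -/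
open Polynomial TensorProduct LieAlgebra.SpecialLinear

set_option maxHeartbeats 1000000
set_option synthInstance.maxHeartbeats 400000
set_option linter.unnecessarySeqFocus false

section Preliminaries

variable {K : Type*} [RCLike K]



lemma qe_lemma (β d γ : K) : C γ * (C d * X + C β)^2
    = C (γ*d^2) * X^2 + C (2*γ*d*β) * X + C (γ*β^2) := by
  simp only [C_mul, C_pow, map_ofNat]; ring

lemma forms_span (c β d γ : K) (hc : c ≠ 0) (hd : d ≠ 0) (hγ : γ ≠ 0) :
    Submodule.span K ({C γ * (C d * X + C β)^2, C d * X + C β, C c} : Set K[X])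
      = Submodule.span K ({1, X, X^2} : Set K[X]) := by
  have qe := qe_lemma (K := K) β d γ
  have h1X : (1:K[X]) ∈ Submodule.span K ({C γ * (C d * X + C β)^2, C d * X + C β, C c} : Set K[X]) := by
    have h : (1:K[X]) = c⁻¹ • C c := by
      rw [smul_eq_C_mul, ← C_mul, inv_mul_cancel₀ hc, C_1]
    rw [h]
    exact Submodule.smul_mem _ _ (Submodule.subset_span (by simp))
  have hXX : (X:K[X]) ∈ Submodule.span K ({C γ * (C d * X + C β)^2, C d * X + C β, C c} : Set K[X]) := by
    have h1 : (C d⁻¹ * C d : K[X]) = 1 := by rw [← C_mul, inv_mul_cancel₀ hd, C_1]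
    have h2 : (C d⁻¹ * C β - C (β/(d*c)) * C c : K[X]) = 0 := by
      rw [← C_mul, ← C_mul, ← C_sub, show d⁻¹ * β - β/(d*c)*c = 0 by field_simp; ring, C_0]
    have hX : (X:K[X]) = d⁻¹ • (C d * X + C β) - (β/(d*c)) • C c := by
      rw [smul_eq_C_mul, smul_eq_C_mul]
      linear_combination (-(X:K[X])) * h1 - h2
    have mw : (C d * X + C β) ∈ Submodule.span K ({C γ * (C d * X + C β)^2, C d * X + C β, C c} : Set K[X]) :=
      Submodule.subset_span (by simp)
    have mc : (C c : K[X]) ∈ Submodule.span K ({C γ * (C d * X + C β)^2, C d * X + C β, C c} : Set K[X]) :=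
      Submodule.subset_span (by simp)
    have hm := sub_mem (Submodule.smul_mem _ d⁻¹ mw) (Submodule.smul_mem _ (β/(d*c)) mc)
    rwa [← hX] at hm
  have hX2 : (X^2:K[X]) ∈ Submodule.span K ({C γ * (C d * X + C β)^2, C d * X + C β, C c} : Set K[X]) := by
    have hgd : γ * d^2 ≠ 0 := by
      simp [hγ, hd, pow_eq_zero_iff]
    have h1 : (C (γ*d^2)⁻¹ * C (γ*d^2) : K[X]) = 1 := by
      rw [← C_mul, inv_mul_cancel₀ hgd, C_1]
    have h2 : (C (γ*d^2)⁻¹ * C (2*γ*d*β) : K[X]) = C (2*β/d) := by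
      rw [← C_mul]; congr 1; field_simp
    have h3 : (C (γ*d^2)⁻¹ * C (γ*β^2) : K[X]) = C (β^2/d^2) := by
      rw [← C_mul]; congr 1; field_simp
    have hX2e : (X^2:K[X]) = (γ*d^2)⁻¹ • (C γ * (C d * X + C β)^2)
        - (2*β/d) • X - (β^2/d^2) • (1:K[X]) := by
      rw [smul_eq_C_mul, smul_eq_C_mul, smul_eq_C_mul, qe]
      linear_combination (-(X^2:K[X])) * h1 - X * h2 - h3
    have mq : (C γ * (C d * X + C β)^2) ∈ Submodule.span K ({C γ * (C d * X + C β)^2, C d * X + C β, C c} : Set K[X]) :=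
      Submodule.subset_span (by simp)
    have hm := sub_mem (sub_mem (Submodule.smul_mem _ ((γ*d^2)⁻¹) mq)
      (Submodule.smul_mem _ (2*β/d) hXX)) (Submodule.smul_mem _ (β^2/d^2) h1X)
    rwa [← hX2e] at hm
  have memC : ∀ x : K, (C x : K[X]) ∈ Submodule.span K ({1, X, X^2} : Set K[X]) := by
    intro x
    have h : (C x : K[X]) = x • 1 := by rw [smul_eq_C_mul, mul_one]
    rw [h]
    exact Submodule.smul_mem _ _ (Submodule.subset_span (by simp))
  have mX : (X:K[X]) ∈ Submodule.span K ({1, X, X^2} : Set K[X]) := Submodule.subset_span (by simp)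
  have mX2 : (X^2:K[X]) ∈ Submodule.span K ({1, X, X^2} : Set K[X]) := Submodule.subset_span (by simp)
  apply le_antisymm
  · rw [Submodule.span_le]
    rintro p hp
    simp only [Set.mem_insert_iff, Set.mem_singleton_iff] at hp
    rcases hp with rfl | rfl | rfl
    · rw [qe]
      refine add_mem (add_mem ?_ ?_) (memC _)
      · rw [← smul_eq_C_mul]; exact Submodule.smul_mem _ _ mX2
      · rw [← smul_eq_C_mul]; exact Submodule.smul_mem _ _ mX
    · refine add_mem ?_ (memC _)
      rw [← smul_eq_C_mul]; exact Submodule.smul_mem _ _ mX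
    · exact memC c
  · rw [Submodule.span_le]
    rintro p hp
    simp only [Set.mem_insert_iff, Set.mem_singleton_iff] at hp
    rcases hp with rfl | rfl | rfl
    exacts [h1X, hXX, hX2]

lemma forms_indep (c β d γ : K) (hc : c ≠ 0) (hd : d ≠ 0) (hγ : γ ≠ 0)
    (a b c' : K)
    (h : C a * (C γ * (C d * X + C β)^2) + C b * (C d * X + C β) + C c' * C c = 0) :
    a = 0 ∧ b = 0 ∧ c' = 0 := by
  rw [qe_lemma] at h
  have e2 := congrArg (fun p => coeff p 2) h
  have e1 := congrArg (fun p => coeff p 1) h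
  have e0 := congrArg (fun p => coeff p 0) h
  simp only [coeff_add, coeff_C_mul, coeff_X_pow, coeff_X, coeff_C, coeff_zero, mul_ite,
    mul_one, mul_zero] at e2 e1 e0
  norm_num at e2 e1 e0
  have ha : a = 0 := by
    rcases e2 with h' | h' | h'
    · exact h'
    · exact absurd h' hγ
    · exact absurd h' hd
  subst ha
  norm_num at e1 e0
  have hb : b = 0 := by
    rcases e1 with h' | h'
    · exact h'
    · exact absurd h' hd
  subst hb
  norm_num at e0
  rcases e0 with h' | h'
  · exact ⟨rfl, rfl, h'⟩
  · exact absurd h' hc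


lemma deriv_facts {p : K[X]} (hp : p ≠ 0) (h1 : 1 ≤ p.natDegree) :
    derivative p ≠ 0 ∧ (derivative p).natDegree = p.natDegree - 1 ∧
      (derivative p).leadingCoeff = (p.natDegree : K) * p.leadingCoeff := by
  have hne : p.natDegree - 1 + 1 = p.natDegree := by omega
  have hc : (derivative p).coeff (p.natDegree - 1) = (p.natDegree : K) * p.leadingCoeff := by
    rw [coeff_derivative, hne, mul_comm, leadingCoeff]
    congr 1
    exact_mod_cast congrArg (Nat.cast (R := K)) hne
  have hnz : (derivative p).coeff (p.natDegree - 1) ≠ 0 := by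
    rw [hc]
    exact mul_ne_zero (Nat.cast_ne_zero.mpr (by omega)) (leadingCoeff_ne_zero.mpr hp)
  have hd0 : derivative p ≠ 0 := fun h => hnz (by simp [h])
  have hdeg : (derivative p).natDegree = p.natDegree - 1 :=
    le_antisymm (natDegree_derivative_le p) (le_natDegree_of_ne_zero hnz)
  refine ⟨hd0, hdeg, ?_⟩
  rw [leadingCoeff, hdeg, hc]

lemma W2_lemma (u v w : K[X])
    (R1 : w * derivative u - derivative w * u = 2 * u)
    (R2 : w * derivative v - derivative w * v = -(2 * v))
    (R3 : u * derivative v - derivative u * v = w) :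
    w^2 + 4 * (u*v) = 0 := by
  linear_combination (-v) * R1 + u * R2 - w * R3

lemma E_lemma (u v w : K[X]) (hw : w ≠ 0)
    (R1 : w * derivative u - derivative w * u = 2 * u)
    (R2 : w * derivative v - derivative w * v = -(2 * v))
    (W2 : w^2 + 4 * (u*v) = 0) :
    4 * (derivative u * derivative v) = 4 - (derivative w)^2 := by
  have E0 : w^2 * (4 * (derivative u * derivative v)) = w^2 * (4 - (derivative w)^2) := by
    linear_combination (4 * (w * derivative v)) * R1 + (4 * (u*(derivative w + 2))) * R2
      + ((derivative w)^2 - 4) * W2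
  exact mul_left_cancel₀ (pow_ne_zero 2 hw) E0

lemma not_both_pos (u v w : K[X]) (hu : u ≠ 0) (hv : v ≠ 0) (hw : w ≠ 0)
    (R1 : w * derivative u - derivative w * u = 2 * u)
    (R2 : w * derivative v - derivative w * v = -(2 * v))
    (R3 : u * derivative v - derivative u * v = w)
    (hnk : u.natDegree ≠ v.natDegree) :
    u.natDegree = 0 ∨ v.natDegree = 0 := by
  by_contra hcon
  push_neg at hcon
  obtain ⟨hn0, hk0⟩ := hcon
  set n := u.natDegree with hn
  set k := v.natDegree with hk
  set m := w.natDegree with hm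
  have hn1 : 1 ≤ n := by omega
  have hk1 : 1 ≤ k := by omega
  have W2 := W2_lemma u v w R1 R2 R3
  have E := E_lemma u v w hw R1 R2 W2
  -- degrees from W2
  have hW2' : w^2 = -(4 * (u*v)) := by linear_combination W2
  have h4 : ((4:K[X])) = C 4 := (map_ofNat C 4).symm
  have hdeg : 2 * m = n + k := by
    have := congrArg natDegree hW2'
    rwa [natDegree_pow, natDegree_neg, h4, natDegree_C_mul (by norm_num : (4:K) ≠ 0),
      natDegree_mul hu hv] at this
  have hm2 : 2 ≤ m := by omega
  -- leading coefficient from W2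
  have lcW : w.leadingCoeff^2 = -(4 * (u.leadingCoeff * v.leadingCoeff)) := by
    have := congrArg (fun p => coeff p (2*m)) hW2'
    simp only [h4] at this
    rw [show coeff (w^2) (2*m) = w.leadingCoeff^2 by
        rw [← leadingCoeff_pow, leadingCoeff, natDegree_pow],
      coeff_neg, coeff_C_mul,
      show (2*m) = n + k from hdeg, coeff_mul_degree_add_degree] at this
    exact this
  -- derivative data
  obtain ⟨hdu0, hdun, hdul⟩ := deriv_facts hu hn1
  obtain ⟨hdv0, hdvn, hdvl⟩ := deriv_facts hv hk1
  obtain ⟨hdw0, hdwn, hdwl⟩ := deriv_facts hw (by omega)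
  -- coefficient of E at degree 2*m-2
  have key : 4 * (((n:K) * u.leadingCoeff) * ((k:K) * v.leadingCoeff))
      = -(((m:K) * w.leadingCoeff)^2) := by
    have := congrArg (fun p => coeff p (2*m-2)) E
    simp only [h4] at this
    rw [coeff_C_mul, coeff_sub, coeff_C, if_neg (by omega : ¬(2*m-2 = 0)),
      show (2*m-2) = (derivative u).natDegree + (derivative v).natDegree by
        rw [hdun, hdvn]; omega,
      coeff_mul_degree_add_degree, hdul, hdvl] at this
    rw [this]
    rw [show (derivative u).natDegree + (derivative v).natDegree = 2*m-2 by
        rw [hdun, hdvn]; omega,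
      show (2*m-2) = (derivative w).natDegree + (derivative w).natDegree by rw [hdwn]; omega]
    rw [show (((m:K) * w.leadingCoeff)^2) = (derivative w).leadingCoeff * (derivative w).leadingCoeff by
        rw [hdwl]; ring]
    rw [← coeff_mul_degree_add_degree]
    ring_nf
  have hlu : u.leadingCoeff ≠ 0 := leadingCoeff_ne_zero.mpr hu
  have hlv : v.leadingCoeff ≠ 0 := leadingCoeff_ne_zero.mpr hv
  -- combine: n*k = m^2
  have hnk2 : (n:K) * k = (m:K)^2 := by
    have h := key
    rw [mul_pow, lcW] at h
    have h2 : ((n:K) * k) * (4 * (u.leadingCoeff * v.leadingCoeff))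
        = ((m:K)^2) * (4 * (u.leadingCoeff * v.leadingCoeff)) := by linear_combination h
    exact mul_right_cancel₀ (mul_ne_zero (by norm_num) (mul_ne_zero hlu hlv)) h2
  have hnkN : n * k = m^2 := by exact_mod_cast hnk2
  have : n = k := by nlinarith [sq_nonneg ((n:ℤ) - k), (by exact_mod_cast hnkN : (n:ℤ)*k = (m:ℤ)^2), (by exact_mod_cast hdeg : 2*(m:ℤ) = n + k)]
  exact hnk this

lemma classify_ne (u v w : K[X]) (hu : u ≠ 0) (hv : v ≠ 0) (hw : w ≠ 0)
    (R1 : w * derivative u - derivative w * u = 2 * u)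
    (R2 : w * derivative v - derivative w * v = -(2 * v))
    (R3 : u * derivative v - derivative u * v = w)
    (hnk : u.natDegree ≠ v.natDegree) :
    ∃ c β d γ : K, c ≠ 0 ∧ d ≠ 0 ∧ γ ≠ 0 ∧
      ((u = C γ * (C d * X + C β)^2 ∧ w = C d * X + C β ∧ v = C c) ∨
       (v = C γ * (C d * X + C β)^2 ∧ w = C d * X + C β ∧ u = C c)) := by
  have W2 := W2_lemma u v w R1 R2 R3
  have h4 : ((4:K[X])) = C 4 := (map_ofNat C 4).symm
  rcases not_both_pos u v w hu hv hw R1 R2 R3 hnk with hn0 | hk0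
  · -- u is a constant, d = -2
    set c := u.coeff 0 with hcdef
    have huc : u = C c := eq_C_of_natDegree_eq_zero hn0
    have hc : c ≠ 0 := fun h => hu (by rw [huc, h, C_0])
    have hCc : (C c : K[X]) ≠ 0 := fun h => hc (by rwa [← C_0, C_inj] at h)
    have hγ4 : (4:K) * c ≠ 0 := mul_ne_zero (by norm_num) hc
    have hγ : -((4:K)*c)⁻¹ ≠ 0 := neg_ne_zero.mpr (inv_ne_zero hγ4)
    have hw' : derivative w = -2 := by
      have h1 : derivative w * C c = -2 * C c := by
        have hd : derivative u = 0 := by rw [huc, derivative_C]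
        linear_combination -R1 + w * hd - (derivative w + 2) * huc
      exact mul_right_cancel₀ hCc h1
    set β := w.coeff 0 with hβdef
    have hwf : w = C (-2) * X + C β := by
      have hC2 : (C (-2:K) : K[X]) = -2 := by
        rw [map_neg, map_ofNat]
      have hder : derivative (w - (C (-2) * X + C β)) = 0 := by
        simp [hw', hC2]
      have h0 := eq_C_of_derivative_eq_zero hder
      have hco : (w - (C (-2) * X + C β)).coeff 0 = 0 := by
        simp [coeff_sub, coeff_add, coeff_C_mul, coeff_X_zero, coeff_C, ← hβdef]
      rw [hco, C_0, sub_eq_zero] at h0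
      exact h0
    have hvf : v = C (-((4:K)*c)⁻¹) * (C (-2) * X + C β)^2 := by
      rw [← hwf]
      have hC : (C (-((4:K)*c)⁻¹) * ((4:K[X]) * C c) : K[X]) = -1 := by
        rw [h4, ← C_mul, ← C_mul, show (-((4:K)*c)⁻¹*(4*c)) = -1 by field_simp, map_neg, C_1]
      rw [huc] at W2
      linear_combination (-(C (-((4:K)*c)⁻¹))) * W2 + v * hC
    exact ⟨c, β, -2, -((4:K)*c)⁻¹, hc, by norm_num, hγ, Or.inr ⟨hvf, hwf, huc⟩⟩
  · -- v is a constant, d = 2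
    set c := v.coeff 0 with hcdef
    have hvc : v = C c := eq_C_of_natDegree_eq_zero hk0
    have hc : c ≠ 0 := fun h => hv (by rw [hvc, h, C_0])
    have hCc : (C c : K[X]) ≠ 0 := fun h => hc (by rwa [← C_0, C_inj] at h)
    have hγ4 : (4:K) * c ≠ 0 := mul_ne_zero (by norm_num) hc
    have hγ : -((4:K)*c)⁻¹ ≠ 0 := neg_ne_zero.mpr (inv_ne_zero hγ4)
    have hw' : derivative w = 2 := by
      have h1 : derivative w * C c = 2 * C c := by
        have hd : derivative v = 0 := by rw [hvc, derivative_C]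
        linear_combination -R2 + w * hd - (derivative w - 2) * hvc
      exact mul_right_cancel₀ hCc h1
    set β := w.coeff 0 with hβdef
    have hwf : w = C 2 * X + C β := by
      have hC2 : (C (2:K) : K[X]) = 2 := map_ofNat C 2
      have hder : derivative (w - (C 2 * X + C β)) = 0 := by
        simp [hw', hC2]
      have h0 := eq_C_of_derivative_eq_zero hder
      have hco : (w - (C 2 * X + C β)).coeff 0 = 0 := by
        simp [coeff_sub, coeff_add, coeff_C_mul, coeff_X_zero, coeff_C, ← hβdef]
      rw [hco, C_0, sub_eq_zero] at h0
      exact h0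
    have huf : u = C (-((4:K)*c)⁻¹) * (C 2 * X + C β)^2 := by
      rw [← hwf]
      have hC : (C (-((4:K)*c)⁻¹) * ((4:K[X]) * C c) : K[X]) = -1 := by
        rw [h4, ← C_mul, ← C_mul, show (-((4:K)*c)⁻¹*(4*c)) = -1 by field_simp, map_neg, C_1]
      rw [hvc] at W2
      linear_combination (-(C (-((4:K)*c)⁻¹))) * W2 + u * hC
    exact ⟨c, β, 2, -((4:K)*c)⁻¹, hc, by norm_num, hγ, Or.inl ⟨huf, hwf, hvc⟩⟩

lemma C_mul_mem (S : Set K[X]) (q : K[X]) (hq : q ∈ Submodule.span K S) (x : K) :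
    C x * q ∈ Submodule.span K S := by
  rw [← smul_eq_C_mul]
  exact Submodule.smul_mem _ _ hq

lemma classify_forms_path (u v w : K[X]) (hu : u ≠ 0) (hv : v ≠ 0) (hw : w ≠ 0)
    (R1 : w * derivative u - derivative w * u = 2 * u)
    (R2 : w * derivative v - derivative w * v = -(2 * v))
    (R3 : u * derivative v - derivative u * v = w)
    (hnk : u.natDegree ≠ v.natDegree) :
    (Submodule.span K ({u, w, v} : Set K[X]) = Submodule.span K ({1, X, X^2} : Set K[X])) ∧
    ∀ a b c' : K, C a * u + C b * w + C c' * v = 0 → a = 0 ∧ b = 0 ∧ c' = 0 := by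
  obtain ⟨c, β, d, γ, hc, hd, hγ, hcase⟩ := classify_ne u v w hu hv hw R1 R2 R3 hnk
  rcases hcase with ⟨h1, h2, h3⟩ | ⟨h1, h2, h3⟩
  · subst h1 h2 h3
    exact ⟨forms_span c β d γ hc hd hγ, fun a b c' h => forms_indep c β d γ hc hd hγ a b c' h⟩
  · subst h1 h2 h3
    have hset : ({C c, C d * X + C β, C γ * (C d * X + C β)^2} : Set K[X])
        = {C γ * (C d * X + C β)^2, C d * X + C β, C c} := by
      ext p; simp only [Set.mem_insert_iff, Set.mem_singleton_iff]; tauto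
    constructor
    · rw [hset]; exact forms_span c β d γ hc hd hγ
    · intro a b c' h
      have h' : C c' * (C γ * (C d * X + C β)^2) + C b * (C d * X + C β) + C a * C c = 0 := by
        linear_combination h
      obtain ⟨e1, e2, e3⟩ := forms_indep c β d γ hc hd hγ c' b a h'
      exact ⟨e3, e2, e1⟩

lemma classify_aux : ∀ N : ℕ, ∀ u v w : K[X], w.natDegree ≤ N → u ≠ 0 → v ≠ 0 → w ≠ 0 →
    (w * derivative u - derivative w * u = 2 * u) →
    (w * derivative v - derivative w * v = -(2 * v)) →
    (u * derivative v - derivative u * v = w) →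
    (Submodule.span K ({u, w, v} : Set K[X]) = Submodule.span K ({1, X, X^2} : Set K[X])) ∧
    ∀ a b c' : K, C a * u + C b * w + C c' * v = 0 → a = 0 ∧ b = 0 ∧ c' = 0 := by
  intro N
  induction N with
  | zero =>
    intro u v w hN hu hv hw R1 R2 R3
    rcases eq_or_ne u.natDegree v.natDegree with heq | hne
    · -- contradiction: all degrees 0
      exfalso
      have W2 := W2_lemma u v w R1 R2 R3
      have h4 : ((4:K[X])) = C 4 := (map_ofNat C 4).symm
      have hdeg : 2 * w.natDegree = u.natDegree + v.natDegree := by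
        have hW2' : w^2 = -(4 * (u*v)) := by linear_combination W2
        have := congrArg natDegree hW2'
        rwa [natDegree_pow, natDegree_neg, h4, natDegree_C_mul (by norm_num : (4:K) ≠ 0),
          natDegree_mul hu hv] at this
      have hm0 : w.natDegree = 0 := by omega
      have hn0 : u.natDegree = 0 := by omega
      have hk0 : v.natDegree = 0 := by omega
      have hdu : derivative u = 0 := by
        rw [eq_C_of_natDegree_eq_zero hn0, derivative_C]
      have hdv : derivative v = 0 := by
        rw [eq_C_of_natDegree_eq_zero hk0, derivative_C]
      rw [hdu, hdv] at R3
      simp at R3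
      exact hw R3.symm
    · exact classify_forms_path u v w hu hv hw R1 R2 R3 hne
  | succ N ih =>
    intro u v w hN hu hv hw R1 R2 R3
    rcases eq_or_ne u.natDegree v.natDegree with heq | hne
    swap
    · exact classify_forms_path u v w hu hv hw R1 R2 R3 hne
    -- reduction step
    have W2 := W2_lemma u v w R1 R2 R3
    have h4 : ((4:K[X])) = C 4 := (map_ofNat C 4).symm
    have hdeg : 2 * w.natDegree = u.natDegree + v.natDegree := by
      have hW2' : w^2 = -(4 * (u*v)) := by linear_combination W2
      have := congrArg natDegree hW2'
      rwa [natDegree_pow, natDegree_neg, h4, natDegree_C_mul (by norm_num : (4:K) ≠ 0),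
        natDegree_mul hu hv] at this
    have hnm : u.natDegree = w.natDegree := by omega
    have hm1 : 1 ≤ w.natDegree := by
      by_contra hcon
      have hm0 : w.natDegree = 0 := by omega
      have hn0 : u.natDegree = 0 := by omega
      have hk0 : v.natDegree = 0 := by omega
      have hdu : derivative u = 0 := by
        rw [eq_C_of_natDegree_eq_zero hn0, derivative_C]
      have hdv : derivative v = 0 := by
        rw [eq_C_of_natDegree_eq_zero hk0, derivative_C]
      rw [hdu, hdv] at R3
      simp at R3
      exact hw R3.symm
    have hlu : u.leadingCoeff ≠ 0 := leadingCoeff_ne_zero.mpr hu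
    set s := w.leadingCoeff / (2 * u.leadingCoeff) with hsdef
    -- new triple
    have dws : derivative w - C (2*s) * derivative u = derivative (w - C (2*s) * u) := by
      simp only [derivative_sub, derivative_C_mul]
    have dvs : derivative v + C s * derivative w - C (s^2) * derivative u
        = derivative (v + C s * w - C (s^2) * u) := by
      simp only [derivative_sub, derivative_add, derivative_C_mul]
    have R1n : (w - C (2*s) * u) * derivative u
        - (derivative (w - C (2*s) * u)) * u = 2 * u := by
      rw [← dws]; simp only [C_mul, C_pow, map_ofNat]; linear_combination R1
    have R2n : (w - C (2*s) * u) * derivative (v + C s * w - C (s^2) * u)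
        - (derivative (w - C (2*s) * u)) * (v + C s * w - C (s^2) * u)
        = -(2 * (v + C s * w - C (s^2) * u)) := by
      rw [← dws, ← dvs]; simp only [C_mul, C_pow, map_ofNat]; linear_combination R2 + (C s)^2 * R1 - (2 * C s) * R3
    have R3n : u * derivative (v + C s * w - C (s^2) * u)
        - derivative u * (v + C s * w - C (s^2) * u) = w - C (2*s) * u := by
      rw [← dvs]; simp only [C_mul, C_pow, map_ofNat]; linear_combination R3 - C s * R1
    have hw2 : w - C (2*s) * u ≠ 0 := by
      intro h0
      have hd0 : derivative (w - C (2*s) * u) = 0 := by rw [h0]; simp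
      rw [hd0, h0] at R1n
      simp only [zero_mul, mul_zero, sub_zero, sub_self] at R1n
      have h2u : (2:K[X]) * u = 0 := R1n.symm
      rcases mul_eq_zero.mp h2u with h | h
      · norm_num at h
      · exact hu h
    have hv2 : v + C s * w - C (s^2) * u ≠ 0 := by
      intro h0
      have hd0 : derivative (v + C s * w - C (s^2) * u) = 0 := by rw [h0]; simp
      rw [hd0, h0] at R3n
      simp only [zero_mul, mul_zero, sub_zero, sub_self] at R3n
      exact hw2 R3n.symm
    have hwdeg : (w - C (2*s) * u).natDegree < w.natDegree := by
      have hle : (w - C (2*s) * u).natDegree ≤ w.natDegree :=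
        (natDegree_sub_le _ _).trans
          (max_le le_rfl ((natDegree_C_mul_le _ _).trans (le_of_eq hnm)))
      have hco : (w - C (2*s) * u).coeff w.natDegree = 0 := by
        rw [coeff_sub, coeff_C_mul, ← leadingCoeff, show w.natDegree = u.natDegree from hnm.symm]
        rw [← leadingCoeff, hsdef]
        field_simp
        ring
      rcases lt_or_eq_of_le hle with h | h
      · exact h
      · exfalso
        apply hw2
        rw [← leadingCoeff_eq_zero, leadingCoeff, h, hco]
    obtain ⟨spanEq2, indep2⟩ := ih u (v + C s * w - C (s^2) * u) (w - C (2*s) * u)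
      (by omega) hu hv2 hw2 R1n R2n R3n
    constructor
    · rw [← spanEq2]
      have mu1 : u ∈ Submodule.span K ({u, w - C (2*s) * u, v + C s * w - C (s^2) * u} : Set K[X]) :=
        Submodule.subset_span (Set.mem_insert _ _)
      have mw1 : w - C (2*s) * u
          ∈ Submodule.span K ({u, w - C (2*s) * u, v + C s * w - C (s^2) * u} : Set K[X]) :=
        Submodule.subset_span (Set.mem_insert_of_mem _ (Set.mem_insert _ _))
      have mv1 : v + C s * w - C (s^2) * u
          ∈ Submodule.span K ({u, w - C (2*s) * u, v + C s * w - C (s^2) * u} : Set K[X]) :=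
        Submodule.subset_span (Set.mem_insert_of_mem _ (Set.mem_insert_of_mem _ (Set.mem_singleton _)))
      have mu2 : u ∈ Submodule.span K ({u, w, v} : Set K[X]) :=
        Submodule.subset_span (Set.mem_insert _ _)
      have mw2 : w ∈ Submodule.span K ({u, w, v} : Set K[X]) :=
        Submodule.subset_span (Set.mem_insert_of_mem _ (Set.mem_insert _ _))
      have mv2 : v ∈ Submodule.span K ({u, w, v} : Set K[X]) :=
        Submodule.subset_span (Set.mem_insert_of_mem _ (Set.mem_insert_of_mem _ (Set.mem_singleton _)))
      apply le_antisymm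
      · rw [Submodule.span_le, Set.insert_subset_iff, Set.insert_subset_iff,
          Set.singleton_subset_iff]
        refine ⟨mu1, ?_, ?_⟩
        · have hm := add_mem mw1 (C_mul_mem _ _ mu1 (2*s))
          have he : w = (w - C (2*s) * u) + C (2*s) * u := by ring
          rwa [← he] at hm
        · have hm := sub_mem (sub_mem mv1 (C_mul_mem _ _ mw1 s)) (C_mul_mem _ _ mu1 (s^2))
          have he : v = (v + C s * w - C (s^2) * u) - C s * (w - C (2*s) * u) - C (s^2) * u := by
            simp only [C_mul, C_pow, map_ofNat]; ring
          rwa [← he] at hm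
      · rw [Submodule.span_le, Set.insert_subset_iff, Set.insert_subset_iff,
          Set.singleton_subset_iff]
        exact ⟨mu2, sub_mem mw2 (C_mul_mem _ _ mu2 _),
          sub_mem (add_mem mv2 (C_mul_mem _ _ mw2 _)) (C_mul_mem _ _ mu2 _)⟩
    · intro a b c' h
      have h2 : C (a + 2*s*b - s^2*c') * u + C (b - s*c') * (w - C (2*s) * u)
          + C c' * (v + C s * w - C (s^2) * u) = 0 := by
        simp only [C_add, C_sub, C_mul, C_pow, map_ofNat]
        linear_combination h
      obtain ⟨e1, e2, e3⟩ := indep2 _ _ _ h2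
      subst e3
      have hb : b = 0 := by simpa using e2
      subst hb
      have ha : a = 0 := by simpa using e1
      exact ⟨ha, rfl, rfl⟩

def sl2e : ↥(sl (Fin 2) K) := ⟨!![0,1;0,0], by
  show _ ∈ LinearMap.ker _
  simp [Matrix.traceLinearMap, Matrix.trace_fin_two]⟩

def sl2h : ↥(sl (Fin 2) K) := ⟨!![1,0;0,-1], by
  show _ ∈ LinearMap.ker _
  simp [Matrix.traceLinearMap, Matrix.trace_fin_two]⟩

def sl2f : ↥(sl (Fin 2) K) := ⟨!![0,0;1,0], by
  show _ ∈ LinearMap.ker _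
  simp [Matrix.traceLinearMap, Matrix.trace_fin_two]⟩

lemma sl2he : ⁅(sl2h : ↥(sl (Fin 2) K)), sl2e⁆ = (2:K) • (sl2e : ↥(sl (Fin 2) K)) := by
  apply Subtype.ext
  show (sl2h:↥(sl (Fin 2) K)).val * sl2e.val - sl2e.val * sl2h.val = _
  ext i j
  fin_cases i <;> fin_cases j <;>
    simp [sl2e, sl2h, Matrix.mul_apply, Fin.sum_univ_two] <;> norm_num

lemma sl2hf : ⁅(sl2h : ↥(sl (Fin 2) K)), sl2f⁆ = (-2:K) • (sl2f : ↥(sl (Fin 2) K)) := by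
  apply Subtype.ext
  show (sl2h:↥(sl (Fin 2) K)).val * sl2f.val - sl2f.val * sl2h.val = _
  ext i j
  fin_cases i <;> fin_cases j <;>
    simp [sl2f, sl2h, Matrix.mul_apply, Fin.sum_univ_two] <;> norm_num

lemma sl2ef : ⁅(sl2e : ↥(sl (Fin 2) K)), sl2f⁆ = (sl2h : ↥(sl (Fin 2) K)) := by
  apply Subtype.ext
  show (sl2e:↥(sl (Fin 2) K)).val * sl2f.val - sl2f.val * sl2e.val = _
  ext i j
  fin_cases i <;> fin_cases j <;>
    simp [sl2e, sl2f, sl2h, Matrix.mul_apply, Fin.sum_univ_two]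

lemma sl2decomp (X : ↥(sl (Fin 2) K)) :
    X = X.val 0 1 • sl2e + X.val 0 0 • sl2h + X.val 1 0 • sl2f := by
  have htr : Matrix.trace (X.val) = 0 := X.2
  rw [Matrix.trace_fin_two] at htr
  apply Subtype.ext
  show X.val = _
  ext i j
  fin_cases i <;> fin_cases j <;> simp [sl2e, sl2h, sl2f] <;> linear_combination htr

lemma action_props (θ : ↥(sl (Fin 2) K) →ₗ[K] Polynomial K)
    (hact : ∀ X Y, θ ⁅X, Y⁆ = θ X * derivative (θ Y) - derivative (θ X) * θ Y)
    (hnt : θ ≠ 0) :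
    Function.Injective θ ∧
      LinearMap.range θ = Submodule.span K ({1, X, X^2} : Set K[X]) := by
  set u := θ sl2e with hu
  set w := θ sl2h with hw
  set v := θ sl2f with hv
  have R1 : w * derivative u - derivative w * u = 2 * u := by
    have h := hact sl2h sl2e
    rw [sl2he, map_smul] at h
    rw [← h, smul_eq_C_mul, map_ofNat]
  have R2 : w * derivative v - derivative w * v = -(2 * v) := by
    have h := hact sl2h sl2f
    rw [sl2hf, map_smul] at h
    rw [← h, smul_eq_C_mul, map_neg, map_ofNat, neg_mul]
  have R3 : u * derivative v - derivative u * v = w := by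
    have h := hact sl2e sl2f
    rw [sl2ef] at h
    exact h.symm
  have hdecomp : ∀ Z : ↥(sl (Fin 2) K),
      θ Z = C (Z.val 0 1) * u + C (Z.val 0 0) * w + C (Z.val 1 0) * v := by
    intro Z
    conv_lhs => rw [sl2decomp Z]
    rw [map_add, map_add, map_smul, map_smul, map_smul,
      smul_eq_C_mul, smul_eq_C_mul, smul_eq_C_mul]
  have hw0 : w ≠ 0 := by
    intro h0
    rw [h0] at R1 R2
    simp only [zero_mul, derivative_zero, sub_zero, sub_self] at R1 R2
    have hu0 : u = 0 := by
      rcases mul_eq_zero.mp R1.symm with h | h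
      · norm_num at h
      · exact h
    have hv0 : v = 0 := by
      have : (2:K[X]) * v = 0 := by linear_combination R2
      rcases mul_eq_zero.mp this with h | h
      · norm_num at h
      · exact h
    apply hnt
    apply LinearMap.ext
    intro Z
    rw [hdecomp Z, hu0, hv0, h0]
    simp
  have hu0 : u ≠ 0 := by
    intro h0
    rw [h0] at R3
    simp only [zero_mul, derivative_zero, sub_zero, mul_zero, sub_self] at R3
    exact hw0 R3.symm
  have hv0 : v ≠ 0 := by
    intro h0
    rw [h0] at R3
    simp only [zero_mul, derivative_zero, sub_zero, mul_zero, sub_self] at R3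
    exact hw0 R3.symm
  obtain ⟨spanEq, indep⟩ := classify_aux w.natDegree u v w le_rfl hu0 hv0 hw0 R1 R2 R3
  constructor
  · intro X Y hXY
    have hker : ∀ Z : ↥(sl (Fin 2) K), θ Z = 0 → Z = 0 := by
      intro Z hZ
      rw [hdecomp Z] at hZ
      obtain ⟨h1, h2, h3⟩ := indep _ _ _ hZ
      have hd := sl2decomp Z
      rw [h1, h2, h3] at hd
      simpa using hd
    have := hker (X - Y) (by rw [map_sub, hXY, sub_self])
    exact sub_eq_zero.mp this
  · apply le_antisymm
    · rintro p hp
      obtain ⟨Z, rfl⟩ := hp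
      rw [hdecomp Z, ← spanEq]
      have mu : u ∈ Submodule.span K ({u, w, v} : Set K[X]) :=
        Submodule.subset_span (Set.mem_insert _ _)
      have mw : w ∈ Submodule.span K ({u, w, v} : Set K[X]) :=
        Submodule.subset_span (Set.mem_insert_of_mem _ (Set.mem_insert _ _))
      have mv : v ∈ Submodule.span K ({u, w, v} : Set K[X]) :=
        Submodule.subset_span (Set.mem_insert_of_mem _ (Set.mem_insert_of_mem _ (Set.mem_singleton _)))
      exact add_mem (add_mem (C_mul_mem _ _ mu _) (C_mul_mem _ _ mw _)) (C_mul_mem _ _ mv _)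
    · rw [← spanEq, Submodule.span_le, Set.insert_subset_iff, Set.insert_subset_iff,
        Set.singleton_subset_iff]
      exact ⟨LinearMap.mem_range.mpr ⟨sl2e, rfl⟩, LinearMap.mem_range.mpr ⟨sl2h, rfl⟩,
        LinearMap.mem_range.mpr ⟨sl2f, rfl⟩⟩

end Preliminaries

/-- Let `θ₁, θ₂` be two nontrivial actions of `sl(2,K)` on `K[t]`, and let
`E¹, E²` denote the crossed products `K[t] ⊗ sl(2,K)` built from `θ₁` and `θ₂` (with brackets
`br₁, br₂` and anchors `θbar₁, θbar₂`).  Then `E¹` and `E²` are isomorphic as Lie Rinehart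
algebras: there exists a `K[t]`-linear Lie algebra isomorphism `Φ : E¹ → E²` such that
`θbar₂ ∘ Φ = θbar₁`. -/
theorem sl2_crossedProducts_isomorphic {K : Type*} [RCLike K]
    (θ₁ θ₂ : ↥(sl (Fin 2) K) →ₗ[K] Polynomial K)
    (hact₁ : ∀ X Y, θ₁ ⁅X, Y⁆ = θ₁ X * derivative (θ₁ Y) - derivative (θ₁ X) * θ₁ Y)
    (hact₂ : ∀ X Y, θ₂ ⁅X, Y⁆ = θ₂ X * derivative (θ₂ Y) - derivative (θ₂ X) * θ₂ Y)
    (hnt₁ : θ₁ ≠ 0) (hnt₂ : θ₂ ≠ 0)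
    (θbar₁ θbar₂ : Polynomial K ⊗[K] ↥(sl (Fin 2) K) →ₗ[Polynomial K] Polynomial K)
    (hθbar₁ : ∀ (a : Polynomial K) (X : ↥(sl (Fin 2) K)), θbar₁ (a ⊗ₜ X) = a * θ₁ X)
    (hθbar₂ : ∀ (a : Polynomial K) (X : ↥(sl (Fin 2) K)), θbar₂ (a ⊗ₜ X) = a * θ₂ X)
    (br₁ br₂ : Polynomial K ⊗[K] ↥(sl (Fin 2) K) →ₗ[K]
      Polynomial K ⊗[K] ↥(sl (Fin 2) K) →ₗ[K] Polynomial K ⊗[K] ↥(sl (Fin 2) K))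
    (hbr₁ : ∀ (a b : Polynomial K) (X Y : ↥(sl (Fin 2) K)),
      br₁ (a ⊗ₜ X) (b ⊗ₜ Y) =
        (a * b) ⊗ₜ ⁅X, Y⁆ + (a * (θ₁ X * derivative b)) ⊗ₜ Y - (b * (θ₁ Y * derivative a)) ⊗ₜ X)
    (hbr₂ : ∀ (a b : Polynomial K) (X Y : ↥(sl (Fin 2) K)),
      br₂ (a ⊗ₜ X) (b ⊗ₜ Y) =
        (a * b) ⊗ₜ ⁅X, Y⁆ + (a * (θ₂ X * derivative b)) ⊗ₜ Y - (b * (θ₂ Y * derivative a)) ⊗ₜ X) :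
    ∃ Φ : (Polynomial K ⊗[K] ↥(sl (Fin 2) K)) ≃ₗ[Polynomial K]
        (Polynomial K ⊗[K] ↥(sl (Fin 2) K)),
      (∀ u v, Φ (br₁ u v) = br₂ (Φ u) (Φ v)) ∧ (∀ u, θbar₂ (Φ u) = θbar₁ u) := by
  obtain ⟨inj₁, range₁⟩ := action_props θ₁ hact₁ hnt₁
  obtain ⟨inj₂, range₂⟩ := action_props θ₂ hact₂ hnt₂
  have hrange : LinearMap.range θ₁ = LinearMap.range θ₂ := range₁.trans range₂.symm
  let φ : ↥(sl (Fin 2) K) ≃ₗ[K] ↥(sl (Fin 2) K) :=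
    (LinearEquiv.ofInjective θ₁ inj₁) ≪≫ₗ (LinearEquiv.ofEq _ _ hrange) ≪≫ₗ
      (LinearEquiv.ofInjective θ₂ inj₂).symm
  have hφ : ∀ X, θ₂ (φ X) = θ₁ X := by
    intro X
    have key : ∀ z : LinearMap.range θ₂, θ₂ ((LinearEquiv.ofInjective θ₂ inj₂).symm z) = z := by
      intro z
      conv_rhs => rw [← (LinearEquiv.ofInjective θ₂ inj₂).apply_symm_apply z]
      rw [LinearEquiv.ofInjective_apply]
    show θ₂ ((LinearEquiv.ofInjective θ₂ inj₂).symm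
      (LinearEquiv.ofEq _ _ hrange (LinearEquiv.ofInjective θ₁ inj₁ X))) = θ₁ X
    rw [key, LinearEquiv.coe_ofEq_apply, LinearEquiv.ofInjective_apply]
  have hφbr : ∀ X Y, φ ⁅X, Y⁆ = ⁅φ X, φ Y⁆ := by
    intro X Y
    apply inj₂
    rw [hφ, hact₁, hact₂ (φ X) (φ Y), hφ, hφ]
  let Φ := LinearEquiv.baseChange K (Polynomial K) _ _ φ
  have hΦt : ∀ (a : Polynomial K) (X : ↥(sl (Fin 2) K)), Φ (a ⊗ₜ X) = a ⊗ₜ φ X := by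
    intro a X
    rfl
  have hΦ0 : Φ (0 : Polynomial K ⊗[K] ↥(sl (Fin 2) K)) = 0 := Φ.map_zero
  have hΦadd : ∀ x y : Polynomial K ⊗[K] ↥(sl (Fin 2) K), Φ (x + y) = Φ x + Φ y :=
    fun x y => Φ.map_add x y
  refine ⟨Φ, ?_, ?_⟩
  · intro p q
    induction p using TensorProduct.induction_on with
    | zero => rw [map_zero, LinearMap.zero_apply, hΦ0, map_zero, LinearMap.zero_apply]
    | add x y hx hy =>
      rw [map_add, LinearMap.add_apply, hΦadd, hx, hy, hΦadd, map_add, LinearMap.add_apply]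
    | tmul a X =>
      induction q using TensorProduct.induction_on with
      | zero => rw [map_zero, hΦ0, map_zero]
      | add x y hx hy => rw [map_add, hΦadd, hx, hy, hΦadd, map_add]
      | tmul b Y =>
        rw [hbr₁, map_sub, Φ.map_add, hΦt, hΦt, hΦt, hΦt, hΦt, hbr₂, hφ, hφ, hφbr]
  · intro p
    induction p using TensorProduct.induction_on with
    | zero => rw [hΦ0, map_zero, map_zero]
    | add x y hx hy => rw [hΦadd, map_add, hx, hy, map_add]
    | tmul a X => rw [hΦt, hθbar₂, hθbar₁, hφ]
end

section
/- For any two nontrivial Lie algebra morphisms θ₁, θ₂ : sl(2,K) → Der(K[t]), there exists a Lie algebra automorphism Π of sl(2,K) such that θ₁ = θ₂ ∘ Π. -/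
open Polynomial LieAlgebra.SpecialLinear

set_option linter.unusedSectionVars false
set_option linter.unnecessarySimpa false
set_option linter.unreachableTactic false
set_option linter.unusedTactic false
set_option linter.unnecessarySeqFocus false
set_option maxHeartbeats 1000000

namespace Sl2ConjAux


variable {L : Type*} [Field L] [CharZero L]

lemma natDegree_deriv_eq {A : L[X]} (h : A.natDegree ≠ 0) :
    A.derivative.natDegree = A.natDegree - 1 :=
  natDegree_eq_of_degree_eq_some (degree_derivative_eq A (Nat.pos_of_ne_zero h))

lemma coeff_deriv_mul {A : L[X]} (B : L[X]) (hA : A.natDegree ≠ 0) :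
    (A.derivative * B).coeff (A.natDegree - 1 + B.natDegree)
      = (A.natDegree : L) * A.leadingCoeff * B.leadingCoeff := by
  have h1 := coeff_mul_degree_add_degree A.derivative B
  rw [natDegree_deriv_eq hA] at h1
  rw [h1]
  congr 1
  rw [leadingCoeff, natDegree_deriv_eq hA, coeff_derivative]
  have h2 : A.natDegree - 1 + 1 = A.natDegree := by omega
  have h3 : ((A.natDegree - 1 : ℕ) : L) = (A.natDegree : L) - 1 := by
    have := Nat.cast_sub (R := L) (Nat.one_le_iff_ne_zero.mpr hA)
    simpa using this
  rw [h2, leadingCoeff, h3]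
  ring

/-- If `A, B` are monic and their Wronskian is a nonzero constant, then both have degree ≤ 1. -/
lemma wronskian_bound {A B : L[X]}
    (hA : A.Monic) (hB : B.Monic)
    (hW0 : A.derivative * B - A * B.derivative ≠ 0)
    (hWd : (A.derivative * B - A * B.derivative).natDegree = 0) :
    A.natDegree ≤ 1 ∧ B.natDegree ≤ 1 := by
  set W := A.derivative * B - A * B.derivative with hW
  by_cases hdA : A.natDegree = 0
  · have hA1 : A = 1 := (hA.natDegree_eq_zero).mp hdA
    refine ⟨by omega, ?_⟩
    by_cases hdB : B.natDegree = 0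
    · omega
    · have hW' : W = -B.derivative := by rw [hW, hA1]; simp
      have h2 : B.derivative.natDegree = B.natDegree - 1 := natDegree_deriv_eq hdB
      rw [hW', natDegree_neg, h2] at hWd
      omega
  · by_cases hdB : B.natDegree = 0
    · have hB1 : B = 1 := (hB.natDegree_eq_zero).mp hdB
      refine ⟨?_, by omega⟩
      have hW' : W = A.derivative := by rw [hW, hB1]; simp
      have h2 : A.derivative.natDegree = A.natDegree - 1 := natDegree_deriv_eq hdA
      rw [hW', h2] at hWd
      omega
    · by_cases heq : A.natDegree = B.natDegree
      · -- equal degrees: consider g = B - A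
        set g := B - A with hg
        have hW2 : W = A.derivative * g - A * g.derivative := by
          rw [hW, hg]; simp only [derivative_sub]; ring
        have hgne : g ≠ 0 := by
          intro h0
          rw [hW2, h0] at hW0; simp at hW0
        have hgd : g.natDegree < A.natDegree := by
          rcases lt_or_ge g.natDegree A.natDegree with h | h
          · exact h
          · exfalso
            have hle : g.natDegree ≤ A.natDegree := by
              rw [hg]
              have := natDegree_sub_le B A
              omega
            have hEq : g.natDegree = A.natDegree := le_antisymm hle h
            have : g.leadingCoeff = 0 := by
              rw [leadingCoeff, hEq, hg, coeff_sub]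
              have := hA.coeff_natDegree
              have h5 : B.coeff A.natDegree = 1 := by
                rw [heq]; exact hB.coeff_natDegree
              rw [h5, this]; ring
            exact hgne (leadingCoeff_eq_zero.mp this)
        by_cases hdg : g.natDegree = 0
        · -- g constant: W = g * A', so natDegree A - 1 = 0
          obtain ⟨γ, hγ⟩ := natDegree_eq_zero.mp hdg
          have hγ0 : γ ≠ 0 := by
            intro h0; rw [h0] at hγ; simp at hγ; exact hgne hγ.symm
          have hW3 : W = C γ * A.derivative := by
            rw [hW2, ← hγ]; simp [mul_comm]
          have : W.natDegree = A.natDegree - 1 := by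
            rw [hW3, natDegree_C_mul hγ0, natDegree_deriv_eq hdA]
          constructor <;> omega
        · exfalso
          have hc1 := coeff_deriv_mul (A := A) g hdA
          have hc2 := coeff_deriv_mul (A := g) A hdg
          have hidx : g.natDegree - 1 + A.natDegree = A.natDegree - 1 + g.natDegree := by omega
          have hcoeff : W.coeff (A.natDegree - 1 + g.natDegree)
              = ((A.natDegree : L) - g.natDegree) * g.leadingCoeff := by
            rw [hW2, coeff_sub, hc1, mul_comm A g.derivative, ← hidx, hc2,
              hA.leadingCoeff]
            ring
          have hne : W.coeff (A.natDegree - 1 + g.natDegree) ≠ 0 := by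
            rw [hcoeff]
            refine mul_ne_zero ?_ (leadingCoeff_ne_zero.mpr hgne)
            intro h
            have : (A.natDegree : L) = (g.natDegree : L) := by
              have := sub_eq_zero.mp h; exact this
            exact absurd (Nat.cast_injective this) (by omega)
          have := le_natDegree_of_ne_zero hne
          omega
      · exfalso
        have hc1 := coeff_deriv_mul (A := A) B hdA
        have hc2 := coeff_deriv_mul (A := B) A hdB
        have hidx : B.natDegree - 1 + A.natDegree = A.natDegree - 1 + B.natDegree := by omega
        have hcoeff : W.coeff (A.natDegree - 1 + B.natDegree)
            = (A.natDegree : L) - (B.natDegree : L) := by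
          rw [hW, coeff_sub, hc1, mul_comm A B.derivative, ← hidx, hc2,
            hA.leadingCoeff, hB.leadingCoeff]
          ring
        have hne : W.coeff (A.natDegree - 1 + B.natDegree) ≠ 0 := by
          rw [hcoeff]
          intro h
          exact heq (Nat.cast_injective (sub_eq_zero.mp h))
        have := le_natDegree_of_ne_zero hne
        omega


variable {L : Type*} [Field L] [CharZero L]

section RootFacts

variable {E F H : L[X]}

-- evaluation consequence of H² = -4EF
lemma fact_root_H (hsq : H * H = C (-4) * (E * F)) {r : L}
    (h : E.eval r = 0 ∨ F.eval r = 0) : H.eval r = 0 := by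
  have := congrArg (eval r) hsq
  simp only [eval_mul, eval_C] at this
  rcases h with h | h <;>
  · rw [h] at this
    simp only [mul_zero, zero_mul] at this
    exact mul_self_eq_zero.mp this

lemma mult_H_one (hE : E ≠ 0) (hH : H ≠ 0)
    (r1 : H * derivative E - derivative H * E = 2 * E)
    {r : L} (hr : H.eval r = 0) : rootMultiplicity r H = 1 := by
  set α := rootMultiplicity r H with hα
  set ε := rootMultiplicity r E with hε
  have hα1 : 1 ≤ α := (rootMultiplicity_pos hH).mpr hr
  have d1 : (X - C r) ^ (α - 1 + ε) ∣ derivative H * E := by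
    rw [pow_add]
    apply mul_dvd_mul
    · rcases eq_or_ne (derivative H) 0 with h0 | h0
      · rw [h0]; exact dvd_zero _
      · have : rootMultiplicity r (derivative H) = α - 1 :=
          derivative_rootMultiplicity_of_root hr
        rw [← this]; exact pow_rootMultiplicity_dvd _ _
    · exact pow_rootMultiplicity_dvd _ _
  have d2 : (X - C r) ^ (α - 1 + ε) ∣ H * derivative E := by
    have step : (X - C r) ^ (α + (ε - 1)) ∣ H * derivative E := by
      rw [pow_add]
      apply mul_dvd_mul
      · exact pow_rootMultiplicity_dvd _ _
      · rcases eq_or_ne (derivative E) 0 with h0 | h0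
        · rw [h0]; exact dvd_zero _
        · rcases Nat.eq_zero_or_pos ε with h1 | h1
          · rw [h1]; simp
          · have hre : E.eval r = 0 := (rootMultiplicity_pos hE).mp (by omega)
            have : rootMultiplicity r (derivative E) = ε - 1 :=
              derivative_rootMultiplicity_of_root hre
            rw [← this]; exact pow_rootMultiplicity_dvd _ _
    exact dvd_trans (pow_dvd_pow _ (by omega)) step
  have d3 : (X - C r) ^ (α - 1 + ε) ∣ 2 * E := by
    rw [← r1]; exact dvd_sub d2 d1
  have h2E : (2 : L[X]) * E ≠ 0 := by
    apply mul_ne_zero _ hE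
    norm_num
  have h5 : rootMultiplicity r ((2 : L[X]) * E) = ε := by
    rw [rootMultiplicity_mul h2E]
    have : rootMultiplicity r (2 : L[X]) = 0 := by
      apply rootMultiplicity_eq_zero
      simp [IsRoot]
    omega
  have := (le_rootMultiplicity_iff h2E).mpr d3
  rw [h5] at this
  omega

end RootFacts

section More
variable {E F H : L[X]}

lemma mult_sum_two (hE : E ≠ 0) (hF : F ≠ 0) (hH : H ≠ 0)
    (hsq : H * H = C (-4) * (E * F)) {r : L} (hα : rootMultiplicity r H = 1) :
    rootMultiplicity r E + rootMultiplicity r F = 2 := by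
  have h1 : rootMultiplicity r (H * H) = 2 := by
    rw [rootMultiplicity_mul (mul_ne_zero hH hH), hα]
  have hC : (C (-4) : L[X]) ≠ 0 := by
    simpa using (by norm_num : (-4 : L) ≠ 0)
  have h2 : rootMultiplicity r (C (-4) * (E * F)) =
      rootMultiplicity r E + rootMultiplicity r F := by
    rw [rootMultiplicity_mul (mul_ne_zero hC (mul_ne_zero hE hF)),
      rootMultiplicity_mul (mul_ne_zero hE hF)]
    have : rootMultiplicity r (C (-4) : L[X]) = 0 := by
      apply rootMultiplicity_eq_zero
      simp only [IsRoot, eval_C]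
      norm_num
    omega
  rw [hsq, h2] at h1
  exact h1

-- if E vanishes at r (and H does), then E has a double root
lemma E_double_root (hE : E ≠ 0)
    (r1 : H * derivative E - derivative H * E = 2 * E ∨
      H * derivative E - derivative H * E = -(2 * E))
    {r : L} (hrH : H.eval r = 0) (hrE : E.eval r = 0) :
    2 ≤ rootMultiplicity r E := by
  -- differentiate r1 and evaluate at r to get E'(r) = 0
  have hE' : (derivative E).eval r = 0 := by
    rcases r1 with r1 | r1
    · have dr1 := congrArg derivative r1
      simp only [derivative_mul, derivative_sub, derivative_ofNat, derivative_neg] at dr1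
      have hev := congrArg (eval r) dr1
      simp only [eval_add, eval_sub, eval_mul, eval_ofNat, eval_zero, eval_neg] at hev
      rw [hrH, hrE] at hev
      linear_combination (-1/2 : L) * hev
    · have dr1 := congrArg derivative r1
      simp only [derivative_mul, derivative_sub, derivative_ofNat, derivative_neg] at dr1
      have hev := congrArg (eval r) dr1
      simp only [eval_add, eval_sub, eval_mul, eval_ofNat, eval_zero, eval_neg] at hev
      rw [hrH, hrE] at hev
      linear_combination (1/2 : L) * hev
  -- now (X - C r)^2 ∣ E
  obtain ⟨u, hu⟩ := dvd_iff_isRoot.mpr hrE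
  have hur : u.eval r = 0 := by
    have := congrArg (eval r) (congrArg derivative hu)
    simp only [derivative_mul, derivative_sub, derivative_X, derivative_C, sub_zero, one_mul,
      eval_add, eval_mul, eval_sub, eval_X, eval_C, sub_self, zero_mul, zero_add] at this
    rw [hE'] at this
    simpa using this.symm
  obtain ⟨v, hv⟩ := dvd_iff_isRoot.mpr hur
  rw [le_rootMultiplicity_iff hE]
  exact ⟨v, by rw [hu, hv]; ring⟩

end More

section Main
variable [IsAlgClosed L]

lemma key_deg {E F H : L[X]} (hE : E ≠ 0) (hF : F ≠ 0) (hH : H ≠ 0)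
    (r1 : H * derivative E - derivative H * E = 2 * E)
    (r2 : H * derivative F - derivative H * F = -(2 * F))
    (r3 : E * derivative F - derivative E * F = H) :
    E.natDegree ≤ 2 ∧ F.natDegree ≤ 2 ∧ H.natDegree ≤ 2 := by
  classical
  -- H² = -4 E F
  have hsq : H * H = C (-4) * (E * F) := by
    have : (C (-4) : L[X]) = -4 := by
      simp only [map_neg, map_ofNat]
    rw [this]
    linear_combination -H * r3 - F * r1 + E * r2
  have r2' : H * derivative F - derivative H * F = 2 * F ∨
      H * derivative F - derivative H * F = -(2 * F) := Or.inr r2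
  -- the root dichotomy at roots of H
  have hrootH : ∀ r : L, H.eval r = 0 → rootMultiplicity r H = 1 :=
    fun r hr => mult_H_one hE hH r1 hr
  -- multiplicity of F version of mult_H_one not needed
  have hsum : ∀ r : L, H.eval r = 0 →
      rootMultiplicity r E + rootMultiplicity r F = 2 :=
    fun r hr => mult_sum_two hE hF hH hsq (hrootH r hr)
  have hFdouble : ∀ r : L, H.eval r = 0 → F.eval r = 0 → 2 ≤ rootMultiplicity r F := by
    intro r hrH hrF
    exact E_double_root hF (Or.inr r2) hrH hrF
  have hEdouble : ∀ r : L, H.eval r = 0 → E.eval r = 0 → 2 ≤ rootMultiplicity r E :=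
    fun r hrH hrE => E_double_root hE (Or.inl r1) hrH hrE
  -- dichotomy
  have hdichoE : ∀ r : L, H.eval r = 0 → E.eval r = 0 →
      rootMultiplicity r E = 2 ∧ F.eval r ≠ 0 := by
    intro r hrH hrE
    have h1 := hsum r hrH
    have h2 := hEdouble r hrH hrE
    refine ⟨by omega, ?_⟩
    intro hrF
    have := (rootMultiplicity_pos hF).mpr hrF
    omega
  have hdichoF : ∀ r : L, H.eval r = 0 → E.eval r ≠ 0 →
      rootMultiplicity r F = 2 ∧ F.eval r = 0 := by
    intro r hrH hrE
    have h1 := hsum r hrH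
    have h2 : rootMultiplicity r E = 0 := rootMultiplicity_eq_zero hrE
    have h3 : F.eval r = 0 := by
      by_contra h
      have := rootMultiplicity_eq_zero (p := F) h
      omega
    exact ⟨by omega, h3⟩
  -- define the finsets and A, B
  set SE : Finset L := H.roots.toFinset.filter (fun r => E.eval r = 0) with hSE
  set SF : Finset L := H.roots.toFinset.filter (fun r => E.eval r ≠ 0) with hSF
  have memSE : ∀ a : L, a ∈ SE ↔ (H.eval a = 0 ∧ E.eval a = 0) := by
    intro a
    rw [hSE]
    simp only [Finset.mem_filter, Multiset.mem_toFinset, mem_roots', ne_eq, IsRoot.def]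
    tauto
  have memSF : ∀ a : L, a ∈ SF ↔ (H.eval a = 0 ∧ E.eval a ≠ 0) := by
    intro a
    rw [hSF]
    simp only [Finset.mem_filter, Multiset.mem_toFinset, mem_roots', ne_eq, IsRoot.def]
    tauto
  set A : L[X] := (SE.val.map (fun r => X - C r)).prod with hA
  set B : L[X] := (SF.val.map (fun r => X - C r)).prod with hB
  have hAmonic : A.Monic :=
    monic_multiset_prod_of_monic _ _ (fun r _ => monic_X_sub_C r)
  have hBmonic : B.Monic :=
    monic_multiset_prod_of_monic _ _ (fun r _ => monic_X_sub_C r)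
  have hAdeg : A.natDegree = SE.card := by
    rw [hA, natDegree_multiset_prod_of_monic _ (fun f hf => by
      obtain ⟨a, _, rfl⟩ := Multiset.mem_map.mp hf; exact monic_X_sub_C a)]
    rw [Multiset.map_map]
    simp only [Function.comp_apply, natDegree_X_sub_C]
    rw [Multiset.map_const', Multiset.sum_replicate, smul_eq_mul, mul_one, Finset.card]
  have hBdeg : B.natDegree = SF.card := by
    rw [hB, natDegree_multiset_prod_of_monic _ (fun f hf => by
      obtain ⟨a, _, rfl⟩ := Multiset.mem_map.mp hf; exact monic_X_sub_C a)]
    rw [Multiset.map_map]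
    simp only [Function.comp_apply, natDegree_X_sub_C]
    rw [Multiset.map_const', Multiset.sum_replicate, smul_eq_mul, mul_one, Finset.card]
  -- roots multisets
  have hErootsLem : E.roots = SE.val + SE.val := by
    refine Multiset.ext.mpr (fun a => ?_)
    rw [Multiset.count_add, count_roots]
    by_cases hrE : E.eval a = 0
    · have hrH : H.eval a = 0 := fact_root_H hsq (Or.inl hrE)
      have haSE : a ∈ SE := (memSE a).mpr ⟨hrH, hrE⟩
      have hc : SE.val.count a = 1 := Multiset.count_eq_one_of_mem SE.nodup haSE
      rw [hc, (hdichoE a hrH hrE).1]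
    · have haSE : a ∉ SE := fun h => hrE ((memSE a).mp h).2
      have hc : SE.val.count a = 0 := Multiset.count_eq_zero_of_notMem haSE
      rw [hc, rootMultiplicity_eq_zero hrE]
  have hFrootsLem : F.roots = SF.val + SF.val := by
    refine Multiset.ext.mpr (fun a => ?_)
    rw [Multiset.count_add, count_roots]
    by_cases hrF : F.eval a = 0
    · have hrH : H.eval a = 0 := fact_root_H hsq (Or.inr hrF)
      have hrEne : E.eval a ≠ 0 := by
        intro hrE
        exact (hdichoE a hrH hrE).2 hrF
      have haSF : a ∈ SF := (memSF a).mpr ⟨hrH, hrEne⟩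
      have hc : SF.val.count a = 1 := Multiset.count_eq_one_of_mem SF.nodup haSF
      rw [hc, (hdichoF a hrH hrEne).1]
    · have haSF : a ∉ SF := by
        intro h
        obtain ⟨hrH, hrEne⟩ := (memSF a).mp h
        exact hrF (hdichoF a hrH hrEne).2
      have hc : SF.val.count a = 0 := Multiset.count_eq_zero_of_notMem haSF
      rw [hc, rootMultiplicity_eq_zero hrF]
  have hHrootsLem : H.roots = SE.val + SF.val := by
    refine Multiset.ext.mpr (fun a => ?_)
    rw [Multiset.count_add, count_roots]
    by_cases hrH : H.eval a = 0
    · by_cases hrE : E.eval a = 0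
      · have h1 : SE.val.count a = 1 := Multiset.count_eq_one_of_mem SE.nodup ((memSE a).mpr ⟨hrH, hrE⟩)
        have h2 : SF.val.count a = 0 := Multiset.count_eq_zero_of_notMem
          (fun h => ((memSF a).mp h).2 hrE)
        rw [h1, h2, hrootH a hrH]
      · have h1 : SE.val.count a = 0 := Multiset.count_eq_zero_of_notMem
          (fun h => hrE ((memSE a).mp h).2)
        have h2 : SF.val.count a = 1 := Multiset.count_eq_one_of_mem SF.nodup ((memSF a).mpr ⟨hrH, hrE⟩)
        rw [h1, h2, hrootH a hrH]
    · have h1 : SE.val.count a = 0 := Multiset.count_eq_zero_of_notMem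
        (fun h => hrH ((memSE a).mp h).1)
      have h2 : SF.val.count a = 0 := Multiset.count_eq_zero_of_notMem
        (fun h => hrH ((memSF a).mp h).1)
      rw [h1, h2, rootMultiplicity_eq_zero hrH]
  -- factorizations
  set eC := E.leadingCoeff with heC
  set fC := F.leadingCoeff with hfC
  set cC := H.leadingCoeff with hcC
  have hcardE : E.roots.card = E.natDegree :=
    splits_iff_card_roots.mp (IsAlgClosed.splits E)
  have hcardF : F.roots.card = F.natDegree :=
    splits_iff_card_roots.mp (IsAlgClosed.splits F)
  have hcardH : H.roots.card = H.natDegree :=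
    splits_iff_card_roots.mp (IsAlgClosed.splits H)
  have hE2 : E = C eC * (A * A) := by
    have := C_leadingCoeff_mul_prod_multiset_X_sub_C hcardE
    rw [← this, hErootsLem]
    rw [Multiset.map_add, Multiset.prod_add]
  have hF2 : F = C fC * (B * B) := by
    have := C_leadingCoeff_mul_prod_multiset_X_sub_C hcardF
    rw [← this, hFrootsLem]
    rw [Multiset.map_add, Multiset.prod_add]
  have hH2 : H = C cC * (A * B) := by
    have := C_leadingCoeff_mul_prod_multiset_X_sub_C hcardH
    rw [← this, hHrootsLem]
    rw [Multiset.map_add, Multiset.prod_add]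
  have hlcE : eC ≠ 0 := leadingCoeff_ne_zero.mpr hE
  have hlcH : cC ≠ 0 := leadingCoeff_ne_zero.mpr hH
  have hlcF : fC ≠ 0 := leadingCoeff_ne_zero.mpr hF
  -- Wronskian of A, B is a nonzero constant
  have hE' : derivative E = C eC * (derivative A * A + A * derivative A) := by
    rw [hE2]
    simp only [derivative_mul, derivative_C, zero_mul, zero_add]
  have hH' : derivative H = C cC * (derivative A * B + A * derivative B) := by
    rw [hH2]
    simp only [derivative_mul, derivative_C, zero_mul, zero_add]
  have h0 : C eC * (A * A) *
      (C cC * (derivative A * B - A * derivative B) - 2) = 0 := by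
    have r1' := r1
    rw [hE', hH', hE2, hH2] at r1'
    linear_combination r1'
  have hfac : C cC * (derivative A * B - A * derivative B) - 2 = 0 := by
    rcases mul_eq_zero.mp h0 with h | h
    · exact absurd h (by
        refine mul_ne_zero ?_ (mul_ne_zero hAmonic.ne_zero hAmonic.ne_zero)
        simpa using hlcE)
    · exact h
  set W := derivative A * B - A * derivative B with hWdef
  have hCW : C cC * W = 2 := by linear_combination hfac
  have hWne : W ≠ 0 := by
    intro h
    rw [h, mul_zero] at hCW
    have := congrArg (fun p => Polynomial.coeff p 0) hCW
    simp at this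
  have hWdeg : W.natDegree = 0 := by
    have := congrArg natDegree hCW
    rw [natDegree_C_mul hlcH] at this
    simpa using this
  obtain ⟨hA1, hB1⟩ := wronskian_bound hAmonic hBmonic hWne hWdeg
  -- conclude degree bounds
  have hdE : E.natDegree = 2 * A.natDegree := by
    rw [hE2, natDegree_C_mul hlcE, natDegree_mul hAmonic.ne_zero hAmonic.ne_zero]
    omega
  have hdF : F.natDegree = 2 * B.natDegree := by
    rw [hF2, natDegree_C_mul hlcF, natDegree_mul hBmonic.ne_zero hBmonic.ne_zero]
    omega
  have hdH : H.natDegree = A.natDegree + B.natDegree := by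
    rw [hH2, natDegree_C_mul hlcH, natDegree_mul hAmonic.ne_zero hBmonic.ne_zero]
  refine ⟨by omega, by omega, by omega⟩

end Main


variable (K : Type*) [Field K]

noncomputable def e2 : ↥(sl (Fin 2) K) :=
  ⟨!![0,1;0,0], show _ ∈ LinearMap.ker (Matrix.traceLinearMap (Fin 2) K K) by
    rw [LinearMap.mem_ker]; simp [Matrix.trace_fin_two]⟩

noncomputable def f2 : ↥(sl (Fin 2) K) :=
  ⟨!![0,0;1,0], show _ ∈ LinearMap.ker (Matrix.traceLinearMap (Fin 2) K K) by
    rw [LinearMap.mem_ker]; simp [Matrix.trace_fin_two]⟩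

noncomputable def h2 : ↥(sl (Fin 2) K) :=
  ⟨!![1,0;0,-1], show _ ∈ LinearMap.ker (Matrix.traceLinearMap (Fin 2) K K) by
    rw [LinearMap.mem_ker]; simp [Matrix.trace_fin_two]⟩

variable {K}

lemma br_he : ⁅h2 K, e2 K⁆ = (2 : K) • e2 K := by
  apply Subtype.ext
  show (h2 K).val * (e2 K).val - (e2 K).val * (h2 K).val = ((2 : K) • e2 K).val
  rw [show ((2 : K) • e2 K).val = (2 : K) • (e2 K).val from rfl]
  simp only [e2, h2]
  ext i j
  fin_cases i <;> fin_cases j <;> simp [Matrix.mul_apply, Fin.sum_univ_two] <;> norm_num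

lemma br_hf : ⁅h2 K, f2 K⁆ = (-2 : K) • f2 K := by
  apply Subtype.ext
  show (h2 K).val * (f2 K).val - (f2 K).val * (h2 K).val = ((-2 : K) • f2 K).val
  rw [show ((-2 : K) • f2 K).val = (-2 : K) • (f2 K).val from rfl]
  simp only [f2, h2]
  ext i j
  fin_cases i <;> fin_cases j <;> simp [Matrix.mul_apply, Fin.sum_univ_two] <;> norm_num

lemma br_ef : ⁅e2 K, f2 K⁆ = h2 K := by
  apply Subtype.ext
  show (e2 K).val * (f2 K).val - (f2 K).val * (e2 K).val = (h2 K).val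
  simp only [e2, f2, h2]
  ext i j
  fin_cases i <;> fin_cases j <;> simp [Matrix.mul_apply, Fin.sum_univ_two] <;> norm_num

lemma sl2_decomp (X : ↥(sl (Fin 2) K)) :
    X = X.val 0 1 • e2 K + X.val 1 0 • f2 K + X.val 0 0 • h2 K := by
  have htr : Matrix.trace X.val = 0 := X.2
  rw [Matrix.trace_fin_two] at htr
  apply Subtype.ext
  show X.val = (X.val 0 1 • e2 K + X.val 1 0 • f2 K + X.val 0 0 • h2 K).val
  rw [show (X.val 0 1 • e2 K + X.val 1 0 • f2 K + X.val 0 0 • h2 K).val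
      = X.val 0 1 • (e2 K).val + X.val 1 0 • (f2 K).val + X.val 0 0 • (h2 K).val from rfl]
  simp only [e2, f2, h2]
  have h11 : X.val 1 1 = -(X.val 0 0) := by linear_combination htr
  rw [Matrix.eta_fin_two X.val, h11]
  ext i j
  fin_cases i <;> fin_cases j <;> simp

section Theta

variable [CharZero K] (θ : ↥(sl (Fin 2) K) →ₗ[K] Polynomial K)
  (hact : ∀ X Y, θ ⁅X, Y⁆ = θ X * derivative (θ Y) - derivative (θ X) * θ Y)

include hact

-- the three relations
lemma rel1 : θ (h2 K) * derivative (θ (e2 K)) - derivative (θ (h2 K)) * θ (e2 K)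
    = 2 * θ (e2 K) := by
  have := hact (h2 K) (e2 K)
  rw [br_he, map_smul] at this
  rw [← this, smul_eq_C_mul, map_ofNat]

lemma rel2 : θ (h2 K) * derivative (θ (f2 K)) - derivative (θ (h2 K)) * θ (f2 K)
    = -(2 * θ (f2 K)) := by
  have := hact (h2 K) (f2 K)
  rw [br_hf, map_smul] at this
  rw [← this, smul_eq_C_mul]
  simp only [map_neg, map_ofNat]
  ring

lemma rel3 : θ (e2 K) * derivative (θ (f2 K)) - derivative (θ (e2 K)) * θ (f2 K)
    = θ (h2 K) := by
  have := hact (e2 K) (f2 K)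
  rw [br_ef] at this
  exact this.symm

-- vanishing propagation
lemma theta_zero_of
    (h : θ (e2 K) = 0 ∨ θ (f2 K) = 0 ∨ θ (h2 K) = 0) : θ = 0 := by
  have r1 := rel1 θ hact
  have r2 := rel2 θ hact
  have r3 := rel3 θ hact
  have h2ne : (2 : Polynomial K) ≠ 0 := by norm_num
  have hcase : θ (h2 K) = 0 → θ (e2 K) = 0 ∧ θ (f2 K) = 0 := by
    intro hH
    rw [hH] at r1 r2
    simp only [derivative_zero, zero_mul, mul_zero, sub_zero, zero_sub, neg_eq_zero] at r1 r2
    constructor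
    · rcases mul_eq_zero.mp r1.symm with h' | h'
      · exact absurd h' h2ne
      · exact h'
    · have h' : (2 : Polynomial K) * θ (f2 K) = 0 := by linear_combination r2
      rcases mul_eq_zero.mp h' with h'' | h''
      · exact absurd h'' h2ne
      · exact h''
  have hall : θ (e2 K) = 0 ∧ θ (f2 K) = 0 ∧ θ (h2 K) = 0 := by
    rcases h with hE | hF | hH
    · have hH : θ (h2 K) = 0 := by
        rw [hE] at r3
        simpa using r3.symm
      exact ⟨hE, (hcase hH).2, hH⟩
    · have hH : θ (h2 K) = 0 := by
        rw [hF] at r3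
        simpa using r3.symm
      exact ⟨(hcase hH).1, hF, hH⟩
    · exact ⟨(hcase hH).1, (hcase hH).2, hH⟩
  apply LinearMap.ext
  intro X
  rw [sl2_decomp X]
  simp only [map_add, map_smul, hall.1, hall.2.1, hall.2.2, smul_zero, add_zero,
    LinearMap.zero_apply]

lemma theta_nonzero (hnt : θ ≠ 0) :
    θ (e2 K) ≠ 0 ∧ θ (f2 K) ≠ 0 ∧ θ (h2 K) ≠ 0 := by
  refine ⟨fun h => hnt (theta_zero_of θ hact (Or.inl h)),
    fun h => hnt (theta_zero_of θ hact (Or.inr (Or.inl h))),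
    fun h => hnt (theta_zero_of θ hact (Or.inr (Or.inr h)))⟩

-- degree bounds via algebraic closure
lemma theta_deg (hnt : θ ≠ 0) :
    (θ (e2 K)).natDegree ≤ 2 ∧ (θ (f2 K)).natDegree ≤ 2 ∧ (θ (h2 K)).natDegree ≤ 2 := by
  obtain ⟨hE0, hF0, hH0⟩ := theta_nonzero θ hact hnt
  have r1 := rel1 θ hact
  have r2 := rel2 θ hact
  have r3 := rel3 θ hact
  set L := AlgebraicClosure K
  haveI : CharZero L := charZero_of_injective_algebraMap (algebraMap K L).injective
  set φ : K[X] → L[X] := Polynomial.map (algebraMap K L) with hφ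
  have hinj : Function.Injective φ := map_injective _ (algebraMap K L).injective
  have hmapne : ∀ p : K[X], p ≠ 0 → φ p ≠ 0 := by
    intro p hp h0
    exact hp (hinj (by simpa [hφ] using h0))
  have R1 : φ (θ (h2 K)) * derivative (φ (θ (e2 K)))
      - derivative (φ (θ (h2 K))) * φ (θ (e2 K)) = 2 * φ (θ (e2 K)) := by
    have := congrArg φ r1
    simpa only [hφ, Polynomial.map_mul, Polynomial.map_sub, derivative_map,
      Polynomial.map_ofNat] using this
  have R2 : φ (θ (h2 K)) * derivative (φ (θ (f2 K)))
      - derivative (φ (θ (h2 K))) * φ (θ (f2 K)) = -(2 * φ (θ (f2 K))) := by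
    have := congrArg φ r2
    simpa only [hφ, Polynomial.map_mul, Polynomial.map_sub, Polynomial.map_neg, derivative_map,
      Polynomial.map_ofNat] using this
  have R3 : φ (θ (e2 K)) * derivative (φ (θ (f2 K)))
      - derivative (φ (θ (e2 K))) * φ (θ (f2 K)) = φ (θ (h2 K)) := by
    have := congrArg φ r3
    simpa only [hφ, Polynomial.map_mul, Polynomial.map_sub, derivative_map] using this
  obtain ⟨b1, b2, b3⟩ := key_deg (hmapne _ hE0) (hmapne _ hF0) (hmapne _ hH0) R1 R2 R3
  rw [hφ] at b1 b2 b3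
  rw [natDegree_map_eq_of_injective (algebraMap K L).injective] at b1 b2 b3
  exact ⟨b1, b2, b3⟩

-- linear independence of the images
lemma theta_indep (hnt : θ ≠ 0) {a b c : K}
    (h : a • θ (e2 K) + b • θ (f2 K) + c • θ (h2 K) = 0) : a = 0 ∧ b = 0 ∧ c = 0 := by
  obtain ⟨hE0, hF0, hH0⟩ := theta_nonzero θ hact hnt
  have r1 := rel1 θ hact
  have r2 := rel2 θ hact
  have r3 := rel3 θ hact
  set E := θ (e2 K); set F := θ (f2 K); set H := θ (h2 K)
  have h1 : C a * E + C b * F + C c * H = 0 := by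
    rw [← smul_eq_C_mul, ← smul_eq_C_mul, ← smul_eq_C_mul]; exact h
  have dh1 : C a * derivative E + C b * derivative F + C c * derivative H = 0 := by
    have := congrArg derivative h1
    simpa only [derivative_add, derivative_mul, derivative_C, zero_mul, zero_add,
      derivative_zero] using this
  have h2 : (2 : K[X]) * (C a * E) - 2 * (C b * F) = 0 := by
    linear_combination (-(C a)) * r1 - C b * r2 + H * dh1 - derivative H * h1
  have dh2 : (2 : K[X]) * (C a * derivative E) - 2 * (C b * derivative F) = 0 := by
    have := congrArg derivative h2
    simpa only [derivative_sub, derivative_mul, derivative_C, zero_mul, zero_add,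
      derivative_zero, derivative_ofNat, add_zero] using this
  have h3 : (4 : K[X]) * (C a * E) + 4 * (C b * F) = 0 := by
    linear_combination (-(2 * C a)) * r1 + (2 * C b) * r2 + H * dh2 - derivative H * h2
  have hCa : C a * E = 0 := by
    have h8 : (8 : K[X]) * (C a * E) = 0 := by linear_combination h3 + 2 * h2
    rcases mul_eq_zero.mp h8 with h' | h'
    · exact absurd h' (by norm_num)
    · exact h'
  have ha : a = 0 := by
    rcases mul_eq_zero.mp hCa with h' | h'
    · exact C_eq_zero.mp h'
    · exact absurd h' hE0
  have hb : b = 0 := by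
    rw [ha] at h2
    simp only [map_zero, zero_mul, mul_zero, zero_sub, neg_eq_zero] at h2
    rcases mul_eq_zero.mp h2 with h' | h'
    · exact absurd h' (by norm_num)
    · rcases mul_eq_zero.mp h' with h'' | h''
      · exact C_eq_zero.mp h''
      · exact absurd h'' hF0
  have hc : c = 0 := by
    rw [ha, hb] at h1
    simp only [map_zero, zero_mul, zero_add] at h1
    rcases mul_eq_zero.mp h1 with h' | h'
    · exact C_eq_zero.mp h'
    · exact absurd h' hH0
  exact ⟨ha, hb, hc⟩


-- continuation (appended to kside before `end Theta`)
open Module Submodule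

lemma theta_inj (hnt : θ ≠ 0) : Function.Injective θ := by
  rw [← LinearMap.ker_eq_bot]
  rw [Submodule.eq_bot_iff]
  intro X hX
  have hθX : θ X = 0 := hX
  have hdec := congrArg θ (sl2_decomp X)
  rw [map_add, map_add, map_smul, map_smul, map_smul, hθX] at hdec
  obtain ⟨ha, hb, hc⟩ := theta_indep θ hact hnt hdec.symm
  rw [sl2_decomp X, ha, hb, hc]
  simp

lemma theta_range (hnt : θ ≠ 0) : LinearMap.range θ = degreeLT K 3 := by
  obtain ⟨hE0, hF0, hH0⟩ := theta_nonzero θ hact hnt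
  obtain ⟨dE, dF, dH⟩ := theta_deg θ hact hnt
  have hmem : ∀ p : K[X], p ≠ 0 → p.natDegree ≤ 2 → p ∈ degreeLT K 3 := fun p hp hd =>
    mem_degreeLT.mpr ((natDegree_lt_iff_degree_lt hp).mp (by omega))
  have hEm := hmem _ hE0 dE
  have hFm := hmem _ hF0 dF
  have hHm := hmem _ hH0 dH
  have hsub : LinearMap.range θ ≤ degreeLT K 3 := by
    rintro p ⟨X, rfl⟩
    have hdec := congrArg θ (sl2_decomp X)
    rw [map_add, map_add, map_smul, map_smul, map_smul] at hdec
    rw [hdec]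
    exact add_mem (add_mem (smul_mem _ _ hEm) (smul_mem _ _ hFm)) (smul_mem _ _ hHm)
  have hind : LinearIndependent K ![θ (e2 K), θ (f2 K), θ (h2 K)] := by
    rw [Fintype.linearIndependent_iff]
    intro g hg
    rw [Fin.sum_univ_three] at hg
    simp only [Matrix.cons_val_zero, Matrix.cons_val_one, Matrix.head_cons,
      Matrix.cons_val_two, Matrix.tail_cons] at hg
    obtain ⟨h0, h1, h2⟩ := theta_indep θ hact hnt hg
    intro i
    fin_cases i <;> assumption
  haveI hfin : FiniteDimensional K (degreeLT K 3) :=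
    Module.Finite.equiv (degreeLTEquiv K 3).symm
  have hfr3 : finrank K (degreeLT K 3) = 3 := by
    rw [(degreeLTEquiv K 3).finrank_eq]
    simp
  have hspan_le : span K (Set.range ![θ (e2 K), θ (f2 K), θ (h2 K)]) ≤ LinearMap.range θ := by
    rw [Submodule.span_le]
    rintro p ⟨i, rfl⟩
    fin_cases i
    · exact ⟨e2 K, rfl⟩
    · exact ⟨f2 K, rfl⟩
    · exact ⟨h2 K, rfl⟩
  have hspanrank : finrank K (span K (Set.range ![θ (e2 K), θ (f2 K), θ (h2 K)])) = 3 := by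
    rw [finrank_span_eq_card hind]
    simp
  haveI : FiniteDimensional K (LinearMap.range θ) := Submodule.finiteDimensional_of_le hsub
  have hge : (3 : ℕ) ≤ finrank K (LinearMap.range θ) :=
    hspanrank ▸ Submodule.finrank_mono hspan_le
  exact Submodule.eq_of_le_of_finrank_le hsub (by omega)



end Theta

end Sl2ConjAux

open Sl2ConjAux in
/-- For any two nontrivial Lie algebra morphisms
`θ₁, θ₂ : sl(2,K) → Der(K[t])` (with `Der K[t]` identified with `K[t]`, the bracket being
`[f,g] = f·g′ − f′·g`), there exists a Lie algebra automorphism `Π` of `sl(2,K)` such that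
`θ₁ = θ₂ ∘ Π`. -/
theorem sl2_actions_conjugate {K : Type*} [RCLike K]
    (θ₁ θ₂ : ↥(sl (Fin 2) K) →ₗ[K] Polynomial K)
    (hact₁ : ∀ X Y, θ₁ ⁅X, Y⁆ = θ₁ X * derivative (θ₁ Y) - derivative (θ₁ X) * θ₁ Y)
    (hact₂ : ∀ X Y, θ₂ ⁅X, Y⁆ = θ₂ X * derivative (θ₂ Y) - derivative (θ₂ X) * θ₂ Y)
    (hnt₁ : θ₁ ≠ 0) (hnt₂ : θ₂ ≠ 0) :
    ∃ Φ : ↥(sl (Fin 2) K) ≃ₗ⁅K⁆ ↥(sl (Fin 2) K), ∀ X, θ₁ X = θ₂ (Φ X) := by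
  classical
  have hinj₁ := theta_inj θ₁ hact₁ hnt₁
  have hinj₂ := theta_inj θ₂ hact₂ hnt₂
  have hr₁ := theta_range θ₁ hact₁ hnt₁
  have hr₂ := theta_range θ₂ hact₂ hnt₂
  let Ψ₁ : ↥(sl (Fin 2) K) ≃ₗ[K] ↥(degreeLT K 3) :=
    (LinearEquiv.ofInjective θ₁ hinj₁).trans (LinearEquiv.ofEq _ _ hr₁)
  let Ψ₂ : ↥(sl (Fin 2) K) ≃ₗ[K] ↥(degreeLT K 3) :=
    (LinearEquiv.ofInjective θ₂ hinj₂).trans (LinearEquiv.ofEq _ _ hr₂)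
  let Φlin : ↥(sl (Fin 2) K) ≃ₗ[K] ↥(sl (Fin 2) K) := Ψ₁.trans Ψ₂.symm
  have hθ₁ : ∀ Y, θ₁ Y = ((Ψ₁ Y : ↥(degreeLT K 3)) : K[X]) := by
    intro Y
    simp [Ψ₁, LinearEquiv.trans_apply, LinearEquiv.coe_ofEq_apply,
      LinearEquiv.ofInjective_apply]
  have hθ₂ : ∀ Y, θ₂ Y = ((Ψ₂ Y : ↥(degreeLT K 3)) : K[X]) := by
    intro Y
    simp [Ψ₂, LinearEquiv.trans_apply, LinearEquiv.coe_ofEq_apply,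
      LinearEquiv.ofInjective_apply]
  have hkey : ∀ X, θ₂ (Φlin X) = θ₁ X := by
    intro X
    rw [hθ₂, hθ₁]
    congr 1
    show Ψ₂ (Ψ₂.symm (Ψ₁ X)) = Ψ₁ X
    exact Ψ₂.apply_symm_apply _
  have hlie : ∀ X Y, Φlin ⁅X, Y⁆ = ⁅Φlin X, Φlin Y⁆ := by
    intro X Y
    apply hinj₂
    rw [hkey, hact₁, hact₂, hkey X, hkey Y]
  refine ⟨{ toLinearMap := (Φlin : ↥(sl (Fin 2) K) →ₗ[K] ↥(sl (Fin 2) K)),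
            map_lie' := fun {x y} => hlie x y,
            invFun := Φlin.symm,
            left_inv := Φlin.left_inv,
            right_inv := Φlin.right_inv }, ?_⟩
  intro X
  exact (hkey X).symm
end

section
/- Let 𝔤 be a finite-dimensional Lie algebra over K, λ, μ ∈ 𝔤* linear functionals, b ∈ K, and m a nonnegative integer with m ≠ 1. Then the map θ(X) = (λ(X)·(t+b)^m + μ(X)·(t+b))·d/dt is a Lie algebra morphism 𝔤 → Der(K[t]) if and only if for all X, Y ∈ 𝔤: μ([X,Y]) = 0 and λ([X,Y]) = (1−m)·(λ(X)μ(Y) − λ(Y)μ(X)). -/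
open Polynomial

lemma bracket_calc {K : Type*} [CommRing K] (a c a' c' b : K) (m : ℕ) :
    (a • ((X : K[X]) + C b) ^ m + c • (X + C b)) *
        derivative (a' • ((X : K[X]) + C b) ^ m + c' • (X + C b)) -
      derivative (a • ((X : K[X]) + C b) ^ m + c • (X + C b)) *
        (a' • ((X : K[X]) + C b) ^ m + c' • (X + C b)) =
      ((1 - (m : K)) * (a * c' - a' * c)) • ((X : K[X]) + C b) ^ m := by
  have dp : derivative ((X : K[X]) + C b) = 1 := by simp
  have dpm : derivative (((X : K[X]) + C b) ^ m) = C (m : K) * (X + C b) ^ (m - 1) := by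
    rw [derivative_pow, dp, mul_one]
  simp only [derivative_add, derivative_smul, dpm, dp]
  cases m with
  | zero =>
    simp only [map_add, map_sub, map_mul, map_one, map_natCast, pow_zero, smul_eq_C_mul, mul_one, Nat.cast_zero, map_zero, zero_mul, smul_zero,
      mul_zero, zero_add, Nat.zero_sub]
    push_cast
    ring
  | succ n =>
    simp only [map_add, map_sub, map_mul, map_one, map_natCast, smul_eq_C_mul, mul_one, Nat.add_sub_cancel, pow_succ]
    push_cast
    ring


lemma indep_coeffs {K : Type*} [RCLike K] (α β b : K) (m : ℕ) (hm : m ≠ 1)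
    (h : α • ((X : K[X]) + C b) ^ m + β • (X + C b) = 0) : α = 0 ∧ β = 0 := by
  have ev : ∀ r : K, α * (r + b) ^ m + β * (r + b) = 0 := by
    intro r
    have h2 := congrArg (eval r) h
    simp only [eval_add, eval_smul, eval_pow, eval_X, eval_C, smul_eq_mul, eval_zero] at h2
    exact h2
  have e1 := ev (1 - b)
  have e2 := ev (2 - b)
  simp only [sub_add_cancel, one_pow, mul_one] at e1 e2
  have h2 : (2 : K) ^ m ≠ 2 := by
    intro hcon
    apply hm
    have hc : ((2 ^ m : ℕ) : K) = ((2 ^ 1 : ℕ) : K) := by push_cast; simpa using hcon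
    exact Nat.pow_right_injective (le_refl 2) (Nat.cast_injective hc)
  have hα : α = 0 := by
    have hz : α * ((2 : K) ^ m - 2) = 0 := by linear_combination e2 - 2 * e1
    rcases mul_eq_zero.mp hz with h | h
    · exact h
    · exact (h2 (by linear_combination h)).elim
  refine ⟨hα, ?_⟩
  rw [hα, zero_add] at e1
  exact e1

/-- Let `𝔤` be a finite-dimensional Lie algebra over `K`, `λ, μ ∈ 𝔤*`,
`b ∈ K` and `m` a nonnegative integer with `m ≠ 1`.  Then
`θ(X) = (λ(X)·(t+b)^m + μ(X)·(t+b))·d/dt` is a Lie algebra morphism `𝔤 → Der(K[t])`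
(with `Der K[t]` identified with `K[t]`, the bracket being `[f,g] = f·g′ − f′·g`) if and
only if for all `X, Y ∈ 𝔤`: `μ([X,Y]) = 0` and
`λ([X,Y]) = (1−m)·(λ(X)μ(Y) − λ(Y)μ(X))`. -/
theorem type_two_formula_is_action_iff {K : Type*} [RCLike K]
    {g : Type*} [LieRing g] [LieAlgebra K g] [FiniteDimensional K g]
    (lam mu : g →ₗ[K] K) (b : K) (m : ℕ) (hm : m ≠ 1) :
    (∀ X Y : g,
        lam ⁅X, Y⁆ • (Polynomial.X + C b) ^ m + mu ⁅X, Y⁆ • (Polynomial.X + C b) =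
          (lam X • (Polynomial.X + C b) ^ m + mu X • (Polynomial.X + C b)) *
              derivative (lam Y • (Polynomial.X + C b) ^ m + mu Y • (Polynomial.X + C b)) -
            derivative (lam X • (Polynomial.X + C b) ^ m + mu X • (Polynomial.X + C b)) *
              (lam Y • (Polynomial.X + C b) ^ m + mu Y • (Polynomial.X + C b))) ↔
      ∀ X Y : g, mu ⁅X, Y⁆ = 0 ∧
        lam ⁅X, Y⁆ = (1 - (m : K)) * (lam X * mu Y - lam Y * mu X) := by
  constructor
  · intro h X Y
    have hXY := h X Y
    rw [bracket_calc] at hXY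
    have key : (lam ⁅X, Y⁆ - (1 - (m : K)) * (lam X * mu Y - lam Y * mu X)) •
        ((Polynomial.X : K[X]) + C b) ^ m + mu ⁅X, Y⁆ • (Polynomial.X + C b) = 0 := by
      simp only [smul_eq_C_mul, map_mul, map_sub, map_add, map_one, map_natCast] at hXY ⊢
      linear_combination hXY
    obtain ⟨h1, h2⟩ := indep_coeffs _ _ _ _ hm key
    exact ⟨h2, by linear_combination h1⟩
  · intro h X Y
    obtain ⟨h1, h2⟩ := h X Y
    rw [bracket_calc, h1, h2, zero_smul, add_zero]
end

section
/- A finite-dimensional Lie algebra 𝔤 over K admits an action of Type 2 on K[t] (i.e. a nontrivial action θ with Rank(θ) = 2) if and only if there exist two linearly independent vectors x₀, y₀ ∈ 𝔤 and a Lie ideal S ⊆ 𝔤 such that: 𝔤 = S ⊕ K·x₀ ⊕ K·y₀ (direct sum of subspaces); [𝔤,𝔤] ⊆ S ⊕ K·x₀; and [x₀,y₀] + (m−1)·x₀ ∈ S for some nonnegative integer m ≠ 1. -/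
open Polynomial

set_option maxHeartbeats 1000000

lemma aux0 {K : Type*} [Field K] [CharZero K] {p q : K[X]} (hp : p ≠ 0)
    (hq' : derivative q = 0) (h : p * derivative q = derivative p * q) :
    ∃ c : K, q = C c * p := by
  rcases eq_or_ne q 0 with rfl | hq
  · exact ⟨0, by simp⟩
  · have h0 : derivative p * q = 0 := by rw [← h, hq', mul_zero]
    have hp' : derivative p = 0 := by
      rcases mul_eq_zero.mp h0 with h1 | h1
      · exact h1
      · exact absurd h1 hq
    obtain ⟨a, ha⟩ := natDegree_eq_zero.mp (natDegree_eq_zero_of_derivative_eq_zero hp')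
    obtain ⟨b, hb⟩ := natDegree_eq_zero.mp (natDegree_eq_zero_of_derivative_eq_zero hq')
    have ha0 : a ≠ 0 := by rintro rfl; simp at ha; exact hp ha.symm
    refine ⟨b / a, ?_⟩
    rw [← ha, ← hb, ← C_mul, div_mul_cancel₀ _ ha0]

/-- If the Wronskian of `p` and `q` vanishes and `p ≠ 0`, then `q` is a scalar multiple of `p`. -/
lemma wronskian_zero_dep {K : Type*} [Field K] [CharZero K] :
    ∀ (N : ℕ) (p q : K[X]), p ≠ 0 → q.natDegree ≤ N →
      p * derivative q = derivative p * q → ∃ c : K, q = C c * p := by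
  intro N
  induction N with
  | zero =>
    intro p q hp hq h
    have hq' : derivative q = 0 := by
      rw [eq_C_of_natDegree_le_zero hq]; simp
    exact aux0 hp hq' h
  | succ N ih =>
    intro p q hp hqN h
    by_cases hq' : derivative q = 0
    · exact aux0 hp hq' h
    · have hq : q ≠ 0 := by rintro rfl; simp at hq'
      have hk1 : 1 ≤ q.natDegree := by
        by_contra hk
        push_neg at hk
        interval_cases hkk : q.natDegree
        · exact hq' (by rw [eq_C_of_natDegree_le_zero hkk.le]; simp)
      have hp' : derivative p ≠ 0 := by
        intro h0
        rw [h0, zero_mul] at h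
        rcases mul_eq_zero.mp h with h1 | h1
        · exact hp h1
        · exact hq' h1
      have hn1 : 1 ≤ p.natDegree := by
        by_contra hn
        push_neg at hn
        interval_cases hnn : p.natDegree
        · exact hp' (by rw [eq_C_of_natDegree_le_zero hnn.le]; simp)
      set n := p.natDegree with hn
      set k := q.natDegree with hkdef
      -- natDegree of derivatives
      have hkk : k - 1 + 1 = k := by omega
      have hnn : n - 1 + 1 = n := by omega
      have hcq' : (derivative q).coeff (k - 1) = q.coeff k * k := by
        rw [coeff_derivative, hkk]
        congr 1
        exact_mod_cast congrArg (Nat.cast (R := K)) hkk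
      have hcp' : (derivative p).coeff (n - 1) = p.coeff n * n := by
        rw [coeff_derivative, hnn]
        congr 1
        exact_mod_cast congrArg (Nat.cast (R := K)) hnn
      have hqk : q.coeff k ≠ 0 := mt leadingCoeff_eq_zero.mp hq
      have hpn : p.coeff n ≠ 0 := mt leadingCoeff_eq_zero.mp hp
      have hdq' : (derivative q).natDegree = k - 1 := by
        refine le_antisymm (natDegree_derivative_le q) (le_natDegree_of_ne_zero ?_)
        rw [hcq']
        exact mul_ne_zero hqk (Nat.cast_ne_zero.mpr (by omega))
      have hdp' : (derivative p).natDegree = n - 1 := by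
        refine le_antisymm (natDegree_derivative_le p) (le_natDegree_of_ne_zero ?_)
        rw [hcp']
        exact mul_ne_zero hpn (Nat.cast_ne_zero.mpr (by omega))
      -- compare coefficients at n + k - 1
      have hkey : (k : K) = (n : K) := by
        have e1 := coeff_mul_degree_add_degree p (derivative q)
        have e2 := coeff_mul_degree_add_degree (derivative p) q
        rw [hdq'] at e1
        rw [hdp'] at e2
        have hexp : n + (k - 1) = (n - 1) + k := by omega
        rw [hexp] at e1
        have e3 : p.leadingCoeff * (derivative q).leadingCoeff
            = (derivative p).leadingCoeff * q.leadingCoeff := by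
          rw [← e1, ← e2, h]
        rw [leadingCoeff, leadingCoeff, leadingCoeff, leadingCoeff, hdq', hdp',
          hcq', hcp'] at e3
        have := mul_left_cancel₀ hpn (by linear_combination e3 :
          p.coeff n * (q.coeff k * (k : K)) = p.coeff n * (q.coeff k * (n : K)))
        exact mul_left_cancel₀ hqk this
      have hkn : k = n := Nat.cast_injective hkey
      -- subtract leading term
      set c : K := q.leadingCoeff / p.leadingCoeff with hc
      have hc0 : c ≠ 0 := div_ne_zero (mt leadingCoeff_eq_zero.mp hq) (mt leadingCoeff_eq_zero.mp hp)
      set q₁ : K[X] := q - C c * p with hq₁def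
      have h₁ : p * derivative q₁ = derivative p * q₁ := by
        simp only [hq₁def, derivative_sub, derivative_C_mul]
        ring_nf
        linear_combination h
      rcases eq_or_ne q₁ 0 with hq₁0 | hq₁0
      · exact ⟨c, by rw [← sub_eq_zero]; exact hq₁0⟩
      · have hdeg : q.degree = (C c * p).degree := by
          rw [degree_C_mul hc0, degree_eq_natDegree hq, degree_eq_natDegree hp]
          exact_mod_cast congrArg (Nat.cast (R := WithBot ℕ)) hkn
        have hlc : q.leadingCoeff = (C c * p).leadingCoeff := by
          rw [leadingCoeff_mul, leadingCoeff_C, hc, div_mul_cancel₀ _ (mt leadingCoeff_eq_zero.mp hp)]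
        have hlt : q₁.degree < q.degree := degree_sub_lt hdeg hq hlc
        have hle : q₁.natDegree ≤ N := by
          have := natDegree_lt_natDegree hq₁0 hlt
          omega
        obtain ⟨c', hc'⟩ := ih p q₁ hp hle h₁
        refine ⟨c' + c, ?_⟩
        rw [C_add]
        rw [hq₁def] at hc'
        linear_combination hc'


lemma polyid {K : Type*} [Field K] (m : ℕ) (a b c d : K) :
    (a • (X:K[X])^m + b • X) * derivative (c • (X:K[X])^m + d • X)
      - derivative (a • (X:K[X])^m + b • X) * (c • (X:K[X])^m + d • X)
    = ((a*d - b*c) * (1 - (m:K))) • ((X:K[X])^m) := by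
  rcases m with _ | m'
  · simp only [pow_zero, smul_eq_C_mul, derivative_add, derivative_C_mul, derivative_one,
      derivative_X, Nat.cast_zero, map_mul, map_sub, map_one, C_0]
    ring
  · simp only [smul_eq_C_mul, derivative_add, derivative_C_mul, derivative_X_pow,
      Nat.add_sub_cancel, derivative_X, Nat.cast_add, Nat.cast_one, map_mul, map_sub,
      map_add, map_one]
    ring


lemma reverse_dir {K : Type*} [RCLike K]
    {g : Type*} [LieRing g] [LieAlgebra K g] [FiniteDimensional K g]
    (x₀ y₀ : g) (S : LieIdeal K g) (m : ℕ)
    (hind : LinearIndependent K ![x₀, y₀])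
    (hdec : ∀ v : g, ∃! p : S × K × K, v = (p.1 : g) + p.2.1 • x₀ + p.2.2 • y₀)
    (hm1 : m ≠ 1) (hS : ⁅x₀, y₀⁆ + ((m : K) - 1) • x₀ ∈ S) :
    ∃ θ : g →ₗ[K] Polynomial K,
        (∀ X Y : g, θ ⁅X, Y⁆ = θ X * derivative (θ Y) - derivative (θ X) * θ Y) ∧
        θ ≠ 0 ∧ Module.finrank K (LinearMap.range θ) = 2 := by
  classical
  set L : (S × K × K) →ₗ[K] g :=
    (S.toSubmodule.subtype).coprod
      ((LinearMap.toSpanSingleton K g x₀).coprod (LinearMap.toSpanSingleton K g y₀)) with hL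
  have hLapp : ∀ p : S × K × K, L p = (p.1 : g) + p.2.1 • x₀ + p.2.2 • y₀ := by
    intro p
    rw [add_assoc]
    rfl
  have hbij : Function.Bijective L := by
    constructor
    · intro p p' hpp
      exact (hdec (L p)).unique (hLapp p) (by rw [hpp]; exact hLapp p')
    · intro v
      obtain ⟨p, hp, -⟩ := hdec v
      exact ⟨p, (hLapp p).trans hp.symm⟩
  set E : (S × K × K) ≃ₗ[K] g := LinearEquiv.ofBijective L hbij with hE
  set π : (S × K × K) →ₗ[K] K[X] :=
    (0 : S →ₗ[K] K[X]).coprod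
      ((LinearMap.toSpanSingleton K K[X] ((X:K[X])^m)).coprod
        (LinearMap.toSpanSingleton K K[X] (X:K[X]))) with hπ
  set θ : g →ₗ[K] K[X] := π.comp (E.symm : g →ₗ[K] (S × K × K)) with hθ
  have key : ∀ p : S × K × K, θ (L p) = p.2.1 • ((X:K[X])^m) + p.2.2 • (X:K[X]) := by
    intro p
    have h1 : E.symm (L p) = p := by
      have h2 : L p = E p := rfl
      rw [h2, LinearEquiv.symm_apply_apply]
    simp only [hθ, LinearMap.comp_apply, LinearEquiv.coe_coe, h1, hπ,
      LinearMap.coprod_apply, LinearMap.toSpanSingleton_apply, LinearMap.zero_apply, zero_add]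
  have key' : ∀ (s : S) (a b : K), θ ((s : g) + a • x₀ + b • y₀)
      = a • ((X:K[X])^m) + b • (X:K[X]) := by
    intro s a b
    have h1 : ((s : g) + a • x₀ + b • y₀) = L ⟨s, a, b⟩ := (hLapp ⟨s, a, b⟩).symm
    rw [h1, key]
  refine ⟨θ, ?_, ?_, ?_⟩
  · -- bracket identity
    intro Z W
    obtain ⟨⟨s, a, b⟩, hZ, -⟩ := hdec Z
    obtain ⟨⟨t, c, d⟩, hW, -⟩ := hdec W
    have hZθ : θ Z = a • ((X:K[X])^m) + b • (X:K[X]) := by rw [hZ]; exact key' s a b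
    have hWθ : θ W = c • ((X:K[X])^m) + d • (X:K[X]) := by rw [hW]; exact key' t c d
    -- the S component of the bracket
    set σ : g := ⁅x₀, y₀⁆ + ((m : K) - 1) • x₀ with hσ
    set sS : g := ⁅(s:g), (t:g)⁆ + c • ⁅(s:g), x₀⁆ + d • ⁅(s:g), y₀⁆
      + a • ⁅x₀, (t:g)⁆ + b • ⁅y₀, (t:g)⁆ + (a*d - b*c) • σ with hsS
    have hsSmem : sS ∈ S := by
      refine add_mem (add_mem (add_mem (add_mem (add_mem ?_ ?_) ?_) ?_) ?_) ?_
      · exact lie_mem_left K g S _ _ s.2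
      · exact Submodule.smul_mem _ _ (lie_mem_left K g S _ _ s.2)
      · exact Submodule.smul_mem _ _ (lie_mem_left K g S _ _ s.2)
      · exact Submodule.smul_mem _ _ (lie_mem_right K g S _ _ t.2)
      · exact Submodule.smul_mem _ _ (lie_mem_right K g S _ _ t.2)
      · exact Submodule.smul_mem _ _ hS
    have hyx : ⁅y₀, x₀⁆ = -⁅x₀, y₀⁆ := by rw [← lie_skew]
    have hbrack : ⁅Z, W⁆ = ((⟨sS, hsSmem⟩ : S) : g)
        + ((a*d - b*c) * (1 - (m:K))) • x₀ + (0:K) • y₀ := by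
      rw [hZ, hW]
      simp only [hsS, hσ]
      simp only [lie_add, add_lie, lie_smul, smul_lie, lie_self, smul_zero, zero_smul,
        smul_add, smul_smul, add_zero, zero_add, hyx, smul_neg]
      module
    rw [hbrack, key', hZθ, hWθ, polyid]
    simp
  · -- θ ≠ 0
    intro h0
    have h1 : θ ((0:S) + (0:K) • x₀ + (1:K) • y₀) = (0:K) • ((X:K[X])^m) + (1:K) • X :=
      key' 0 0 1
    rw [h0] at h1
    simp at h1
    exact X_ne_zero h1.symm
  · -- rank 2
    have hXind : LinearIndependent K ![(X:K[X])^m, X] := by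
      rw [LinearIndependent.pair_iff]
      intro s t hst
      have h1 := congrArg (fun p : K[X] => p.coeff 1) hst
      have hm := congrArg (fun p : K[X] => p.coeff m) hst
      simp only [coeff_add, coeff_smul, coeff_X_pow, coeff_zero, smul_eq_mul] at h1 hm
      rw [if_neg (by omega : ¬ 1 = m)] at h1
      simp only [coeff_X_one, mul_zero, mul_one, zero_add] at h1
      subst h1
      simp at hm
      exact ⟨hm, rfl⟩
    have hrange : LinearMap.range θ = Submodule.span K {(X:K[X])^m, X} := by
      apply le_antisymm
      · rintro _ ⟨v, rfl⟩
        obtain ⟨⟨s, a, b⟩, hv, -⟩ := hdec v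
        rw [hv, key' s a b]
        exact Submodule.mem_span_pair.mpr ⟨a, b, rfl⟩
      · rw [Submodule.span_le]
        rintro x hx
        rcases hx with rfl | hx
        · exact ⟨x₀, by simpa using key' 0 1 0⟩
        · rcases hx with rfl
          exact ⟨y₀, by simpa using key' 0 0 1⟩
    have hset : ({(X:K[X])^m, X} : Set K[X]) = Set.range ![(X:K[X])^m, X] := by
      ext p
      simp [Fin.exists_fin_two, eq_comm]
      tauto
    rw [hrange, hset, finrank_span_eq_card hXind]
    simp

lemma forward_dir {K : Type*} [RCLike K]
    {g : Type*} [LieRing g] [LieAlgebra K g] [FiniteDimensional K g]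
    (θ : g →ₗ[K] Polynomial K)
    (hbr : ∀ X Y : g, θ ⁅X, Y⁆ = θ X * derivative (θ Y) - derivative (θ X) * θ Y)
    (hθ0 : θ ≠ 0) (hrk : Module.finrank K (LinearMap.range θ) = 2) :
    ∃ (x₀ y₀ : g) (S : LieIdeal K g) (m : ℕ),
        LinearIndependent K ![x₀, y₀] ∧
        (∀ v : g, ∃! p : S × K × K,
            v = (p.1 : g) + p.2.1 • x₀ + p.2.2 • y₀) ∧
        (∀ X Y : g, ⁅X, Y⁆ ∈ S.toSubmodule ⊔ Submodule.span K {x₀}) ∧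
        m ≠ 1 ∧ ⁅x₀, y₀⁆ + ((m : K) - 1) • x₀ ∈ S := by
  classical
  have hkerlie : ∀ {Z W : g}, θ W = 0 → θ ⁅Z, W⁆ = 0 := by
    intro Z W hW
    rw [hbr, hW]
    simp
  set S : LieIdeal K g :=
    { carrier := {z | θ z = 0}
      add_mem' := by
        intro x y hx hy
        simp only [Set.mem_setOf_eq, map_add] at *
        rw [hx, hy, add_zero]
      zero_mem' := by simp
      smul_mem' := by
        intro c x hx
        simp only [Set.mem_setOf_eq, map_smul] at *
        rw [hx, smul_zero]
      lie_mem := by intro x mm hm; exact hkerlie hm } with hSdef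
  have hSmem : ∀ z : g, z ∈ S ↔ θ z = 0 := fun z => Iff.rfl
  clear_value S
  -- a basis of the range of θ
  have hfin : FiniteDimensional K (LinearMap.range θ) := inferInstance
  set B := Module.finBasisOfFinrankEq K (LinearMap.range θ) hrk with hB
  set u : K[X] := (B 0 : K[X]) with hu
  set v : K[X] := (B 1 : K[X]) with hv
  obtain ⟨Zu, hZu⟩ := (B 0).2
  obtain ⟨Zv, hZv⟩ := (B 1).2
  rw [← hu] at hZu
  rw [← hv] at hZv
  have hli : LinearIndependent K fun i : Fin 2 => ((B i : LinearMap.range θ) : K[X]) :=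
    B.linearIndependent.map' (LinearMap.range θ).subtype (Submodule.ker_subtype _)
  have huv : ∀ s t : K, s • u + t • v = 0 → s = 0 ∧ t = 0 := by
    intro s t hst
    have h2 := Fintype.linearIndependent_iff.mp hli ![s, t] ?_
    · exact ⟨h2 0, h2 1⟩
    · simpa [Fin.sum_univ_two] using hst
  -- the wronskian of u and v
  set w : K[X] := u * derivative v - derivative u * v with hw
  have hwθ : θ ⁅Zu, Zv⁆ = w := by rw [hbr, hZu, hZv]
  have hu0 : u ≠ 0 := by
    intro h0
    have := (huv 1 0 (by rw [h0]; simp)).1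
    exact one_ne_zero this
  have hw0 : w ≠ 0 := by
    intro h0
    have h1 : u * derivative v = derivative u * v := by
      rw [← sub_eq_zero]; exact h0
    obtain ⟨c, hc⟩ := wronskian_zero_dep v.natDegree u v hu0 le_rfl h1
    have := (huv c (-1) (by rw [smul_eq_C_mul, ← hc]; simp)).2
    simpa using this
  -- express w in the basis
  have hwrange : w ∈ LinearMap.range θ := ⟨⁅Zu, Zv⁆, hwθ⟩
  set a : K := B.repr ⟨w, hwrange⟩ 0 with ha
  set b : K := B.repr ⟨w, hwrange⟩ 1 with hb
  have hwab : w = a • u + b • v := by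
    have h1 := B.sum_repr ⟨w, hwrange⟩
    rw [Fin.sum_univ_two] at h1
    have h2 := congrArg (Subtype.val) h1
    simpa [← ha, ← hb, ← hu, ← hv] using h2.symm
  clear_value a b
  -- bracket relations
  have hwu : w * derivative u - derivative w * u = C (-b) * w := by
    conv_lhs => rw [hwab]
    rw [hw]
    simp only [derivative_add, smul_eq_C_mul, derivative_C_mul, map_neg]
    ring
  have hwv : w * derivative v - derivative w * v = C a * w := by
    conv_lhs => rw [hwab]
    rw [hw]
    simp only [derivative_add, smul_eq_C_mul, derivative_C_mul]
    ring
  clear_value B u v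
  -- find y₀ with the normalized relation
  obtain ⟨y₀, hy₀⟩ : ∃ y₀ : g,
      w * derivative (θ y₀) - derivative w * (θ y₀) = w := by
    by_cases hA : a = 0
    · have hB0 : b ≠ 0 := by
        intro hB0
        apply hw0
        rw [hwab, hA, hB0, zero_smul, zero_smul, add_zero]
      refine ⟨(-b)⁻¹ • Zu, ?_⟩
      rw [map_smul, hZu]
      have hb1 : C ((-b)⁻¹) * C (-b) = 1 := by
        rw [← C_mul, inv_mul_cancel₀ (neg_ne_zero.mpr hB0), C_1]
      simp only [smul_eq_C_mul, derivative_C_mul]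
      linear_combination C ((-b)⁻¹) * hwu + w * hb1
    · refine ⟨a⁻¹ • Zv, ?_⟩
      rw [map_smul, hZv]
      have ha1 : C (a⁻¹) * C a = 1 := by
        rw [← C_mul, inv_mul_cancel₀ hA, C_1]
      simp only [smul_eq_C_mul, derivative_C_mul]
      linear_combination C (a⁻¹) * hwv + w * ha1
  set x₀ : g := ⁅Zu, Zv⁆ with hx₀
  have hq1 : θ x₀ = w := hwθ
  clear_value x₀
  set q₂ : K[X] := θ y₀ with hq₂
  have hrel : w * derivative q₂ - derivative w * q₂ = w := hy₀
  have hq₂' : θ y₀ = q₂ := rfl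
  clear_value q₂
  clear_value w
  -- pairwise independence of w and q₂
  have hpair : ∀ s t : K, s • w + t • q₂ = 0 → s = 0 ∧ t = 0 := by
    intro s t hst
    by_cases ht : t = 0
    · subst ht
      rw [zero_smul, add_zero] at hst
      rcases smul_eq_zero.mp hst with h | h
      · exact ⟨h, rfl⟩
      · exact absurd h hw0
    · exfalso
      apply hw0
      have h3 : t • q₂ = -(s • w) := by
        rw [← sub_eq_zero]
        rw [← hst]
        abel
      have h4 : t⁻¹ • (t • q₂) = t⁻¹ • (-(s • w)) := by rw [h3]
      rw [smul_smul, inv_mul_cancel₀ ht, one_smul] at h4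
      have hq2 : q₂ = (-(t⁻¹ * s)) • w := by
        rw [h4]
        module
      rw [← hrel, hq2]
      simp only [smul_eq_C_mul, derivative_C_mul]
      ring
  -- linear independence of x₀, y₀
  have hindg : LinearIndependent K ![x₀, y₀] := by
    rw [LinearIndependent.pair_iff]
    intro s t hst
    apply hpair
    have h5 := congrArg θ hst
    simpa [map_add, map_smul, hq1, hq₂'] using h5
  -- span of w, q₂ is the range
  have hli2 : LinearIndependent K ![w, q₂] := LinearIndependent.pair_iff.mpr hpair
  have hsp : Submodule.span K {w, q₂} = LinearMap.range θ := by
    apply Submodule.eq_of_le_of_finrank_le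
    · rw [Submodule.span_le]
      rintro x hx
      rcases hx with rfl | hx
      · exact ⟨x₀, hq1⟩
      · rcases hx with rfl
        exact ⟨y₀, hq₂'⟩
    · rw [hrk]
      have hset : ({w, q₂} : Set K[X]) = Set.range ![w, q₂] := by
        ext p
        simp [Fin.exists_fin_two, eq_comm]
        tauto
      rw [hset, finrank_span_eq_card hli2]
      simp
  refine ⟨x₀, y₀, S, 0, hindg, ?_, ?_, by norm_num, ?_⟩
  · -- unique decomposition
    intro z
    have hz : θ z ∈ Submodule.span K {w, q₂} := hsp ▸ ⟨z, rfl⟩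
    obtain ⟨α, β, hαβ⟩ := Submodule.mem_span_pair.mp hz
    have hker1 : z - α • x₀ - β • y₀ ∈ S := by
      rw [hSmem]
      rw [map_sub, map_sub, map_smul, map_smul, hq1, hq₂', ← hαβ]
      abel
    refine ⟨⟨⟨z - α • x₀ - β • y₀, hker1⟩, α, β⟩, ?_, ?_⟩
    · show z = (z - α • x₀ - β • y₀) + α • x₀ + β • y₀
      abel
    · rintro ⟨⟨s', hs'⟩, α', β'⟩ h'
      simp only at h'
      have hθz' : θ z = α' • w + β' • q₂ := by
        rw [h', map_add, map_add, map_smul, map_smul, hq1, hq₂', (hSmem s').mp hs', zero_add]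
      have e : α' • w + β' • q₂ = α • w + β • q₂ := hθz'.symm.trans hαβ.symm
      have hzero : (α' - α) • w + (β' - β) • q₂ = 0 := by
        have : (α' - α) • w + (β' - β) • q₂
            = (α' • w + β' • q₂) - (α • w + β • q₂) := by module
        rw [this, e, sub_self]
      obtain ⟨h6, h7⟩ := hpair _ _ hzero
      have hα' : α' = α := sub_eq_zero.mp h6
      have hβ' : β' = β := sub_eq_zero.mp h7
      subst hα' hβ'
      have hs'eq : s' = z - α' • x₀ - β' • y₀ := by
        rw [h']
        abel
      simp only [Prod.mk.injEq, and_true]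
      exact Subtype.ext hs'eq
  · -- brackets lie in S ⊔ span {x₀}
    intro Z W
    have hZr : θ Z ∈ Submodule.span K {w, q₂} := hsp ▸ ⟨Z, rfl⟩
    have hWr : θ W ∈ Submodule.span K {w, q₂} := hsp ▸ ⟨W, rfl⟩
    obtain ⟨α, β, hZc⟩ := Submodule.mem_span_pair.mp hZr
    obtain ⟨γ, δ, hWc⟩ := Submodule.mem_span_pair.mp hWr
    have hbZW : θ ⁅Z, W⁆ = (α * δ - β * γ) • w := by
      rw [hbr, ← hZc, ← hWc]
      simp only [smul_eq_C_mul, derivative_add, derivative_C_mul, map_sub, map_mul]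
      linear_combination (C α * C δ - C β * C γ) * hrel
    have h1 : ⁅Z, W⁆ - (α * δ - β * γ) • x₀ ∈ S.toSubmodule := by
      have : (⁅Z, W⁆ - (α * δ - β * γ) • x₀) ∈ S := by
        rw [hSmem, map_sub, map_smul, hq1, hbZW, sub_self]
      exact this
    have h2 : (α * δ - β * γ) • x₀ ∈ Submodule.span K ({x₀} : Set g) :=
      Submodule.smul_mem _ _ (Submodule.mem_span_singleton_self x₀)
    have h8 := Submodule.add_mem_sup h1 h2
    simpa using h8
  · -- the last condition with m = 0
    rw [hSmem]
    rw [map_add, map_smul, hbr, hq1, hq₂', hrel]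
    norm_num


/-- A finite-dimensional Lie algebra `𝔤` over `K` admits an action of
Type 2 on `K[t]` (a nontrivial action `θ` with `Rank(θ) = 2`) if and only if there exist
two linearly independent vectors `x₀, y₀ ∈ 𝔤` and a Lie ideal `S ⊆ 𝔤` such that
`𝔤 = S ⊕ K·x₀ ⊕ K·y₀` as subspaces, `[𝔤,𝔤] ⊆ S ⊕ K·x₀`, and
`[x₀,y₀] + (m−1)·x₀ ∈ S` for some nonnegative integer `m ≠ 1`. -/
theorem exists_type_two_action_iff {K : Type*} [RCLike K]
    {g : Type*} [LieRing g] [LieAlgebra K g] [FiniteDimensional K g] :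
    (∃ θ : g →ₗ[K] Polynomial K,
        (∀ X Y : g, θ ⁅X, Y⁆ = θ X * derivative (θ Y) - derivative (θ X) * θ Y) ∧
        θ ≠ 0 ∧ Module.finrank K (LinearMap.range θ) = 2) ↔
      ∃ (x₀ y₀ : g) (S : LieIdeal K g) (m : ℕ),
        LinearIndependent K ![x₀, y₀] ∧
        -- `𝔤 = S ⊕ K·x₀ ⊕ K·y₀` (direct sum of subspaces)
        (∀ v : g, ∃! p : S × K × K,
            v = (p.1 : g) + p.2.1 • x₀ + p.2.2 • y₀) ∧
        -- `[𝔤,𝔤] ⊆ S ⊕ K·x₀`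
        (∀ X Y : g, ⁅X, Y⁆ ∈ S.toSubmodule ⊔ Submodule.span K {x₀}) ∧
        -- `[x₀,y₀] + (m−1)·x₀ ∈ S` for some nonnegative integer `m ≠ 1`
        m ≠ 1 ∧ ⁅x₀, y₀⁆ + ((m : K) - 1) • x₀ ∈ S := by
  constructor
  · rintro ⟨θ, h1, h2, h3⟩
    exact forward_dir θ h1 h2 h3
  · rintro ⟨x₀, y₀, S, m, hind, hdec, hbr2, hm1, hS⟩
    exact reverse_dir x₀ y₀ S m hind hdec hm1 hS
end

section
/- Let A be a commutative unital K-algebra, L an A-Lie algebra, and (D,δ) a derivation of L. Then A ⊕ L equipped with the bracket [(a₁,l₁),(a₂,l₂)] = (a₁δ(a₂) − a₂δ(a₁), [l₁,l₂] + a₁·D l₂ − a₂·D l₁) is a Lie algebra over K; moreover the anchor θ(a,l) = a·δ is both an A-module map and a Lie algebra morphism from A ⊕ L to Der(A), and the Leibniz rule [(a₁,l₁), b·(a₂,l₂)] = b·[(a₁,l₁),(a₂,l₂)] + (a₁·δ(b))·(a₂,l₂) holds for all b ∈ A. In other words, the extended crossed product A ⋉_{(D,δ)} L is a Lie Rinehart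 algebra over A. -/
/-- The bracket of the extended crossed product `A ⋉_{(D,δ)} L`. -/
def ecpBracket {K A L : Type*} [CommRing K] [CommRing A] [Algebra K A]
    [LieRing L] [Module K L] [Module A L]
    (δ : Derivation K A A) (D : L →ₗ[K] L) : (A × L) → (A × L) → (A × L) :=
  fun p q => (p.1 * δ q.1 - q.1 * δ p.1, ⁅p.2, q.2⁆ + p.1 • D q.2 - q.1 • D p.2)

/-- The anchor of the extended crossed product `A ⋉_{(D,δ)} L`, `θ(a,l) = a·δ`. -/
def ecpAnchor {K A L : Type*} [CommRing K] [CommRing A] [Algebra K A]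
    [AddCommGroup L] [Module A L] (δ : Derivation K A A) : (A × L) → Derivation K A A :=
  fun p => p.1 • δ

/-- Let `A` be a commutative unital `K`-algebra, `L` an `A`-Lie algebra
and `(D,δ)` a derivation of `L`.  Then `A ⊕ L`, with the bracket
`[(a₁,l₁),(a₂,l₂)] = (a₁δ(a₂) − a₂δ(a₁), [l₁,l₂] + a₁·D l₂ − a₂·D l₁)`, is a Lie algebra
over `K`; the anchor `θ(a,l) = a·δ` is an `A`-module map and a Lie algebra morphism into
`Der(A)`, and the Leibniz rule holds.  In other words, the extended crossed product
`A ⋉_{(D,δ)} L` is a Lie Rinehart algebra over `A`. -/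
theorem extendedCrossedProduct_isLieRinehart {K : Type*} [RCLike K]
    {A : Type*} [CommRing A] [Algebra K A]
    {L : Type*} [LieRing L] [Module K L] [Module A L] [IsScalarTower K A L]
    (hbilin : ∀ (a : A) (l₁ l₂ : L), ⁅a • l₁, l₂⁆ = a • ⁅l₁, l₂⁆)
    (δ : Derivation K A A) (D : L →ₗ[K] L)
    (hD₁ : ∀ l₁ l₂ : L, D ⁅l₁, l₂⁆ = ⁅D l₁, l₂⁆ + ⁅l₁, D l₂⁆)
    (hD₂ : ∀ (a : A) (l : L), D (a • l) = δ a • l + a • D l) :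
    -- `A ⊕ L` with `ecpBracket δ D` is a Lie algebra over `K`:
    (∀ p q r : A × L, ecpBracket δ D (p + q) r = ecpBracket δ D p r + ecpBracket δ D q r) ∧
    (∀ p q r : A × L, ecpBracket δ D p (q + r) = ecpBracket δ D p q + ecpBracket δ D p r) ∧
    (∀ (c : K) (p q : A × L), ecpBracket δ D (c • p) q = c • ecpBracket δ D p q) ∧
    (∀ (c : K) (p q : A × L), ecpBracket δ D p (c • q) = c • ecpBracket δ D p q) ∧
    (∀ p : A × L, ecpBracket δ D p p = 0) ∧
    (∀ p q r : A × L, ecpBracket δ D p (ecpBracket δ D q r) =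
        ecpBracket δ D (ecpBracket δ D p q) r + ecpBracket δ D q (ecpBracket δ D p r)) ∧
    -- the anchor `θ(a,l) = a·δ` is an `A`-module map (and additive) ...
    (∀ p q : A × L, ecpAnchor (L := L) δ (p + q) = ecpAnchor (L := L) δ p + ecpAnchor (L := L) δ q) ∧
    (∀ (b : A) (p : A × L), ecpAnchor (L := L) δ (b • p) = b • ecpAnchor (L := L) δ p) ∧
    -- ... and a morphism of Lie algebras into `Der(A)`:
    (∀ p q : A × L, ecpAnchor (L := L) δ (ecpBracket δ D p q) =
        ⁅ecpAnchor (L := L) δ p, ecpAnchor (L := L) δ q⁆) ∧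
    -- the Leibniz rule:
    (∀ (b : A) (p q : A × L), ecpBracket δ D p (b • q) =
        b • ecpBracket δ D p q + (p.1 * δ b) • q) := by

  classical
  -- auxiliary linearity lemmas for the `A`-bilinear bracket on `L`
  have hright : ∀ (a : A) (x y : L), ⁅x, a • y⁆ = a • ⁅x, y⁆ := by
    intro a x y
    rw [← lie_skew, hbilin, ← lie_skew x y, smul_neg]
  have hKl : ∀ (c : K) (x y : L), ⁅c • x, y⁆ = c • ⁅x, y⁆ := by
    intro c x y
    rw [← algebraMap_smul A c x, hbilin, algebraMap_smul]
  have hKr : ∀ (c : K) (x y : L), ⁅x, c • y⁆ = c • ⁅x, y⁆ := by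
    intro c x y
    rw [← algebraMap_smul A c y, hright, algebraMap_smul]
  have hsk : ∀ (u v : L), ⁅D u, v⁆ = -⁅v, D u⁆ := by
    intro u v; rw [← lie_skew]
  refine ⟨?_, ?_, ?_, ?_, ?_, ?_, ?_, ?_, ?_, ?_⟩
  · intro p q r
    refine Prod.ext ?_ ?_
    · simp only [ecpBracket, Prod.fst_add, Prod.snd_add, map_add]
      ring
    · simp only [ecpBracket, Prod.fst_add, Prod.snd_add, add_lie, map_add,
        smul_add, add_smul]
      module
  · intro p q r
    refine Prod.ext ?_ ?_
    · simp only [ecpBracket, Prod.fst_add, Prod.snd_add, map_add]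
      ring
    · simp only [ecpBracket, Prod.fst_add, Prod.snd_add, lie_add, map_add,
        smul_add, add_smul]
      module
  · intro c p q
    refine Prod.ext ?_ ?_
    · simp only [ecpBracket, Prod.smul_fst, Prod.smul_snd, Derivation.map_smul,
        smul_mul_assoc, mul_smul_comm, smul_sub]
    · simp only [ecpBracket, Prod.smul_fst, Prod.smul_snd, hKl, Derivation.map_smul, map_smul,
        smul_assoc, smul_sub, smul_add]
      rw [smul_comm c p.fst (D q.snd), smul_comm c q.fst (D p.snd)]
  · intro c p q
    refine Prod.ext ?_ ?_
    · simp only [ecpBracket, Prod.smul_fst, Prod.smul_snd, Derivation.map_smul,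
        smul_mul_assoc, mul_smul_comm, smul_sub]
    · simp only [ecpBracket, Prod.smul_fst, Prod.smul_snd, hKr, Derivation.map_smul, map_smul,
        smul_assoc, smul_sub, smul_add]
      rw [smul_comm c p.fst (D q.snd), smul_comm c q.fst (D p.snd)]
  · intro p
    refine Prod.ext ?_ ?_
    · simp only [ecpBracket, Prod.fst_zero]; ring
    · simp only [ecpBracket, Prod.snd_zero, lie_self]
      abel
  · intro p q r
    refine Prod.ext ?_ ?_
    · simp only [ecpBracket, Prod.fst_add, Prod.snd_add, Derivation.leibniz,
        map_sub, smul_eq_mul]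
      ring
    · simp only [ecpBracket, Prod.fst_add, Prod.snd_add, map_add, map_sub,
        hD₁, hD₂, hbilin, hright, lie_add, add_lie, lie_sub, sub_lie, lie_lie,
        hsk, smul_add, smul_sub, smul_smul, smul_neg, neg_smul, sub_smul, add_smul,
        Derivation.leibniz, smul_eq_mul]
      module
  · intro p q
    simp only [ecpAnchor, Prod.fst_add, add_smul]
  · intro b p
    simp only [ecpAnchor, Prod.smul_fst, smul_smul, smul_eq_mul]
  · intro p q
    ext a
    simp only [ecpAnchor, ecpBracket, Derivation.commutator_apply,
      Derivation.smul_apply, Derivation.leibniz, smul_eq_mul]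
    ring
  · intro b p q
    refine Prod.ext ?_ ?_
    · simp only [ecpBracket, Prod.fst_add, Prod.smul_fst, Prod.smul_snd,
        Derivation.leibniz, smul_eq_mul]
      ring
    · simp only [ecpBracket, Prod.snd_add, Prod.smul_fst, Prod.smul_snd,
        hright, hD₂, smul_eq_mul, smul_add, smul_sub, smul_smul]
      module
end

section
/- Assume A is a commutative unital K-algebra with no zero-divisors. For i = 1, 2, let (Dᵢ,δᵢ) be a derivation of an A-Lie algebra Lᵢ with δᵢ ≠ 0. Then the extended crossed products A ⋉_{(D₁,δ₁)} L₁ and A ⋉_{(D₂,δ₂)} L₂ are isomorphic as Lie Rinehart algebras if and only if (D₁,δ₁;L₁) ∼ (D₂,δ₂;L₂), that is, if and only if there exist an A-linear Lie algebra isomorphism Φ : L₁ → L₂, an invertible element a₀ ∈ A, and l₀ ∈ L₂ such that D₁ = a₀·(Φ⁻¹ ∘ D₂ ∘ Φ) + [Φ⁻¹(l₀), ·] and δ₁ = a₀·δ₂. -/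
/-- Let `A` be a commutative unital `K`-algebra with no zero-divisors and,
for `i = 1,2`, let `(Dᵢ,δᵢ)` be a derivation of an `A`-Lie algebra `Lᵢ` with `δᵢ ≠ 0`.
Then `A ⋉_{(D₁,δ₁)} L₁ ≅ A ⋉_{(D₂,δ₂)} L₂` as Lie Rinehart algebras if and only if
`(D₁,δ₁;L₁) ∼ (D₂,δ₂;L₂)`: there exist an `A`-linear Lie algebra isomorphism
`Φ : L₁ → L₂`, an invertible `a₀ ∈ A` and `l₀ ∈ L₂` with
`D₁ = a₀·(Φ⁻¹ ∘ D₂ ∘ Φ) + [Φ⁻¹(l₀), ·]` and `δ₁ = a₀·δ₂`. -/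
theorem extendedCrossedProducts_isomorphic_iff {K : Type*} [RCLike K]
    {A : Type*} [CommRing A] [Algebra K A] [NoZeroDivisors A]
    {L₁ L₂ : Type*} [LieRing L₁] [Module K L₁] [Module A L₁] [IsScalarTower K A L₁]
    [LieRing L₂] [Module K L₂] [Module A L₂] [IsScalarTower K A L₂]
    (hbilin₁ : ∀ (a : A) (l l' : L₁), ⁅a • l, l'⁆ = a • ⁅l, l'⁆)
    (hbilin₂ : ∀ (a : A) (l l' : L₂), ⁅a • l, l'⁆ = a • ⁅l, l'⁆)
    (δ₁ δ₂ : Derivation K A A) (D₁ : L₁ →ₗ[K] L₁) (D₂ : L₂ →ₗ[K] L₂)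
    (hD₁lie : ∀ l l' : L₁, D₁ ⁅l, l'⁆ = ⁅D₁ l, l'⁆ + ⁅l, D₁ l'⁆)
    (hD₁smul : ∀ (a : A) (l : L₁), D₁ (a • l) = δ₁ a • l + a • D₁ l)
    (hD₂lie : ∀ l l' : L₂, D₂ ⁅l, l'⁆ = ⁅D₂ l, l'⁆ + ⁅l, D₂ l'⁆)
    (hD₂smul : ∀ (a : A) (l : L₂), D₂ (a • l) = δ₂ a • l + a • D₂ l)
    (hδ₁ : δ₁ ≠ 0) (hδ₂ : δ₂ ≠ 0) :
    -- the two extended crossed products are isomorphic as Lie Rinehart algebras ...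
    (∃ Ψ : (A × L₁) ≃ₗ[A] (A × L₂),
        (∀ p q : A × L₁, Ψ (ecpBracket δ₁ D₁ p q) = ecpBracket δ₂ D₂ (Ψ p) (Ψ q)) ∧
        (∀ p : A × L₁, (Ψ p).1 • δ₂ = p.1 • δ₁)) ↔
    -- ... if and only if `(D₁,δ₁;L₁) ∼ (D₂,δ₂;L₂)`
    (∃ Φ : L₁ ≃ₗ[A] L₂, (∀ l l' : L₁, Φ ⁅l, l'⁆ = ⁅Φ l, Φ l'⁆) ∧
        ∃ (a₀ : A) (l₀ : L₂), IsUnit a₀ ∧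
          (∀ l : L₁, D₁ l = a₀ • Φ.symm (D₂ (Φ l)) + ⁅Φ.symm l₀, l⁆) ∧
          (∀ a : A, δ₁ a = a₀ * δ₂ a)) := by
  have lie_smul₂ : ∀ (a : A) (l l' : L₂), ⁅l, a • l'⁆ = a • ⁅l, l'⁆ := by
    intro a l l'
    rw [← lie_skew, hbilin₂, ← lie_skew l l', smul_neg]
  obtain ⟨b₂, hb₂⟩ : ∃ b, δ₂ b ≠ 0 := by
    by_contra h; push_neg at h; exact hδ₂ (by ext x; simpa using h x)
  obtain ⟨b₁, hb₁⟩ : ∃ b, δ₁ b ≠ 0 := by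
    by_contra h; push_neg at h; exact hδ₁ (by ext x; simpa using h x)
  constructor
  · rintro ⟨Ψ, hbr, hanc⟩
    -- anchor condition for the inverse
    have hanc' : ∀ q : A × L₂, (Ψ.symm q).1 • δ₁ = q.1 • δ₂ := by
      intro q
      have := hanc (Ψ.symm q)
      rw [Ψ.apply_symm_apply] at this
      exact this.symm
    -- first components vanish
    have h1 : ∀ l : L₁, (Ψ (0, l)).1 = 0 := by
      intro l
      have := congrFun (congrArg (DFunLike.coe) (hanc (0, l))) b₂
      simp only [zero_smul, Derivation.coe_smul, Pi.smul_apply, smul_eq_mul,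
        Derivation.coe_zero, Pi.zero_apply] at this
      rcases mul_eq_zero.mp this with h | h
      · exact h
      · exact absurd h hb₂
    have h1' : ∀ m : L₂, (Ψ.symm (0, m)).1 = 0 := by
      intro m
      have := congrFun (congrArg (DFunLike.coe) (hanc' (0, m))) b₁
      simp only [zero_smul, Derivation.coe_smul, Pi.smul_apply, smul_eq_mul,
        Derivation.coe_zero, Pi.zero_apply] at this
      rcases mul_eq_zero.mp this with h | h
      · exact h
      · exact absurd h hb₁
    -- the induced map on L
    let Φ : L₁ ≃ₗ[A] L₂ :=
      { toFun := fun l => (Ψ (0, l)).2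
        map_add' := by
          intro l l'
          have h : ((0 : A), l + l') = ((0,l) : A × L₁) + (0, l') := by simp
          simp only [h, map_add, Prod.snd_add]
        map_smul' := by
          intro a l
          have h : ((0 : A), a • l) = a • ((0,l) : A × L₁) := by simp
          simp only [h, map_smul, Prod.smul_snd, RingHom.id_apply]
        invFun := fun m => (Ψ.symm (0, m)).2
        left_inv := by
          intro l
          show (Ψ.symm (0, (Ψ (0, l)).2)).2 = l
          have h : ((0 : A), (Ψ (0, l)).2) = Ψ (0, l) := by nth_rewrite 1 [← h1 l]; rfl
          rw [h, Ψ.symm_apply_apply]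
        right_inv := by
          intro m
          show (Ψ ((0 : A), (Ψ.symm (0, m)).2)).2 = m
          have h : ((0 : A), (Ψ.symm (0, m)).2) = Ψ.symm (0, m) := by nth_rewrite 1 [← h1' m]; rfl
          rw [h, Ψ.apply_symm_apply] }
    have hΦeq : ∀ l : L₁, Ψ (0, l) = (0, Φ l) := fun l => Prod.ext_iff.mpr ⟨h1 l, rfl⟩
    -- Φ preserves brackets
    have hΦlie : ∀ l l' : L₁, Φ ⁅l, l'⁆ = ⁅Φ l, Φ l'⁆ := by
      intro l l'
      have h := hbr (0, l) (0, l')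
      simp only [ecpBracket, map_zero, mul_zero, sub_zero, zero_mul, zero_smul,
        add_zero, sub_zero, hΦeq] at h
      have h2 := congrArg Prod.snd h
      simpa using h2
    refine ⟨Φ, hΦlie, (Ψ (1, 0)).1, (Ψ (1, 0)).2, ?_, ?_, ?_⟩
    · -- invertibility
      have hc : ∀ a : A, δ₁ a = (Ψ (1, 0)).1 * δ₂ a := by
        intro a
        have := congrFun (congrArg (DFunLike.coe) (hanc (1, 0))) a
        simpa using this.symm
      have hc' : ∀ a : A, δ₂ a = (Ψ.symm (1, 0)).1 * δ₁ a := by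
        intro a
        have := congrFun (congrArg (DFunLike.coe) (hanc' (1, 0))) a
        simpa using this.symm
      refine IsUnit.of_mul_eq_one (a := (Ψ (1, 0)).1) (Ψ.symm (1, 0)).1 ?_
      have h := hc' b₂
      rw [hc b₂] at h
      have h2 : ((Ψ.symm (1, 0)).1 * (Ψ (1, 0)).1 - 1) * δ₂ b₂ = 0 := by linear_combination -h
      rcases mul_eq_zero.mp h2 with h3 | h3
      · have h4 := sub_eq_zero.mp h3
        linear_combination h4
      · exact absurd h3 hb₂
    · -- formula for D₁
      intro l
      have key := hbr (1, 0) (0, l)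
      simp only [ecpBracket, map_zero, map_one, mul_zero, zero_mul, sub_zero, zero_sub,
        lie_zero, zero_lie, one_smul, zero_smul, zero_add, add_zero, neg_zero, hΦeq] at key
      have key2 : Φ (D₁ l) = ⁅(Ψ (1, 0)).2, Φ l⁆ + (Ψ (1, 0)).1 • D₂ (Φ l) := by
        have h2 := congrArg Prod.snd key
        simpa using h2
      have hsymm : Φ.symm ⁅(Ψ (1, 0)).2, Φ l⁆ = ⁅Φ.symm (Ψ (1, 0)).2, l⁆ := by
        apply Φ.injective
        simp only [LinearEquiv.apply_symm_apply, hΦlie]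
      have h5 : D₁ l = Φ.symm (⁅(Ψ (1, 0)).2, Φ l⁆ + (Ψ (1, 0)).1 • D₂ (Φ l)) := by
        rw [← key2, Φ.symm_apply_apply]
      rw [h5, map_add, map_smul, hsymm, add_comm]
    · -- formula for δ₁
      intro a
      have := congrFun (congrArg (DFunLike.coe) (hanc (1, 0))) a
      simpa using this.symm
  · rintro ⟨Φ, hΦlie, a₀, l₀, ha₀, hD, hδ⟩
    obtain ⟨u, hu⟩ := ha₀
    set b₀ : A := ((u⁻¹ : Aˣ) : A) with hb₀
    have hub : a₀ * b₀ = 1 := by rw [← hu, hb₀]; exact_mod_cast u.mul_inv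
    have hbu : b₀ * a₀ = 1 := by rw [← hu, hb₀]; exact_mod_cast u.inv_mul
    have hΦD : ∀ l : L₁, Φ (D₁ l) = a₀ • D₂ (Φ l) + ⁅l₀, Φ l⁆ := by
      intro l
      rw [hD l, map_add, map_smul, Φ.apply_symm_apply, hΦlie, Φ.apply_symm_apply]
    let Ψ : (A × L₁) ≃ₗ[A] (A × L₂) :=
      { toFun := fun p => (a₀ * p.1, p.1 • l₀ + Φ p.2)
        map_add' := by
          intro p q
          refine Prod.ext_iff.mpr ⟨by simp [mul_add], ?_⟩
          show (p.1 + q.1) • l₀ + Φ (p.2 + q.2) = (p.1 • l₀ + Φ p.2) + (q.1 • l₀ + Φ q.2)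
          rw [add_smul, map_add]; abel
        map_smul' := by
          intro a p
          refine Prod.ext_iff.mpr ⟨by simp [mul_assoc, mul_comm, mul_left_comm], ?_⟩
          show (a * p.1) • l₀ + Φ (a • p.2) = a • (p.1 • l₀ + Φ p.2)
          rw [map_smul, smul_add, mul_smul]
        invFun := fun q => (b₀ * q.1, Φ.symm q.2 - (b₀ * q.1) • Φ.symm l₀)
        left_inv := by
          intro p
          have h5 : b₀ * (a₀ * p.1) = p.1 := by rw [← mul_assoc, hbu, one_mul]
          refine Prod.ext_iff.mpr ⟨h5, ?_⟩
          show Φ.symm (p.1 • l₀ + Φ p.2) - (b₀ * (a₀ * p.1)) • Φ.symm l₀ = p.2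
          rw [h5, map_add, map_smul, Φ.symm_apply_apply]
          abel
        right_inv := by
          intro q
          have h5 : a₀ * (b₀ * q.1) = q.1 := by rw [← mul_assoc, hub, one_mul]
          refine Prod.ext_iff.mpr ⟨h5, ?_⟩
          show (b₀ * q.1) • l₀ + Φ (Φ.symm q.2 - (b₀ * q.1) • Φ.symm l₀) = q.2
          rw [map_sub, map_smul, Φ.apply_symm_apply, Φ.apply_symm_apply]
          abel }
    have hΨapp : ∀ p : A × L₁, Ψ p = (a₀ * p.1, p.1 • l₀ + Φ p.2) := fun _ => rfl
    refine ⟨Ψ, ?_, ?_⟩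
    · intro p q
      obtain ⟨a₁, l₁⟩ := p
      obtain ⟨a₂, l₂⟩ := q
      rw [hΨapp, hΨapp, hΨapp]
      simp only [ecpBracket]
      refine Prod.ext_iff.mpr ⟨?_, ?_⟩
      · show a₀ * (a₁ * δ₁ a₂ - a₂ * δ₁ a₁) =
          (a₀ * a₁) * δ₂ (a₀ * a₂) - (a₀ * a₂) * δ₂ (a₀ * a₁)
        rw [hδ, hδ]
        have e1 : δ₂ (a₀ * a₂) = a₀ * δ₂ a₂ + a₂ * δ₂ a₀ := by
          rw [Derivation.leibniz]; simp only [smul_eq_mul]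
        have e2 : δ₂ (a₀ * a₁) = a₀ * δ₂ a₁ + a₁ * δ₂ a₀ := by
          rw [Derivation.leibniz]; simp only [smul_eq_mul]
        rw [e1, e2]; ring
      · show (a₁ * δ₁ a₂ - a₂ * δ₁ a₁) • l₀ + Φ (⁅l₁, l₂⁆ + a₁ • D₁ l₂ - a₂ • D₁ l₁) =
          ⁅a₁ • l₀ + Φ l₁, a₂ • l₀ + Φ l₂⁆ + (a₀ * a₁) • D₂ (a₂ • l₀ + Φ l₂)
            - (a₀ * a₂) • D₂ (a₁ • l₀ + Φ l₁)
        rw [map_sub, map_add, map_smul, map_smul, hΦD, hΦD, hΦlie]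
        simp only [map_add, hD₂smul, hδ, add_lie, lie_add, hbilin₂, lie_smul₂, lie_self,
          smul_zero, smul_add, smul_sub, sub_smul, add_smul, smul_smul]
        rw [neg_eq_iff_eq_neg.mp (lie_skew l₀ (Φ l₁))]
        module
    · intro p
      ext x
      rw [hΨapp]
      simp only [Derivation.coe_smul, Pi.smul_apply, smul_eq_mul]
      rw [hδ]; ring
end

section
/- Let θ be a nontrivial action of a finite-dimensional Lie algebra 𝔤 on K[t], let K(t) be the field of fractions of K[t], and let θ̂ : K(t) ⊗_K 𝔤 → K(t) be the K(t)-linear extension of θ (using the identification Der(K[t]) ≅ K[t] ⊆ K(t)). Then there exists u ∈ K(t) ⊗_K 𝔤 with θ̂(u) = 1. Moreover, if Rank(θ) = 3, then u can be chosen inside K[t] ⊗_K 𝔤. -/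
open Polynomial

set_option maxHeartbeats 1000000 in
lemma key {K : Type*} [Field K] [CharZero K] (V : Submodule K (Polynomial K))
    [FiniteDimensional K V]
    (hbr : ∀ f g, f ∈ V → g ∈ V → f * derivative g - derivative f * g ∈ V)
    (hV : Module.finrank K V = 3) :
    ∃ v ∈ V, v ≠ 0 ∧ v.natDegree = 0 := by
  -- bound on degrees
  obtain ⟨N, hN⟩ : ∃ N : ℕ, ∀ v ∈ V, natDegree v ≤ N := by
    obtain ⟨S, hS⟩ : V.FG := (Submodule.fg_top V).1 (Module.finite_def.1 inferInstance)
    refine ⟨S.sup natDegree, ?_⟩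
    intro v hv
    rw [← hS] at hv
    have hle : Submodule.span K (S : Set (Polynomial K)) ≤ degreeLE K ((S.sup natDegree : ℕ) : WithBot ℕ) :=
      Submodule.span_le.2 fun p hp => mem_degreeLE.2
        (le_trans degree_le_natDegree (by exact_mod_cast Finset.le_sup hp))
    exact natDegree_le_iff_degree_le.2 (mem_degreeLE.1 (hle hv))
  classical
  set W : ℕ → Submodule K V := fun n => (degreeLT K n).comap V.subtype with hW
  have hmemW : ∀ (v : V) (n : ℕ), v ∈ W n ↔ (v : Polynomial K).degree < n := by
    intro v n; simp [hW, Submodule.mem_comap, mem_degreeLT]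
  have hmono : Monotone W := by
    intro m n hmn v hv
    rw [hmemW] at hv ⊢
    exact hv.trans_le (by exact_mod_cast Nat.cast_le.2 hmn)
  set f : ℕ → ℕ := fun n => Module.finrank K (W n) with hf
  have hf0 : f 0 = 0 := by
    have hbot : W 0 = ⊥ := by
      rw [eq_bot_iff]; intro v hv
      rw [hmemW] at hv
      simp only [Nat.cast_zero] at hv
      have hv0 : (v : Polynomial K) = 0 := by
        by_contra h
        exact absurd (zero_le_degree_iff.2 h) (not_le.2 hv)
      exact Submodule.mem_bot K |>.2 (Subtype.ext hv0)
    simp only [hf]; rw [hbot]; exact finrank_bot K V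
  have hftop : f (N + 1) = 3 := by
    have htop : W (N + 1) = ⊤ := by
      rw [eq_top_iff]; intro v _
      rw [hmemW]
      calc (v : Polynomial K).degree ≤ ((v : Polynomial K).natDegree : WithBot ℕ) :=
            degree_le_natDegree
        _ < ((N + 1 : ℕ) : WithBot ℕ) := by
            exact_mod_cast Nat.lt_succ_of_le (hN _ v.2)
    simp only [hf]; rw [htop, finrank_top]; exact hV
  have hfmono : Monotone f := fun m n h => Submodule.finrank_mono (hmono h)
  -- each step increases rank by at most 1
  have hstep : ∀ n, f (n + 1) ≤ f n + 1 := by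
    intro n
    by_cases hWeq : W (n + 1) ≤ W n
    · have : f (n + 1) ≤ f n := Submodule.finrank_mono hWeq
      omega
    · obtain ⟨x, hx1, hx2⟩ := SetLike.not_le_iff_exists.1 hWeq
      have hxne : x ≠ 0 := fun h => hx2 (h ▸ (W n).zero_mem)
      have hxc : ((x : V) : Polynomial K).coeff n ≠ 0 := by
        intro h
        apply hx2
        rw [hmemW] at hx1 ⊢
        rw [degree_lt_iff_coeff_zero] at hx1 ⊢
        intro m hm
        rcases eq_or_lt_of_le hm with h' | h'
        · exact h' ▸ h
        · exact hx1 m (by exact_mod_cast Nat.succ_le_of_lt (by exact_mod_cast h'))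
      have hxcoeff : ∀ y ∈ W (n + 1), ∀ m, n + 1 ≤ m → ((y : V) : Polynomial K).coeff m = 0 := by
        intro y hy m hm
        rw [hmemW, degree_lt_iff_coeff_zero] at hy
        exact hy m (by exact_mod_cast hm)
      have hsub : W (n + 1) ≤ W n ⊔ (K ∙ x) := by
        intro y hy
        set c : K := ((y : V) : Polynomial K).coeff n / ((x : V) : Polynomial K).coeff n with hc
        have hyx : y - c • x ∈ W n := by
          rw [hmemW, degree_lt_iff_coeff_zero]
          intro m hm
          have hcoe : (((y - c • x : V)) : Polynomial K)
              = ((y : V) : Polynomial K) - c • ((x : V) : Polynomial K) := by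
            push_cast
            rfl
          rw [hcoe, coeff_sub, coeff_smul]
          rcases eq_or_lt_of_le hm with h' | h'
          · rw [← h', hc, smul_eq_mul, div_mul_cancel₀ _ hxc, sub_self]
          · rw [hxcoeff y hy m (by omega), hxcoeff x hx1 m (by omega), smul_zero, sub_self]
        have : (y - c • x) + c • x ∈ W n ⊔ (K ∙ x) :=
          Submodule.add_mem_sup hyx (Submodule.smul_mem _ _ (Submodule.mem_span_singleton_self x))
        rwa [sub_add_cancel] at this
      have h1 : f (n + 1) ≤ Module.finrank K (W n ⊔ (K ∙ x) : Submodule K V) :=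
        Submodule.finrank_mono hsub
      have h2 := Submodule.finrank_sup_add_finrank_inf_eq (W n) (K ∙ x)
      have h3 : Module.finrank K (K ∙ x) = 1 := finrank_span_singleton hxne
      simp only [hf] at *
      omega
  -- jumps ↔ degree witnesses
  have hwit : ∀ n, f n < f (n + 1) → ∃ v ∈ V, v ≠ 0 ∧ natDegree v = n := by
    intro n hn
    have hlt : W n < W (n + 1) := lt_of_le_of_ne (hmono (Nat.le_succ n))
      (fun h => hn.ne (congrArg (fun U : Submodule K ↥V => Module.finrank K U) h))
    obtain ⟨x, hx1, hx2⟩ := SetLike.exists_of_lt hlt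
    refine ⟨(x : Polynomial K), x.2, ?_, ?_⟩
    · intro h
      apply hx2
      rw [hmemW, h]
      simpa using (by exact_mod_cast WithBot.bot_lt_coe n : (⊥ : WithBot ℕ) < (n : WithBot ℕ))
    · rw [hmemW] at hx1 hx2
      have h1 : (x : Polynomial K).degree < ((n : ℕ) + 1 : ℕ) := hx1
      have h2 : ¬ (x : Polynomial K).degree < (n : ℕ) := hx2
      have hne : (x : Polynomial K) ≠ 0 := by
        intro h
        apply h2
        rw [h, degree_zero]
        exact_mod_cast WithBot.bot_lt_coe n
      have := degree_eq_natDegree hne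
      rw [this] at h1 h2
      have hub : natDegree (x : Polynomial K) < n + 1 := by exact_mod_cast h1
      have hlb : n ≤ natDegree (x : Polynomial K) := by
        by_contra h
        exact h2 (by exact_mod_cast not_le.1 h)
      omega
  have hjump : ∀ v ∈ V, v ≠ 0 → f (natDegree v) < f (natDegree v + 1) := by
    intro v hv hv0
    apply Submodule.finrank_lt_finrank_of_lt
    rw [SetLike.lt_iff_le_and_exists]
    refine ⟨hmono (Nat.le_succ _), ⟨v, hv⟩, ?_, ?_⟩
    · rw [hmemW]
      exact degree_lt_iff_coeff_zero _ _ |>.2 (fun m hm =>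
        coeff_eq_zero_of_natDegree_lt (by exact_mod_cast hm))
    · rw [hmemW]
      intro h
      rw [degree_eq_natDegree hv0] at h
      exact absurd (by exact_mod_cast h) (lt_irrefl _)
  -- the set of jumps
  set J : Finset ℕ := (Finset.range (N + 1)).filter (fun n => f n < f (n + 1)) with hJ
  have hcard : ∀ n, ((Finset.range n).filter (fun d => f d < f (d + 1))).card = f n := by
    intro n
    induction n with
    | zero => simp [hf0]
    | succ n ih =>
      rw [Finset.range_add_one, Finset.filter_insert]
      by_cases h : f n < f (n + 1)
      · rw [if_pos h, Finset.card_insert_of_notMem (by simp)]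
        have h1 := hstep n
        omega
      · rw [if_neg h]
        have h1 := hfmono (Nat.le_succ n)
        simp only [Nat.succ_eq_add_one] at *
        omega
  have hJcard : J.card = 3 := by rw [hJ, hcard, hftop]
  have hJne : J.Nonempty := by rw [← Finset.card_pos, hJcard]; norm_num
  -- membership of degrees in J
  have hmemJ : ∀ v ∈ V, v ≠ 0 → natDegree v ∈ J := by
    intro v hv hv0
    rw [hJ, Finset.mem_filter, Finset.mem_range]
    exact ⟨Nat.lt_succ_of_le (hN v hv), hjump v hv hv0⟩
  set d1 : ℕ := J.min' hJne with hd1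
  set d3 : ℕ := J.max' hJne with hd3
  have h13 : d1 < d3 := Finset.min'_lt_max'_of_card J (by omega)
  obtain ⟨d2, hd2J, hd2ne⟩ : ∃ d2 ∈ J, d2 ≠ d1 ∧ d2 ≠ d3 := by
    have h1 : d1 ∈ J := J.min'_mem hJne
    have h3 : d3 ∈ J := J.max'_mem hJne
    have : ((J.erase d1).erase d3).Nonempty := by
      rw [← Finset.card_pos]
      rw [Finset.card_erase_of_mem (Finset.mem_erase.2 ⟨h13.ne', h3⟩),
        Finset.card_erase_of_mem h1, hJcard]
      norm_num
    obtain ⟨d2, hd2⟩ := this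
    rw [Finset.mem_erase, Finset.mem_erase] at hd2
    exact ⟨d2, hd2.2.2, hd2.2.1, hd2.1⟩
  have hd2lb : d1 < d2 := lt_of_le_of_ne (J.min'_le d2 hd2J) (Ne.symm hd2ne.1)
  have hd2ub : d2 < d3 := lt_of_le_of_ne (J.le_max' d2 hd2J) hd2ne.2
  -- suppose d1 ≥ 1, derive d2 ≤ 1 via bracket
  have hd2eq : d2 ≤ 1 := by
    -- witnesses
    have hj2 : f d2 < f (d2 + 1) := (Finset.mem_filter.1 hd2J).2
    have hj3 : f d3 < f (d3 + 1) := (Finset.mem_filter.1 (J.max'_mem hJne)).2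
    obtain ⟨v2, hv2V, hv2ne, hv2d⟩ := hwit d2 hj2
    obtain ⟨v3, hv3V, hv3ne, hv3d⟩ := hwit d3 hj3
    set b : Polynomial K := v2 * derivative v3 - derivative v2 * v3 with hb
    have hbV : b ∈ V := hbr v2 v3 hv2V hv3V
    have hd2pos : 1 ≤ d2 := by omega
    have hd3pos : 2 ≤ d3 := by omega
    -- degree of derivative v3
    have hdv3 : natDegree (derivative v3) = d3 - 1 := by
      refine le_antisymm (hv3d ▸ natDegree_derivative_le v3) ?_
      apply le_natDegree_of_ne_zero
      rw [coeff_derivative]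
      have : d3 - 1 + 1 = d3 := by omega
      rw [this]
      have hlc : v3.coeff d3 ≠ 0 := by rw [← hv3d]; exact leadingCoeff_ne_zero.2 hv3ne
      exact mul_ne_zero hlc (Nat.cast_add_one_ne_zero (d3 - 1))
    have hdv2 : natDegree (derivative v2) ≤ d2 - 1 := hv2d ▸ natDegree_derivative_le v2
    -- key coefficient
    have hcoeff : b.coeff (d2 + d3 - 1) ≠ 0 := by
      have e1 : (v2 * derivative v3).coeff (d2 + d3 - 1)
          = v2.leadingCoeff * (derivative v3).leadingCoeff := by
        have : d2 + d3 - 1 = v2.natDegree + (derivative v3).natDegree := by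
          rw [hv2d, hdv3]; omega
        rw [this, coeff_mul_degree_add_degree]
      have e2 : (derivative v2 * v3).coeff (d2 + d3 - 1)
          = (derivative v2).coeff (d2 - 1) * v3.leadingCoeff := by
        by_cases hdv2' : derivative v2 = 0
        · rw [hdv2']
          simp
        · have hle : (derivative v2 * v3).natDegree ≤ d2 - 1 + d3 :=
            le_trans (natDegree_mul_le) (by rw [hv3d]; omega)
          have : d2 + d3 - 1 = (d2 - 1) + d3 := by omega
          rw [this]
          have := coeff_mul_degree_add_degree (derivative v2) v3
          -- careful: natDegree (derivative v2) may be < d2 - 1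
          rcases eq_or_lt_of_le hdv2 with h | h
          · rw [← h, ← hv3d, coeff_mul_degree_add_degree]
            rfl
          · rw [coeff_eq_zero_of_natDegree_lt, coeff_eq_zero_of_natDegree_lt h, zero_mul]
            calc (derivative v2 * v3).natDegree ≤ (derivative v2).natDegree + v3.natDegree :=
                  natDegree_mul_le
              _ < (d2 - 1) + d3 := by rw [hv3d]; omega
      rw [hb, coeff_sub, e1, e2]
      have hlc2 : v2.leadingCoeff ≠ 0 := leadingCoeff_ne_zero.2 hv2ne
      have hlc3 : v3.leadingCoeff ≠ 0 := leadingCoeff_ne_zero.2 hv3ne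
      have hlcd3 : (derivative v3).leadingCoeff = v3.leadingCoeff * (d3 : K) := by
        obtain ⟨e, he⟩ : ∃ e, d3 = e + 1 := ⟨d3 - 1, by omega⟩
        rw [leadingCoeff, hdv3, he, Nat.add_sub_cancel, coeff_derivative, leadingCoeff, hv3d, he]
        push_cast
        ring
      have hcd2 : (derivative v2).coeff (d2 - 1) = v2.leadingCoeff * (d2 : K) := by
        obtain ⟨e, he⟩ : ∃ e, d2 = e + 1 := ⟨d2 - 1, by omega⟩
        rw [he, Nat.add_sub_cancel, coeff_derivative, leadingCoeff, hv2d, he]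
        push_cast
        ring
      rw [hlcd3, hcd2]
      have : v2.leadingCoeff * (v3.leadingCoeff * (d3 : K))
          - v2.leadingCoeff * (d2 : K) * v3.leadingCoeff
          = v2.leadingCoeff * v3.leadingCoeff * ((d3 : K) - (d2 : K)) := by ring
      rw [this]
      refine mul_ne_zero (mul_ne_zero hlc2 hlc3) ?_
      rw [sub_ne_zero]
      exact_mod_cast (by omega : d3 ≠ d2)
    have hbne : b ≠ 0 := fun h => hcoeff (by rw [h, coeff_zero])
    have hbd : d2 + d3 - 1 ≤ natDegree b := le_natDegree_of_ne_zero hcoeff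
    have hbJ : natDegree b ∈ J := hmemJ b hbV hbne
    have : natDegree b ≤ d3 := J.le_max' _ hbJ
    omega
  -- hence d1 = 0
  have hd1 : d1 = 0 := by omega
  have hj1 : f d1 < f (d1 + 1) := (Finset.mem_filter.1 (J.min'_mem hJne)).2
  obtain ⟨v, hvV, hvne, hvd⟩ := hwit d1 hj1
  exact ⟨v, hvV, hvne, by rw [hvd, hd1]⟩

open Polynomial TensorProduct

/-- Let `θ` be a nontrivial action of a finite-dimensional Lie algebra `𝔤`
on `K[t]`, let `K(t)` be the field of fractions of `K[t]` and let
`θhat : K(t) ⊗ 𝔤 → K(t)` be the `K(t)`-linear extension of `θ`.  Then there exists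
`u ∈ K(t) ⊗ 𝔤` with `θhat(u) = 1`; moreover if `Rank(θ) = 3` then `u` can be chosen inside
`K[t] ⊗ 𝔤`. -/
theorem exists_section_of_anchor {K : Type*} [RCLike K]
    {g : Type*} [LieRing g] [LieAlgebra K g] [FiniteDimensional K g]
    (θ : g →ₗ[K] Polynomial K)
    (hact : ∀ X Y : g, θ ⁅X, Y⁆ = θ X * derivative (θ Y) - derivative (θ X) * θ Y)
    (hnt : θ ≠ 0)
    (θhat : RatFunc K ⊗[K] g →ₗ[RatFunc K] RatFunc K)
    (hθhat : ∀ (f : RatFunc K) (X : g),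
      θhat (f ⊗ₜ X) = f * algebraMap (Polynomial K) (RatFunc K) (θ X)) :
    (∃ u : RatFunc K ⊗[K] g, θhat u = 1) ∧
    (Module.finrank K (LinearMap.range θ) = 3 →
      ∃ p : Polynomial K ⊗[K] g,
        θhat (LinearMap.rTensor g
          ((Algebra.linearMap (Polynomial K) (RatFunc K)).restrictScalars K) p) = 1) := by
  constructor
  · obtain ⟨X, hX⟩ : ∃ X, θ X ≠ 0 := by
      by_contra h
      push_neg at h
      exact hnt (LinearMap.ext fun X => by simpa using h X)
    refine ⟨(algebraMap (Polynomial K) (RatFunc K) (θ X))⁻¹ ⊗ₜ X, ?_⟩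
    rw [hθhat]
    exact inv_mul_cancel₀ (RatFunc.algebraMap_ne_zero hX)
  · intro h3
    have hbr : ∀ a b, a ∈ LinearMap.range θ → b ∈ LinearMap.range θ →
        a * derivative b - derivative a * b ∈ LinearMap.range θ := by
      rintro a b ⟨X, rfl⟩ ⟨Y, rfl⟩
      exact ⟨⁅X, Y⁆, (hact X Y)⟩
    obtain ⟨v, hvV, hvne, hvd⟩ := key (LinearMap.range θ) hbr h3
    obtain ⟨X, hX⟩ := hvV
    obtain ⟨c, hc⟩ : ∃ c, v = C c := ⟨v.coeff 0, eq_C_of_natDegree_eq_zero hvd⟩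
    have hc0 : c ≠ 0 := fun h => hvne (by rw [hc, h, map_zero])
    refine ⟨(C c⁻¹ : Polynomial K) ⊗ₜ X, ?_⟩
    rw [LinearMap.rTensor_tmul]
    have heq : ((Algebra.linearMap (Polynomial K) (RatFunc K)).restrictScalars K)
        (C c⁻¹ : Polynomial K)
        = algebraMap (Polynomial K) (RatFunc K) (C c⁻¹) := rfl
    rw [heq, hθhat, ← map_mul, hX, hc, ← C_mul, inv_mul_cancel₀ hc0, C_1, map_one]
end

section
/- Let 𝔤 be a finite-dimensional semisimple Lie algebra over K admitting a nontrivial action θ on K[t]. Then Rank(θ) = 3, and 𝔤 decomposes as a direct sum of Lie ideals 𝔤 = 𝔰 ⊕ 𝔩, where 𝔰 is isomorphic to sl(2,K), θ restricted to 𝔰 is injective, and 𝔩 = ker(θ) (the kernel of θ as a map on 𝔤). -/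
open Polynomial LieAlgebra.SpecialLinear

section SemisimpleActionAux

variable {K : Type*} [RCLike K]

/-- membership in `degreeLT` via vanishing coefficients -/
lemma mem_degreeLT_iff {p : K[X]} {n : ℕ} :
    p ∈ degreeLT K n ↔ ∀ m, n ≤ m → p.coeff m = 0 := by
  rw [mem_degreeLT, degree_lt_iff_coeff_zero]

lemma repr3 {p : K[X]} (hp : p ∈ degreeLT K 3) :
    p = C (p.coeff 0) + C (p.coeff 1) * X + C (p.coeff 2) * X ^ 2 := by
  rw [mem_degreeLT_iff] at hp
  ext n
  match n with
  | 0 => simp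
  | 1 => simp [coeff_C]
  | 2 => simp [coeff_C]
  | (n+3) =>
    rw [hp (n+3) (by omega)]
    simp only [coeff_add, coeff_C, coeff_C_mul, coeff_X, coeff_X_pow]
    split_ifs <;> first | omega | simp_all

lemma repr2 {p : K[X]} (hp : p ∈ degreeLT K 2) :
    p = C (p.coeff 0) + C (p.coeff 1) * X := by
  have h3 : p ∈ degreeLT K 3 := degreeLT_mono (by omega) hp
  have h2 : p.coeff 2 = 0 := mem_degreeLT_iff.mp hp 2 (by omega)
  rw [repr3 h3, h2]; simp

lemma br_mem_degreeLT1 {f g : K[X]} (hf : f ∈ degreeLT K 2) (hg : g ∈ degreeLT K 2) :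
    f * derivative g - derivative f * g ∈ degreeLT K 1 := by
  rw [repr2 hf, repr2 hg]
  have : (C (f.coeff 0) + C (f.coeff 1) * X) * derivative (C (g.coeff 0) + C (g.coeff 1) * X)
      - derivative (C (f.coeff 0) + C (f.coeff 1) * X) * (C (g.coeff 0) + C (g.coeff 1) * X)
      = C (f.coeff 0 * g.coeff 1 - f.coeff 1 * g.coeff 0) := by
    simp only [derivative_add, derivative_C, derivative_C_mul, derivative_X, mul_one, map_sub, map_mul]
    ring
  rw [this, mem_degreeLT]
  exact lt_of_le_of_lt degree_C_le (by norm_num)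

lemma br_eq_zero_of_lt1 {f g : K[X]} (hf : f ∈ degreeLT K 1) (hg : g ∈ degreeLT K 1) :
    f * derivative g - derivative f * g = 0 := by
  have hf' : f = C (f.coeff 0) := by
    have := repr2 (degreeLT_mono (by omega) hf)
    rwa [mem_degreeLT_iff.mp hf 1 le_rfl, map_zero, zero_mul, add_zero] at this
  have hg' : g = C (g.coeff 0) := by
    have := repr2 (degreeLT_mono (by omega) hg)
    rwa [mem_degreeLT_iff.mp hg 1 le_rfl, map_zero, zero_mul, add_zero] at this
  rw [hf', hg']; simp


lemma deriv_coeff_top {g : K[X]} (hg : g ≠ 0) (hn : 1 ≤ g.natDegree) :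
    (derivative g).coeff (g.natDegree - 1) = g.leadingCoeff * g.natDegree ∧
      (derivative g).natDegree = g.natDegree - 1 := by
  set n := g.natDegree with hn'
  have h1 : (derivative g).coeff (n - 1) = g.leadingCoeff * n := by
    rw [coeff_derivative]
    have : n - 1 + 1 = n := by omega
    rw [this, leadingCoeff]
    congr 1
    push_cast [Nat.cast_sub hn]
    ring
  have hne : (derivative g).coeff (n-1) ≠ 0 := by
    rw [h1]
    exact mul_ne_zero (leadingCoeff_ne_zero.mpr hg) (Nat.cast_ne_zero.mpr (by omega))
  refine ⟨h1, le_antisymm (natDegree_derivative_le g) (le_natDegree_of_ne_zero hne)⟩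

lemma br_coeff_ne {f g : K[X]} (hf : f ≠ 0) (hg : g ≠ 0) (h : f.natDegree < g.natDegree) :
    (f * derivative g - derivative f * g).coeff (f.natDegree + g.natDegree - 1) ≠ 0 := by
  have hn1 : 1 ≤ g.natDegree := by omega
  obtain ⟨hgc, hgd⟩ := deriv_coeff_top hg hn1
  have hfg : (f * derivative g).coeff (f.natDegree + g.natDegree - 1)
      = f.leadingCoeff * (g.leadingCoeff * g.natDegree) := by
    have heq : f.natDegree + g.natDegree - 1 = f.natDegree + (derivative g).natDegree := by
      rw [hgd]; omega
    rw [heq, coeff_mul_degree_add_degree]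
    congr 1
    rw [leadingCoeff, hgd, hgc]
  have hfg2 : (derivative f * g).coeff (f.natDegree + g.natDegree - 1)
      = f.leadingCoeff * f.natDegree * g.leadingCoeff := by
    by_cases hm0 : f.natDegree = 0
    · obtain ⟨a, ha⟩ := natDegree_eq_zero.mp hm0
      rw [← ha, derivative_C, zero_mul, coeff_zero]
      simp
    · obtain ⟨hfc, hfd⟩ := deriv_coeff_top hf (by omega)
      have heq : f.natDegree + g.natDegree - 1 = (derivative f).natDegree + g.natDegree := by
        rw [hfd]; omega
      rw [heq, coeff_mul_degree_add_degree]
      have : (derivative f).leadingCoeff = f.leadingCoeff * f.natDegree := by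
        rw [leadingCoeff, hfd, hfc]
      rw [this]
  rw [coeff_sub, hfg, hfg2]
  have key : f.leadingCoeff * (g.leadingCoeff * g.natDegree)
        - f.leadingCoeff * f.natDegree * g.leadingCoeff
      = f.leadingCoeff * g.leadingCoeff * ((g.natDegree : K) - f.natDegree) := by ring
  rw [key]
  refine mul_ne_zero (mul_ne_zero (leadingCoeff_ne_zero.mpr hf) (leadingCoeff_ne_zero.mpr hg)) ?_
  rw [sub_ne_zero]
  intro hc
  exact absurd (Nat.cast_injective hc).symm (Nat.ne_of_lt h)

noncomputable def brL (h : K[X]) : K[X] →ₗ[K] K[X] where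
  toFun w := w * derivative h - derivative w * h
  map_add' a b := by simp only [map_add]; ring
  map_smul' c a := by
    simp only [smul_eq_C_mul, derivative_C_mul, RingHom.id_apply]
    ring

lemma br_expand (f w₁ w₂ : K[X]) (c₁ c₂ : K) :
    (w₁ + c₁ • f) * derivative (w₂ + c₂ • f) - derivative (w₁ + c₁ • f) * (w₂ + c₂ • f)
    = (w₁ * derivative w₂ - derivative w₁ * w₂) + (c₂ • brL f w₁ - c₁ • brL f w₂) := by
  simp only [brL, LinearMap.coe_mk, AddHom.coe_mk, smul_eq_C_mul, map_add, derivative_C_mul]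
  ring

instance (n : ℕ) : Module.Finite K (degreeLT K n) := Module.Finite.equiv (degreeLTEquiv K n).symm

lemma finrank_degreeLT (n : ℕ) : Module.finrank K (degreeLT K n) = n := by
  rw [(degreeLTEquiv K n).finrank_eq]; simp
set_option maxHeartbeats 1000000 in
lemma main_aux (V : Submodule K K[X])
    (hbd : ∃ N : ℕ, ∀ p ∈ V, p.natDegree ≤ N)
    (hcl : ∀ f ∈ V, ∀ g ∈ V, f * derivative g - derivative f * g ∈ V)
    (hperf : V ≤ Submodule.span K
      {p : K[X] | ∃ f ∈ V, ∃ g ∈ V, f * derivative g - derivative f * g = p})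
    (hne : V ≠ ⊥) :
    V = degreeLT K 3 := by
  classical
  obtain ⟨N, hN⟩ := hbd
  have hVle : V ≤ degreeLT K (N + 1) := by
    intro p hp
    rw [mem_degreeLT]
    exact lt_of_le_of_lt degree_le_natDegree
      (by exact_mod_cast Nat.lt_succ_of_le (hN p hp))
  haveI : Module.Finite K V := Submodule.finiteDimensional_of_le hVle
  obtain ⟨q, hqV, hq0⟩ : ∃ p ∈ V, p ≠ 0 := by
    by_contra h
    push_neg at h
    exact hne (le_bot_iff.mp fun p hp => (Submodule.mem_bot K).mpr (h p hp))
  set S : Set ℕ := {n | ∃ p ∈ V, p ≠ 0 ∧ p.natDegree = n} with hS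
  have hSne : S.Nonempty := ⟨q.natDegree, q, hqV, hq0, rfl⟩
  have hSbdd : BddAbove S := ⟨N, by rintro n ⟨p, hp, -, rfl⟩; exact hN p hp⟩
  obtain ⟨f₀, hf₀V, hf₀0, hf₀d⟩ : ∃ p ∈ V, p ≠ 0 ∧ p.natDegree = sSup S := Nat.sSup_mem hSne hSbdd
  set d := sSup S with hd
  have hmax : ∀ p ∈ V, p ≠ 0 → p.natDegree ≤ d := fun p hp h0 => le_csSup hSbdd ⟨p, hp, h0, rfl⟩
  -- gap property
  have hgap : ∀ p ∈ V, p ≠ 0 → p.natDegree ≤ 1 ∨ p.natDegree = d := by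
    intro p hp h0
    by_contra hcon
    push_neg at hcon
    obtain ⟨h2, hne_d⟩ := hcon
    have hlt : p.natDegree < f₀.natDegree := by
      rw [hf₀d]; exact lt_of_le_of_ne (hmax p hp h0) hne_d
    have hb := br_coeff_ne h0 hf₀0 hlt
    have hmem := hcl p hp f₀ hf₀V
    have hBr0 : p * derivative f₀ - derivative p * f₀ ≠ 0 := fun hz => hb (by rw [hz]; simp)
    have hle := le_trans (le_natDegree_of_ne_zero hb) (hmax _ hmem hBr0)
    rw [hf₀d] at hle
    omega
  -- d ≥ 2
  have hd2 : 2 ≤ d := by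
    by_contra hdlt
    push_neg at hdlt
    have hV2 : V ≤ degreeLT K 2 := by
      intro p hp
      rw [mem_degreeLT]
      rcases eq_or_ne p 0 with rfl | h0
      · simp [degree_zero]; exact WithBot.bot_lt_coe 2
      · exact lt_of_le_of_lt degree_le_natDegree
          (by exact_mod_cast lt_of_le_of_lt (hmax p hp h0) (by omega))
    have hV1 : V ≤ degreeLT K 1 := by
      refine hperf.trans (Submodule.span_le.mpr ?_)
      rintro _ ⟨f, hf, g, hg, rfl⟩
      exact br_mem_degreeLT1 (hV2 hf) (hV2 hg)
    have hVbot : V ≤ ⊥ := by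
      refine hperf.trans (Submodule.span_le.mpr ?_)
      rintro _ ⟨f, hf, g, hg, rfl⟩
      rw [SetLike.mem_coe, Submodule.mem_bot, br_eq_zero_of_lt1 (hV1 hf) (hV1 hg)]
    exact hne (le_bot_iff.mp hVbot)
  -- the subspace of low-degree elements
  set W := V ⊓ degreeLT K 2 with hW
  haveI : Module.Finite K W := Submodule.finiteDimensional_of_le (inf_le_right.trans le_rfl)
  have hf₀coeff : f₀.coeff d ≠ 0 := by
    rw [← hf₀d]; exact leadingCoeff_ne_zero.mpr hf₀0
  have hdecomp : ∀ p ∈ V, p - (p.coeff d / f₀.coeff d) • f₀ ∈ W := by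
    intro p hp
    set c := p.coeff d / f₀.coeff d with hc
    have hmem : p - c • f₀ ∈ V := sub_mem hp (Submodule.smul_mem V c hf₀V)
    refine Submodule.mem_inf.mpr ⟨hmem, ?_⟩
    rcases eq_or_ne (p - c • f₀) 0 with hz | h0
    · rw [hz]; exact zero_mem _
    have hcoeffd : (p - c • f₀).coeff d = 0 := by
      rw [coeff_sub, coeff_smul, smul_eq_mul, hc, div_mul_cancel₀ _ hf₀coeff, sub_self]
    have hnd : (p - c • f₀).natDegree ≤ 1 := by
      rcases hgap _ hmem h0 with h | h
      · exact h
      · exfalso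
        apply leadingCoeff_ne_zero.mpr h0
        rw [leadingCoeff, h]
        exact hcoeffd
    rw [mem_degreeLT]
    exact lt_of_le_of_lt degree_le_natDegree (by exact_mod_cast lt_of_le_of_lt hnd (by omega))
  have hf₀notW : f₀ ∉ W := by
    intro hmem
    have := mem_degreeLT.mp (Submodule.mem_inf.mp hmem).2
    rw [degree_eq_natDegree hf₀0, hf₀d] at this
    exact absurd (by exact_mod_cast this) (by omega)
  have hWV : W < V := lt_of_le_of_ne inf_le_left (fun h => hf₀notW (h ▸ hf₀V))
  have hrk : Module.finrank K W + 1 ≤ Module.finrank K V :=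
    Submodule.finrank_lt_finrank_of_lt hWV
  have hWle : Module.finrank K W ≤ 2 := by
    have := Submodule.finrank_mono (inf_le_right : W ≤ degreeLT K 2)
    rwa [finrank_degreeLT] at this
  -- case analysis on finrank W
  have hfr2 : Module.finrank K W = 2 := by
    interval_cases hfr : Module.finrank K W
    · -- finrank W = 0
      exfalso
      have hWbot : W = ⊥ := Submodule.finrank_eq_zero.mp hfr
      have hVbot : V ≤ ⊥ := by
        refine hperf.trans (Submodule.span_le.mpr ?_)
        rintro _ ⟨f, hf, g, hg, rfl⟩
        have h1 : f - (f.coeff d / f₀.coeff d) • f₀ = 0 := by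
          have := hdecomp f hf; rwa [hWbot, Submodule.mem_bot] at this
        have h2 : g - (g.coeff d / f₀.coeff d) • f₀ = 0 := by
          have := hdecomp g hg; rwa [hWbot, Submodule.mem_bot] at this
        have hf' : f = 0 + (f.coeff d / f₀.coeff d) • f₀ := by
          rw [zero_add, ← sub_eq_zero]; exact h1
        have hg' : g = 0 + (g.coeff d / f₀.coeff d) • f₀ := by
          rw [zero_add, ← sub_eq_zero]; exact h2
        rw [SetLike.mem_coe, Submodule.mem_bot, hf', hg', br_expand]
        simp
      exact hne (le_bot_iff.mp hVbot)
    · -- finrank W = 1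
      exfalso
      haveI : Module.Free K W := Module.Free.of_divisionRing K W
      obtain ⟨w, hwgen⟩ := (Submodule.finrank_le_one_iff_isPrincipal W).mp (by omega)
      have hVle1 : V ≤ Submodule.span K {brL f₀ w} := by
        refine hperf.trans (Submodule.span_le.mpr ?_)
        rintro _ ⟨f, hf, g, hg, rfl⟩
        obtain ⟨a, ha⟩ := Submodule.mem_span_singleton.mp (hwgen ▸ hdecomp f hf)
        obtain ⟨b, hb⟩ := Submodule.mem_span_singleton.mp (hwgen ▸ hdecomp g hg)
        have hf' : f = a • w + (f.coeff d / f₀.coeff d) • f₀ := by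
          rw [ha, sub_add_cancel]
        have hg' : g = b • w + (g.coeff d / f₀.coeff d) • f₀ := by
          rw [hb, sub_add_cancel]
        have hkey : f * derivative g - derivative f * g
            = ((g.coeff d / f₀.coeff d) * a - (f.coeff d / f₀.coeff d) * b) • brL f₀ w := by
          conv_lhs => rw [hf', hg', br_expand]
          have h0 : a • w * derivative (b • w) - derivative (a • w) * (b • w) = 0 := by
            simp only [smul_eq_C_mul, derivative_C_mul]; ring
          rw [h0, map_smul, map_smul, zero_add, smul_smul, smul_smul, ← sub_smul]
        rw [SetLike.mem_coe, hkey]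
        exact Submodule.smul_mem _ _ (Submodule.mem_span_singleton_self _)
      rcases eq_or_ne (brL f₀ w) 0 with hz | hz
      · rw [hz, Submodule.span_zero_singleton, le_bot_iff] at hVle1
        exact hne hVle1
      · have h1 := Submodule.finrank_mono hVle1
        rw [finrank_span_singleton hz] at h1
        omega
    · rfl
  -- now finrank W = 2
  have hWeq : W = degreeLT K 2 :=
    Submodule.eq_of_le_of_finrank_eq inf_le_right (by rw [hfr2, finrank_degreeLT])
  have hlow : degreeLT K 2 ≤ V := by rw [← hWeq]; exact inf_le_left
  have h1V : (1 : K[X]) ∈ V := by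
    apply hlow
    rw [mem_degreeLT, degree_one]
    exact_mod_cast (by norm_num : (0:ℕ) < 2)
  have hDf₀ : derivative f₀ ∈ V := by
    have := hcl 1 h1V f₀ hf₀V
    simpa using this
  have hcd : (derivative f₀).coeff (f₀.natDegree - 1) = f₀.leadingCoeff * f₀.natDegree := by
    rw [coeff_derivative]
    have h' : f₀.natDegree - 1 + 1 = f₀.natDegree := by omega
    rw [h', leadingCoeff]
    congr 1
    have : 1 ≤ f₀.natDegree := by omega
    push_cast [Nat.cast_sub this]
    ring
  have hD0 : derivative f₀ ≠ 0 := by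
    intro hz
    rw [hz, coeff_zero] at hcd
    exact (mul_ne_zero (leadingCoeff_ne_zero.mpr hf₀0)
      (Nat.cast_ne_zero.mpr (by omega))) hcd.symm
  have hDdeg : (derivative f₀).natDegree = d - 1 := by
    have hle := natDegree_derivative_le f₀
    have hge := le_natDegree_of_ne_zero (hcd ▸ mul_ne_zero (leadingCoeff_ne_zero.mpr hf₀0)
      (Nat.cast_ne_zero.mpr (by omega : f₀.natDegree ≠ 0)))
    rw [hf₀d] at hle
    omega
  have hdeq : d = 2 := by
    rcases hgap _ hDf₀ hD0 with h | h <;> rw [hDdeg] at h <;> omega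
  apply le_antisymm
  · intro p hp
    rw [mem_degreeLT]
    rcases eq_or_ne p 0 with rfl | h0
    · rw [degree_zero]; exact WithBot.bot_lt_coe 3
    · refine lt_of_le_of_lt degree_le_natDegree ?_
      rcases hgap p hp h0 with h | h
      · exact_mod_cast by omega
      · rw [h, hdeq]; exact_mod_cast by omega
  · intro p hp
    set c := p.coeff 2 / f₀.coeff 2 with hc
    have hf₀c2 : f₀.coeff 2 ≠ 0 := by rw [← hdeq]; exact hf₀coeff
    have hq : p - c • f₀ ∈ degreeLT K 2 := by
      rw [mem_degreeLT_iff]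
      intro m hm
      rcases eq_or_ne m 2 with rfl | hm2
      · rw [coeff_sub, coeff_smul, smul_eq_mul, hc, div_mul_cancel₀ _ hf₀c2, sub_self]
      · have hp3 : p.coeff m = 0 := mem_degreeLT_iff.mp hp m (by omega)
        have hf3 : f₀.coeff m = 0 := coeff_eq_zero_of_natDegree_lt (by rw [hf₀d, hdeq]; omega)
        rw [coeff_sub, coeff_smul, hp3, hf3, smul_zero, sub_self]
    have hsplit : p = (p - c • f₀) + c • f₀ := (sub_add_cancel p (c • f₀)).symm
    rw [hsplit]
    exact add_mem (hlow hq) (Submodule.smul_mem _ _ hf₀V)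


lemma top_lie_top (R L : Type*) [CommRing R] [LieRing L] [LieAlgebra R L]
    [LieAlgebra.IsSemisimple R L] :
    ⁅(⊤ : LieIdeal R L), (⊤ : LieIdeal R L)⁆ = ⊤ := by
  set D := ⁅(⊤ : LieIdeal R L), (⊤ : LieIdeal R L)⁆ with hD
  have h1 : ⁅Dᶜ, Dᶜ⁆ ≤ D ⊓ Dᶜ :=
    le_inf (LieSubmodule.mono_lie le_top le_top) (LieSubmodule.lie_le_right _ _)
  rw [inf_compl_eq_bot, le_bot_iff] at h1
  have h2 : IsLieAbelian ↥(Dᶜ) := (LieSubmodule.lie_abelian_iff_lie_self_eq_bot _).mpr h1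
  have h3 : Dᶜ = ⊥ := (LieAlgebra.hasTrivialRadical_iff_no_abelian_ideals R L).mp inferInstance _ h2
  exact compl_eq_bot.mp h3


noncomputable def Mmat : K[X] →ₗ[K] Matrix (Fin 2) (Fin 2) K where
  toFun p := !![-(p.coeff 1) / 2, p.coeff 0; -(p.coeff 2), p.coeff 1 / 2]
  map_add' p q := by
    ext i j
    fin_cases i <;> fin_cases j <;> simp <;> ring
  map_smul' c p := by
    ext i j
    fin_cases i <;> fin_cases j <;> simp [Matrix.smul_apply, smul_eq_mul] <;> ring

lemma Mmat_mem_sl (p : K[X]) : Mmat p ∈ sl (Fin 2) K := by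
  show Mmat p ∈ LinearMap.ker (Matrix.traceLinearMap (Fin 2) K K)
  rw [LinearMap.mem_ker, Matrix.traceLinearMap_apply, Matrix.trace_fin_two]
  simp [Mmat]
  ring


lemma cube_mem (c0 c1 c2 : K) : C c0 + C c1 * X + C c2 * X ^ 2 ∈ degreeLT K 3 := by
  rw [mem_degreeLT_iff]
  intro m hm
  simp only [coeff_add, coeff_C, coeff_C_mul, coeff_X, coeff_X_pow]
  split_ifs <;> first | omega | simp_all

lemma cube_coeff (c0 c1 c2 : K) :
    (C c0 + C c1 * X + C c2 * X ^ 2).coeff 0 = c0 ∧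
    (C c0 + C c1 * X + C c2 * X ^ 2).coeff 1 = c1 ∧
    (C c0 + C c1 * X + C c2 * X ^ 2).coeff 2 = c2 := by
  refine ⟨?_, ?_, ?_⟩ <;> simp [coeff_C]

lemma br_cube (f g : K[X]) (hf : f ∈ degreeLT K 3) (hg : g ∈ degreeLT K 3) :
    f * derivative g - derivative f * g
      = C (f.coeff 0 * g.coeff 1 - f.coeff 1 * g.coeff 0)
        + C (2 * (f.coeff 0 * g.coeff 2 - f.coeff 2 * g.coeff 0)) * X
        + C (f.coeff 1 * g.coeff 2 - f.coeff 2 * g.coeff 1) * X ^ 2 := by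
  conv_lhs => rw [repr3 hf, repr3 hg]
  simp only [derivative_add, derivative_C, derivative_C_mul, derivative_X, derivative_X_pow,
    map_sub, map_mul, map_ofNat, mul_one, zero_add, C_eq_natCast]
  push_cast
  ring

lemma Mmat_apply (p : K[X]) :
    Mmat p = !![-(p.coeff 1) / 2, p.coeff 0; -(p.coeff 2), p.coeff 1 / 2] := rfl

lemma Mmat_cube (c0 c1 c2 : K) :
    Mmat (C c0 + C c1 * X + C c2 * X ^ 2) = !![-c1 / 2, c0; -c2, c1 / 2] := by
  obtain ⟨h0, h1, h2⟩ := cube_coeff c0 c1 c2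
  rw [Mmat_apply, h0, h1, h2]

lemma Mmat_br {f g : K[X]} (hf : f ∈ degreeLT K 3) (hg : g ∈ degreeLT K 3) :
    Mmat (f * derivative g - derivative f * g) = Mmat f * Mmat g - Mmat g * Mmat f := by
  rw [br_cube f g hf hg, Mmat_cube]
  conv_rhs => rw [repr3 hf, repr3 hg, Mmat_cube, Mmat_cube]
  ext i j
  fin_cases i <;> fin_cases j <;>
    simp [Matrix.mul_apply, Fin.sum_univ_two] <;> ring



end SemisimpleActionAux

/-- Let `𝔤` be a finite-dimensional semisimple Lie algebra over `K`
admitting a nontrivial action `θ` on `K[t]`.  Then `Rank(θ) = 3` and `𝔤` decomposes as a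
direct sum of Lie ideals `𝔤 = 𝔰 ⊕ 𝔩` with `𝔰 ≅ sl(2,K)`, `θ` injective on `𝔰`, and
`𝔩 = ker θ`. -/
theorem semisimple_action_decomposition {K : Type*} [RCLike K]
    {g : Type*} [LieRing g] [LieAlgebra K g] [FiniteDimensional K g]
    [LieAlgebra.IsSemisimple K g]
    (θ : g →ₗ[K] Polynomial K)
    (hact : ∀ X Y : g, θ ⁅X, Y⁆ = θ X * derivative (θ Y) - derivative (θ X) * θ Y)
    (hnt : θ ≠ 0) :
    Module.finrank K (LinearMap.range θ) = 3 ∧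
    ∃ s l : LieIdeal K g,
      Nonempty (↥s ≃ₗ⁅K⁆ ↥(sl (Fin 2) K)) ∧
      (∀ X ∈ s, θ X = 0 → X = 0) ∧
      l.toSubmodule = LinearMap.ker θ ∧
      IsCompl s.toSubmodule l.toSubmodule := by
  classical
  set V : Submodule K K[X] := LinearMap.range θ with hV
  have hcl : ∀ f ∈ V, ∀ g' ∈ V, f * derivative g' - derivative f * g' ∈ V := by
    rintro _ ⟨x, rfl⟩ _ ⟨y, rfl⟩
    exact ⟨⁅x, y⁆, hact x y⟩
  have hbd : ∃ N : ℕ, ∀ p ∈ V, p.natDegree ≤ N := by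
    haveI : Module.Finite K ↥V := Module.Finite.range θ
    have hfg : V.FG := (Submodule.fg_top V).mp (Module.finite_def.mp inferInstance)
    obtain ⟨S, hS⟩ := hfg
    refine ⟨S.sup natDegree, fun p hp => ?_⟩
    rw [← hS] at hp
    induction hp using Submodule.span_induction with
    | mem x hx => exact Finset.le_sup hx
    | zero => simp
    | add x y _ _ hx hy => exact le_trans (natDegree_add_le x y) (by omega)
    | smul c x _ hx => exact le_trans (natDegree_smul_le c x) hx
  have hne : V ≠ ⊥ := fun h => hnt (LinearMap.range_eq_bot.mp h)
  have hperf : V ≤ Submodule.span K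
      {p : K[X] | ∃ f ∈ V, ∃ g' ∈ V, f * derivative g' - derivative f * g' = p} := by
    rintro _ ⟨z, rfl⟩
    have hz : z ∈ ⁅(⊤ : LieIdeal K g), (⊤ : LieIdeal K g)⁆ := by
      rw [top_lie_top]; exact LieSubmodule.mem_top _
    rw [← LieSubmodule.mem_toSubmodule, LieSubmodule.lieIdeal_oper_eq_linear_span'] at hz
    induction hz using Submodule.span_induction with
    | mem x hx =>
      obtain ⟨a, -, b, -, rfl⟩ := hx
      exact Submodule.subset_span ⟨θ a, ⟨a, rfl⟩, θ b, ⟨b, rfl⟩, (hact a b).symm⟩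
    | zero => simp
    | add x y _ _ hx hy => rw [map_add]; exact add_mem hx hy
    | smul c x _ hx => rw [map_smul]; exact Submodule.smul_mem _ c hx
  have hVeq : V = degreeLT K 3 := main_aux V hbd hcl hperf hne
  constructor
  · rw [hVeq, finrank_degreeLT]
  · -- construct the ideals
    set l : LieIdeal K g := { LinearMap.ker θ with
      lie_mem := by
        intro x m hm
        simp only [AddSubsemigroup.mem_carrier, AddSubmonoid.mem_toSubsemigroup,
          Submodule.mem_toAddSubmonoid, LinearMap.mem_ker] at hm ⊢
        rw [hact, hm]
        simp } with hl
    set s : LieIdeal K g := lᶜ with hs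
    have hcompl : IsCompl s l := (isCompl_compl (x := l)).symm
    have hsub : IsCompl s.toSubmodule l.toSubmodule := by
      constructor
      · rw [disjoint_iff, ← LieSubmodule.inf_toSubmodule, disjoint_iff.mp hcompl.disjoint,
          LieSubmodule.bot_toSubmodule]
      · rw [codisjoint_iff, ← LieSubmodule.sup_toSubmodule, codisjoint_iff.mp hcompl.codisjoint,
          LieSubmodule.top_toSubmodule]
    have hlker : l.toSubmodule = LinearMap.ker θ := rfl
    have hinj : ∀ X ∈ s, θ X = 0 → X = 0 := by
      intro X hX h0
      have hXl : X ∈ l := by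
        show X ∈ LinearMap.ker θ
        exact LinearMap.mem_ker.mpr h0
      have : X ∈ s ⊓ l := (LieSubmodule.mem_inf _ _ _).mpr ⟨hX, hXl⟩
      rw [disjoint_iff.mp hcompl.disjoint] at this
      exact (LieSubmodule.mem_bot _).mp this
    have hrange : ∀ x : g, θ x ∈ degreeLT K 3 := by
      intro x
      rw [← hVeq]
      exact ⟨x, rfl⟩
    have hθs : ∀ p ∈ degreeLT K 3, ∃ y ∈ s, θ y = p := by
      intro p hp
      rw [← hVeq] at hp
      obtain ⟨y, rfl⟩ := hp
      have hy : y ∈ s.toSubmodule ⊔ l.toSubmodule := by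
        rw [codisjoint_iff.mp hsub.codisjoint]; exact Submodule.mem_top
      obtain ⟨ys, hys, yl, hyl, rfl⟩ := Submodule.mem_sup.mp hy
      refine ⟨ys, hys, ?_⟩
      have : θ yl = 0 := LinearMap.mem_ker.mp hyl
      rw [map_add, this, add_zero]
    -- the Lie algebra morphism to sl2
    have h2 : (2 : K) ≠ 0 := two_ne_zero
    let ψ : ↥s →ₗ⁅K⁆ ↥(sl (Fin 2) K) := {
      toFun := fun x => ⟨Mmat (θ x.val), Mmat_mem_sl _⟩
      map_add' := fun x y => by
        ext1
        simp only [LieSubmodule.coe_add, map_add]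
        rfl
      map_smul' := fun c x => by
        ext1
        simp only [LieSubmodule.coe_smul, map_smul]
        rfl
      map_lie' := fun {x y} => by
        ext1
        show Mmat (θ ⁅(x : g), (y : g)⁆) = _
        rw [hact, Mmat_br (hrange _) (hrange _)]
        rfl }
    have hbij : Function.Bijective ψ := by
      constructor
      · intro x y hxy
        have h : Mmat (θ (x : g)) = Mmat (θ (y : g)) := congrArg Subtype.val hxy
        rw [Mmat_apply, Mmat_apply] at h
        have h01 := congrFun (congrFun h 0) 1
        have h00 := congrFun (congrFun h 0) 0
        have h10 := congrFun (congrFun h 1) 0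
        simp only [Matrix.cons_val', Matrix.cons_val_zero, Matrix.cons_val_one,
          Matrix.head_cons, Matrix.empty_val', Matrix.cons_val_fin_one, Matrix.head_fin_const,
          Matrix.of_apply] at h01 h00 h10
        have hc1 : (θ (x : g)).coeff 1 = (θ (y : g)).coeff 1 := by
          linear_combination (-2 : K) * h00
        have hc0 : (θ (x : g)).coeff 0 = (θ (y : g)).coeff 0 := h01
        have hc2 : (θ (x : g)).coeff 2 = (θ (y : g)).coeff 2 := by
          linear_combination -h10
        have hθeq : θ (x : g) = θ (y : g) := by
          rw [repr3 (hrange (x : g)), repr3 (hrange (y : g)), hc0, hc1, hc2]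
        have hsub' : ((x - y : ↥s) : g) ∈ s := (x - y).2
        have : ((x - y : ↥s) : g) = 0 := by
          apply hinj _ hsub'
          rw [LieSubmodule.coe_sub, map_sub, hθeq, sub_self]
        ext
        rw [← sub_eq_zero]
        exact_mod_cast this
      · intro A
        have hA : (A : Matrix (Fin 2) (Fin 2) K).trace = 0 := by
          have h' : (A : Matrix (Fin 2) (Fin 2) K) ∈
              LinearMap.ker (Matrix.traceLinearMap (Fin 2) K K) := A.2
          exact LinearMap.mem_ker.mp h'
        rw [Matrix.trace_fin_two] at hA
        obtain ⟨y, hy, hyp⟩ := hθs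
          (C ((A : Matrix (Fin 2) (Fin 2) K) 0 1)
            + C (-2 * (A : Matrix (Fin 2) (Fin 2) K) 0 0) * X
            + C (-((A : Matrix (Fin 2) (Fin 2) K) 1 0)) * X ^ 2)
          (cube_mem _ _ _)
        refine ⟨⟨y, hy⟩, ?_⟩
        ext1
        show Mmat (θ y) = (A : Matrix (Fin 2) (Fin 2) K)
        rw [hyp, Mmat_cube]
        ext i j
        fin_cases i <;> fin_cases j <;>
          simp <;> linear_combination -hA
    exact ⟨s, l, ⟨LieEquiv.ofBijective ψ hbij⟩, hinj, hlker, hsub⟩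
end
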